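/- arXiv:2005.08369 — 12 statements merged into one kernel-verified Lean document; each statement's English description precedes it below -/
import Mathlib

section
/- Let J ⊆ ℝ be a nonempty open interval, α, β ∈ (0,1) with α+β=1, and F, G : J → ℝ differentiable with derivatives f, g satisfying [F(b)−F(a)]·g(αa+βb) = [G(b)−G(a)]·f(αa+βb) for all a, b ∈ J. Let I ⊆ J be a nonempty interval on which g never vanishes, and define v(x) = f(x)/g(x) for x ∈ I. Then for all a, b ∈ I: β·g(a)·(v(αa+βb) − v(a)) = α·g(b)·(v(b) − v(αa+βb)). -/
/-!
Writing `m = α a + β b`, the functional equation says `v m * (G b - G a) = F b - F a` on `I`,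
an identity with no division in it. Since `G` is injective on `I` (Rolle), `v` is a quotient of
differentiable functions near every interior point of `I`, in particular near `m`. Differentiating
the identity in `a` and in `b` (within `I`, which has interior points since `a ≠ b`) gives
`α v'(m) (G b - G a) = g a v m - f a` and `β v'(m) (G b - G a) = f b - g b v m`,
and eliminating `v'(m)` between the two is the claim.
-/

open Set Filter Topology

theorem Set.OrdConnected.injOn_of_hasDerivAt_ne_zero {s : Set ℝ} {G g : ℝ → ℝ}
    (hs : s.OrdConnected) (hG : ∀ x ∈ s, HasDerivAt G (g x) x) (hg : ∀ x ∈ s, g x ≠ 0) :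
    s.InjOn G := by
  intro x hx y hy hxy
  by_contra hne
  wlog hlt : x < y generalizing x y
  · exact this hy hx hxy.symm (Ne.symm hne) (lt_of_le_of_ne (not_lt.mp hlt) (Ne.symm hne))
  have hIcc : Icc x y ⊆ s := hs.out hx hy
  obtain ⟨c, hc, hc0⟩ := exists_hasDerivAt_eq_zero hlt
    (fun t ht => (hG t (hIcc ht)).continuousAt.continuousWithinAt) hxy
    (fun t ht => hG t (hIcc (Ioo_subset_Icc_self ht)))
  exact hg c (hIcc (Ioo_subset_Icc_self hc)) hc0

section MeanValueQuotient

variable {v F G : ℝ → ℝ} {I : Set ℝ} {α β : ℝ}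

theorem mul_sub_eq_sub_of_mul_eq_mul {f g : ℝ → ℝ}
    (hmem : ∀ x ∈ I, ∀ y ∈ I, α * x + β * y ∈ I)
    (heq : ∀ x ∈ I, ∀ y ∈ I,
      (F y - F x) * g (α * x + β * y) = (G y - G x) * f (α * x + β * y))
    (hg : ∀ x ∈ I, g x ≠ 0) (hv : ∀ x ∈ I, v x = f x / g x) :
    ∀ x ∈ I, ∀ y ∈ I, v (α * x + β * y) * (G y - G x) = F y - F x := by
  intro x hx y hy
  rw [hv _ (hmem x hx y hy), div_mul_eq_mul_div, div_eq_iff (hg _ (hmem x hx y hy))]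
  linarith [heq x hx y hy]

theorem differentiableAt_of_mul_sub_eq_sub (hβ : β ≠ 0) (hαβ : α + β = 1)
    (hF : ∀ x ∈ I, DifferentiableAt ℝ F x) (hG : ∀ x ∈ I, DifferentiableAt ℝ G x)
    (hGinj : I.InjOn G)
    (hkey : ∀ x ∈ I, ∀ y ∈ I, v (α * x + β * y) * (G y - G x) = F y - F x)
    {m : ℝ} (hm : m ∈ interior I) : DifferentiableAt ℝ v m := by
  have hnear : ∀ᶠ ε in 𝓝[≠] (0 : ℝ),
      (m - β * ε ∈ interior I ∧ m + α * ε ∈ interior I) ∧ ε ≠ 0 := by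
    refine Eventually.and (Eventually.filter_mono nhdsWithin_le_nhds (Eventually.and ?_ ?_))
      self_mem_nhdsWithin
    · exact ((continuous_const.sub (continuous_const.mul continuous_id)).tendsto' 0 m
        (by simp)).eventually (isOpen_interior.mem_nhds hm)
    · exact ((continuous_const.add (continuous_const.mul continuous_id)).tendsto' 0 m
        (by simp)).eventually (isOpen_interior.mem_nhds hm)
  obtain ⟨ε, ⟨hx, hy⟩, hε⟩ := hnear.exists
  set x := m - β * ε
  set y := m + α * ε
  -- `s` solves `α x + β (s t) = t`, so near `m`, `v t` is the quotient of the increments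
  -- of `F` and `G` from `x` to `s t`
  set s : ℝ → ℝ := fun t => (t - α * x) / β
  have hyx : y - x = ε := by linear_combination ε * hαβ
  have hsm : s m = y := by
    simp only [s]; rw [div_eq_iff hβ]; linear_combination (-m) * hαβ
  have hxy : G y - G x ≠ 0 := sub_ne_zero.mpr fun h =>
    hε (by rw [← hyx, hGinj (interior_subset hy) (interior_subset hx) h, sub_self])
  have hs : Continuous s := (continuous_id.sub continuous_const).div_const β
  have hQ : DifferentiableAt ℝ (fun t => (F (s t) - F x) / (G (s t) - G x)) m := by
    have hsd : DifferentiableAt ℝ s m := by fun_prop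
    refine DifferentiableAt.div (DifferentiableAt.sub_const ?_ _) (DifferentiableAt.sub_const ?_ _)
      (by rwa [hsm])
    · exact DifferentiableAt.comp m (hsm ▸ hF y (interior_subset hy)) hsd
    · exact DifferentiableAt.comp m (hsm ▸ hG y (interior_subset hy)) hsd
  refine hQ.congr_of_eventuallyEq ?_
  have hopen : IsOpen (interior I ∩ {z | z ≠ x}) := isOpen_interior.inter isOpen_ne
  filter_upwards [(hs.tendsto m).eventually (hopen.mem_nhds ⟨hsm ▸ hy, by
    rw [hsm]; exact fun h => hε (by rw [← hyx, h, sub_self])⟩)] with t ⟨hst, hne⟩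
  have hGne : G (s t) - G x ≠ 0 := sub_ne_zero.mpr fun h =>
    hne (hGinj (interior_subset hst) (interior_subset hx) h)
  have ht : α * x + β * s t = t := by simp only [s]; field_simp; ring
  rw [eq_div_iff hGne, ← hkey x (interior_subset hx) _ (interior_subset hst), ht]

theorem eq_of_hasDerivAt_of_mul_sub_eq_sub {f g : ℝ → ℝ} {a b w : ℝ}
    (hkey : ∀ x ∈ I, v (α * x + β * b) * (G b - G x) = F b - F x)
    (hF : HasDerivAt F (f a) a) (hG : HasDerivAt G (g a) a) (hv : HasDerivAt v w (α * a + β * b))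
    (hI : UniqueDiffWithinAt ℝ I a) (ha : a ∈ I) :
    α * w * (G b - G a) = v (α * a + β * b) * g a - f a := by
  have hinner : HasDerivAt (fun x => α * x + β * b) α a := by
    simpa using ((hasDerivAt_id a).const_mul α).add_const (β * b)
  have hlhs : HasDerivAt (fun x => v (α * x + β * b) * (G b - G x))
      (w * α * (G b - G a) + v (α * a + β * b) * -g a) a :=
    (hv.comp a hinner).mul (hG.const_sub (G b))
  have hrhs : HasDerivWithinAt (fun x => v (α * x + β * b) * (G b - G x)) (-f a) I a :=
    (hF.const_sub (F b)).hasDerivWithinAt.congr hkey (hkey a ha)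
  linarith [hI.eq_deriv I hlhs.hasDerivWithinAt hrhs]

end MeanValueQuotient

theorem stmt_0_general (J I : Set ℝ)
    (α β : ℝ) (hα : α ∈ Set.Ioo (0:ℝ) 1) (hβ : β ∈ Set.Ioo (0:ℝ) 1) (hαβ : α + β = 1)
    (F G f g : ℝ → ℝ)
    (hF : ∀ x ∈ J, HasDerivAt F (f x) x) (hG : ∀ x ∈ J, HasDerivAt G (g x) x)
    (heq : ∀ a ∈ J, ∀ b ∈ J,
      (F b - F a) * g (α * a + β * b) = (G b - G a) * f (α * a + β * b))
    (hIJ : I ⊆ J) (hIc : I.OrdConnected)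
    (hg : ∀ x ∈ I, g x ≠ 0)
    (v : ℝ → ℝ) (hv : ∀ x ∈ I, v x = f x / g x) :
    ∀ a ∈ I, ∀ b ∈ I,
      β * g a * (v (α * a + β * b) - v a) = α * g b * (v b - v (α * a + β * b)) := by
  intro a ha b hb
  obtain rfl | hab := eq_or_ne a b
  · rw [show α * a + β * a = a by linear_combination a * hαβ]; ring
  have hkey := mul_sub_eq_sub_of_mul_eq_mul
    (fun x hx y hy => hIc.convex hx hy hα.1.le hβ.1.le hαβ)
    (fun x hx y hy => heq x (hIJ hx) y (hIJ hy)) hg hv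
  have hm : α * a + β * b ∈ interior I := by
    refine interior_mono (hIc.uIcc_subset ha hb |>.trans' Ioo_subset_Icc_self) ?_
    rw [interior_Ioo, ← openSegment_eq_Ioo' hab]
    exact ⟨α, β, hα.1, hβ.1, hαβ, rfl⟩
  have hGinj := hIc.injOn_of_hasDerivAt_ne_zero (fun x hx => hG x (hIJ hx)) hg
  have hw := (differentiableAt_of_mul_sub_eq_sub hβ.1.ne' hαβ
    (fun x hx => (hF x (hIJ hx)).differentiableAt) (fun x hx => (hG x (hIJ hx)).differentiableAt)
    hGinj hkey hm).hasDerivAt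
  have hUI := uniqueDiffOn_convex hIc.convex ⟨_, hm⟩
  have hda := eq_of_hasDerivAt_of_mul_sub_eq_sub (fun x hx => hkey x hx b hb) (hF a (hIJ ha))
    (hG a (hIJ ha)) hw (hUI a ha) ha
  -- the identity is invariant under `(x, y, α, β) ↦ (y, x, β, α)`, which swaps the roles of `a, b`
  have hdb := eq_of_hasDerivAt_of_mul_sub_eq_sub (α := β) (β := α)
    (fun y hy => by rw [add_comm]; linear_combination -hkey a ha y hy) (hF b (hIJ hb))
    (hG b (hIJ hb)) (by rwa [add_comm]) (hUI b hb) hb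
  rw [add_comm (β * b)] at hdb
  have hfa : g a * v a = f a := by rw [hv a ha]; field_simp [hg a ha]
  have hfb : g b * v b = f b := by rw [hv b hb]; field_simp [hg b hb]
  linear_combination -β * hda - α * hdb - β * hfa - α * hfb

/-- Lemma 2.1 -/
theorem stmt_0 (J I : Set ℝ) (hJo : IsOpen J) (hJc : J.OrdConnected) (hJne : J.Nonempty)
    (α β : ℝ) (hα : α ∈ Set.Ioo (0:ℝ) 1) (hβ : β ∈ Set.Ioo (0:ℝ) 1) (hαβ : α + β = 1)
    (F G f g : ℝ → ℝ)
    (hF : ∀ x ∈ J, HasDerivAt F (f x) x) (hG : ∀ x ∈ J, HasDerivAt G (g x) x)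
    (heq : ∀ a ∈ J, ∀ b ∈ J,
      (F b - F a) * g (α * a + β * b) = (G b - G a) * f (α * a + β * b))
    (hIJ : I ⊆ J) (hIne : I.Nonempty) (hIc : I.OrdConnected)
    (hg : ∀ x ∈ I, g x ≠ 0)
    (v : ℝ → ℝ) (hv : ∀ x ∈ I, v x = f x / g x) :
    ∀ a ∈ I, ∀ b ∈ I,
      β * g a * (v (α * a + β * b) - v a) = α * g b * (v b - v (α * a + β * b)) :=
  stmt_0_general J I α β hα hβ hαβ F G f g hF hG heq hIJ hIc hg v hv
end

section
/- Under Setting 2.1: on the interval I (where g does not vanish), either the functions {1, F, G} are linearly dependent, or both F and G are infinitely differentiable on I. -/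
open Set Filter

/-- Functions with zero derivative on an ord-connected set are constant there. -/
lemma aux_const {s : Set ℝ} (hs : s.OrdConnected) {w W : ℝ → ℝ}
    (hw : ∀ x ∈ s, HasDerivAt w (W x) x) (hW : ∀ x ∈ s, W x = 0)
    {x y : ℝ} (hx : x ∈ s) (hy : y ∈ s) : w x = w y := by
  have key : ∀ u v : ℝ, u ∈ s → v ∈ s → u < v → w u = w v := by
    intro u v hu hv huv
    have hsub : Icc u v ⊆ s := hs.out hu hv
    have hc : ContinuousOn w (Icc u v) := fun z hz =>
      ((hw z (hsub hz)).continuousAt).continuousWithinAt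
    obtain ⟨c, hc1, hc2⟩ := exists_hasDerivAt_eq_slope w W huv hc
      (fun z hz => hw z (hsub (Ioo_subset_Icc_self hz)))
    have h0 : W c = 0 := hW c (hsub (Ioo_subset_Icc_self hc1))
    rw [h0] at hc2
    have hvu : v - u ≠ 0 := sub_ne_zero.mpr huv.ne'
    field_simp at hc2
    linarith
  rcases lt_trichotomy x y with h | h | h
  · exact key x y hx hy h
  · rw [h]
  · exact (key y x hy hx h).symm


/-- Propagation of constancy for the functional equation. -/
lemma aux_prop {I : Set ℝ} (hIc : I.OrdConnected) {α β : ℝ}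
    (hα : 0 < α) (hβ : 0 < β) (hαβ : α + β = 1)
    {φ : ℝ → ℝ} {c : ℝ}
    (h1 : ∀ a ∈ I, ∀ b ∈ I, φ (α*a+β*b) = c → φ a = c → φ b = c)
    (h2 : ∀ a ∈ I, ∀ b ∈ I, φ (α*a+β*b) = c → φ b = c → φ a = c)
    {p q : ℝ} (hpq : p < q) (hsub : Ioo p q ⊆ I)
    (hseed : ∀ x ∈ Ioo p q, φ x = c) :
    ∀ z ∈ I, φ z = c := by
  have hα' : α = 1 - β := by linarith
  subst hα'
  have hβ1 : β < 1 := by linarith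
  set m0 := (p+q)/2 with hm0def
  have hm0mem : m0 ∈ Ioo p q := ⟨by rw [hm0def]; linarith, by rw [hm0def]; linarith⟩
  have hm0I : m0 ∈ I := hsub hm0mem
  have hφm0 : φ m0 = c := hseed _ hm0mem
  -- rightward propagation
  have hR : ∀ z ∈ I, m0 < z → φ z = c := by
    intro z hz hm0z
    have hIccI : Icc m0 z ⊆ I := hIc.out hm0I hz
    set T := {t : ℝ | t ∈ Icc m0 z ∧ ∀ y ∈ Icc m0 t, φ y = c} with hTdef
    have hm0T : m0 ∈ T := ⟨⟨le_refl _, hm0z.le⟩, by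
      intro y hy
      have : y = m0 := le_antisymm hy.2 hy.1
      rw [this]; exact hφm0⟩
    have hTne : T.Nonempty := ⟨m0, hm0T⟩
    have hTbdd : BddAbove T := ⟨z, fun t ht => ht.1.2⟩
    set s := sSup T with hsdef
    have hm0s : m0 ≤ s := le_csSup hTbdd hm0T
    have hsz : s ≤ z := csSup_le hTne (fun t ht => ht.1.2)
    have hsI : s ∈ I := hIccI ⟨hm0s, hsz⟩
    have hS : ∀ y ∈ Ico m0 s, φ y = c := by
      intro y hy
      obtain ⟨t, htT, hyt⟩ := exists_lt_of_lt_csSup hTne hy.2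
      exact htT.2 y ⟨hy.1, hyt.le⟩
    have hφs : φ s = c := by
      rcases eq_or_lt_of_le hm0s with h | h
      · rw [← h]; exact hφm0
      · have hm : (1-β)*m0 + β*s ∈ Ico m0 s := by
          constructor <;> nlinarith [mul_lt_mul_of_pos_left h hβ]
        exact h1 m0 hm0I s hsI (hS _ hm) hφm0
    have hknown : ∀ y, p < y → y ≤ s → φ y = c := by
      intro y hy1 hy2
      rcases lt_or_ge y q with h | h
      · exact hseed y ⟨hy1, h⟩
      · rcases eq_or_lt_of_le hy2 with h' | h'
        · rw [h']; exact hφs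
        · exact hS y ⟨le_trans (le_of_lt hm0mem.2) h, h'⟩
    rcases eq_or_lt_of_le hsz with h | h
    · rw [← h]; exact hφs
    · exfalso
      have hps : p < s := lt_of_lt_of_le hm0mem.1 hm0s
      set δ := ((1-β)/β)*(s - p) with hδdef
      have hδpos : 0 < δ := by
        have h1β : 0 < 1 - β := by linarith
        have := sub_pos.mpr hps
        positivity
      set b' := min z (s + δ/2) with hb'def
      have hsb' : s < b' := lt_min h (by linarith)
      have hb'z : b' ≤ z := min_le_left _ _
      have hb'I : ∀ y, s < y → y ≤ b' → y ∈ I := fun y hy1 hy2 =>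
        hIccI ⟨le_trans hm0s (le_of_lt hy1), le_trans hy2 hb'z⟩
      have hnew : ∀ y, s < y → y ≤ b' → φ y = c := by
        intro y hy1 hy2
        have hyδ : y < s + δ := by
          have : b' ≤ s + δ/2 := min_le_right _ _
          linarith
        have hβδ : β * (s + δ) = β*s + (1-β)*(s-p) := by
          rw [hδdef]; field_simp
        set a := (s - β*y)/(1-β) with hadef
        have h1β : 0 < 1 - β := by linarith
        have hay : (1-β)*a + β*y = s := by rw [hadef]; field_simp; ring
        have has : a < s := by
          rw [hadef, div_lt_iff₀ h1β]
          nlinarith [mul_lt_mul_of_pos_left hy1 hβ]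
        have hap : p < a := by
          rw [hadef, lt_div_iff₀ h1β]
          have : β*y < β*s + (1-β)*(s-p) := by
            calc β*y < β*(s+δ) := mul_lt_mul_of_pos_left hyδ hβ
            _ = β*s + (1-β)*(s-p) := hβδ
          nlinarith
        have haI : a ∈ I := by
          rcases lt_or_ge a q with hh | hh
          · exact hsub ⟨hap, hh⟩
          · exact hIccI ⟨le_trans hm0mem.2.le hh, le_trans has.le hsz⟩
        have hφa : φ a = c := hknown a hap has.le
        have hφm : φ ((1-β)*a + β*y) = c := by rw [hay]; exact hφs
        exact h1 a haI y (hb'I y hy1 hy2) hφm hφa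
      have hb'T : b' ∈ T := by
        refine ⟨⟨le_trans hm0s hsb'.le, hb'z⟩, ?_⟩
        intro y hy
        rcases le_or_gt y s with hh | hh
        · exact hknown y (lt_of_lt_of_le hm0mem.1 hy.1) hh
        · exact hnew y hh hy.2
      exact absurd (le_csSup hTbdd hb'T) (not_le.mpr hsb')
  -- leftward propagation
  have hL : ∀ z ∈ I, z < m0 → φ z = c := by
    intro z hz hzm0
    have hIccI : Icc z m0 ⊆ I := hIc.out hz hm0I
    set T := {t : ℝ | t ∈ Icc z m0 ∧ ∀ y ∈ Icc t m0, φ y = c} with hTdef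
    have hm0T : m0 ∈ T := ⟨⟨hzm0.le, le_refl _⟩, by
      intro y hy
      have : y = m0 := le_antisymm hy.2 hy.1
      rw [this]; exact hφm0⟩
    have hTne : T.Nonempty := ⟨m0, hm0T⟩
    have hTbdd : BddBelow T := ⟨z, fun t ht => ht.1.1⟩
    set s := sInf T with hsdef
    have hsm0 : s ≤ m0 := csInf_le hTbdd hm0T
    have hzs : z ≤ s := le_csInf hTne (fun t ht => ht.1.1)
    have hsI : s ∈ I := hIccI ⟨hzs, hsm0⟩
    have hS : ∀ y ∈ Ioc s m0, φ y = c := by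
      intro y hy
      obtain ⟨t, htT, hyt⟩ := exists_lt_of_csInf_lt hTne hy.1
      exact htT.2 y ⟨hyt.le, hy.2⟩
    have hφs : φ s = c := by
      rcases eq_or_lt_of_le hsm0 with h | h
      · rw [h]; exact hφm0
      · have hm : (1-β)*s + β*m0 ∈ Ioc s m0 := by
          constructor <;> nlinarith [mul_lt_mul_of_pos_left h hβ]
        exact h2 s hsI m0 hm0I (hS _ hm) hφm0
    have hknown : ∀ y, s ≤ y → y < q → φ y = c := by
      intro y hy1 hy2
      rcases lt_or_ge p y with h | h
      · exact hseed y ⟨h, hy2⟩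
      · rcases eq_or_lt_of_le hy1 with h' | h'
        · rw [← h']; exact hφs
        · exact hS y ⟨h', le_trans h hm0mem.1.le⟩
    rcases eq_or_lt_of_le hzs with h | h
    · rw [h]; exact hφs
    · exfalso
      have hsq : s < q := lt_of_le_of_lt hsm0 hm0mem.2
      set δ := (β/(1-β))*(q - s) with hδdef
      have h1β : 0 < 1 - β := by linarith
      have hδpos : 0 < δ := by
        have := sub_pos.mpr hsq
        positivity
      set a' := max z (s - δ/2) with ha'def
      have ha's : a' < s := max_lt h (by linarith)
      have hza' : z ≤ a' := le_max_left _ _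
      have ha'I : ∀ y, a' ≤ y → y < s → y ∈ I := fun y hy1 hy2 =>
        hIccI ⟨le_trans hza' hy1, le_trans hy2.le hsm0⟩
      have hnew : ∀ y, a' ≤ y → y < s → φ y = c := by
        intro y hy1 hy2
        have hyδ : s - δ < y := by
          have : s - δ/2 ≤ a' := le_max_right _ _
          linarith
        set b := (s - (1-β)*y)/β with hbdef
        have hby : (1-β)*y + β*b = s := by rw [hbdef]; field_simp; ring
        have hsb : s < b := by
          rw [hbdef, lt_div_iff₀ hβ]
          nlinarith [mul_lt_mul_of_pos_left hy2 h1β]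
        have hbq : b < q := by
          rw [hbdef, div_lt_iff₀ hβ]
          have hδq : (1-β)*(s - δ) = (1-β)*s - β*(q-s) := by
            rw [hδdef]; field_simp
          nlinarith [mul_lt_mul_of_pos_left hyδ h1β]
        have hbI : b ∈ I := by
          rcases lt_or_ge p b with hh | hh
          · exact hsub ⟨hh, hbq⟩
          · exact hIccI ⟨le_trans hzs hsb.le, le_trans hh hm0mem.1.le⟩
        have hφb : φ b = c := hknown b hsb.le hbq
        have hφm : φ ((1-β)*y + β*b) = c := by rw [hby]; exact hφs
        exact h2 y (ha'I y hy1 hy2) b hbI hφm hφb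
      have ha'T : a' ∈ T := by
        refine ⟨⟨hza', le_trans ha's.le hsm0⟩, ?_⟩
        intro y hy
        rcases lt_or_ge y s with hh | hh
        · exact hnew y hy.1 hh
        · exact hknown y hh (lt_of_le_of_lt hy.2 hm0mem.2)
      exact absurd (csInf_le hTbdd ha'T) (not_le.mpr ha's)
  intro z hz
  rcases lt_trichotomy z m0 with h | h | h
  · exact hL z hz h
  · rw [h]; exact hφm0
  · exact hR z hz h



/-- Solutions of u'' = K u on an ord-connected set agree with an entire analytic
function having an explicit entire primitive. -/
lemma aux_solve {I : Set ℝ} (hIc : I.OrdConnected) {u u1 : ℝ → ℝ} {K : ℝ}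
    (hu : ∀ x ∈ I, HasDerivAt u (u1 x) x)
    (hu1 : ∀ x ∈ I, HasDerivAt u1 (K * u x) x)
    {x₀ : ℝ} (hx₀ : x₀ ∈ I) :
    ∃ v V : ℝ → ℝ, ContDiff ℝ (⊤ : ℕ∞) V ∧ (∀ y, HasDerivAt V (v y) y) ∧ Set.EqOn u v I := by
  set A := u x₀ with hA
  set B := u1 x₀ with hB
  rcases lt_trichotomy K 0 with hK | hK | hK
  · -- K < 0 : trigonometric case
    set r := Real.sqrt (-K) with hr
    have hrpos : 0 < r := Real.sqrt_pos.mpr (by linarith)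
    have hr2 : r^2 = -K := Real.sq_sqrt (by linarith)
    refine ⟨fun y => A * Real.cos (r*(y-x₀)) + (B/r) * Real.sin (r*(y-x₀)),
      fun y => (A/r) * Real.sin (r*(y-x₀)) - (B/r^2) * Real.cos (r*(y-x₀)), ?_, ?_, ?_⟩
    · -- smoothness of V
      have h1 : ContDiff ℝ (⊤ : ℕ∞) (fun y : ℝ => r*(y-x₀)) := by
        apply ContDiff.mul contDiff_const
        exact contDiff_id.sub contDiff_const
      exact (contDiff_const.mul (Real.contDiff_sin.comp h1)).sub
        (contDiff_const.mul (Real.contDiff_cos.comp h1))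
    · -- derivative of V
      intro y
      have hlin : HasDerivAt (fun y : ℝ => r*(y-x₀)) r y := by
        simpa using ((hasDerivAt_id y).sub_const x₀).const_mul r
      have hsin := (hlin.sin).const_mul (A/r)
      have hcos := (hlin.cos).const_mul (B/r^2)
      refine HasDerivAt.congr_deriv (hsin.sub hcos) (Eq.symm ?_)
      field_simp
      ring
    · -- u agrees
      intro y hy
      set v1 := fun y => -(A*r) * Real.sin (r*(y-x₀)) + B * Real.cos (r*(y-x₀)) with hv1
      have hvD : ∀ y, HasDerivAt (fun y => A * Real.cos (r*(y-x₀)) + (B/r) * Real.sin (r*(y-x₀))) (v1 y) y := by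
        intro y
        have hlin : HasDerivAt (fun y : ℝ => r*(y-x₀)) r y := by
          simpa using ((hasDerivAt_id y).sub_const x₀).const_mul r
        have h1 := (hlin.cos).const_mul A
        have h2 := (hlin.sin).const_mul (B/r)
        refine HasDerivAt.congr_deriv (h1.add h2) (Eq.symm ?_)
        rw [hv1]
        field_simp
      have hv1D : ∀ y, HasDerivAt v1
          (K * (A * Real.cos (r*(y-x₀)) + (B/r) * Real.sin (r*(y-x₀)))) y := by
        intro y
        have hlin : HasDerivAt (fun y : ℝ => r*(y-x₀)) r y := by
          simpa using ((hasDerivAt_id y).sub_const x₀).const_mul r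
        have h1 := (hlin.sin).const_mul (-(A*r))
        have h2 := (hlin.cos).const_mul B
        refine HasDerivAt.congr_deriv (h1.add h2) (Eq.symm ?_)
        have : K = -(r^2) := by rw [hr2]; ring
        rw [this]
        field_simp
        ring
      -- energy argument
      set w := fun y => u y - (A * Real.cos (r*(y-x₀)) + (B/r) * Real.sin (r*(y-x₀))) with hw
      set z := fun y => u1 y - v1 y with hz
      have hwD : ∀ x ∈ I, HasDerivAt w (z x) x := fun x hx => (hu x hx).sub (hvD x)
      have hzD : ∀ x ∈ I, HasDerivAt z (K * w x) x := by
        intro x hx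
        have := (hu1 x hx).sub (hv1D x)
        refine HasDerivAt.congr_deriv (this) (Eq.symm ?_)
        rw [hw]; ring
      have hE : ∀ x ∈ I, HasDerivAt (fun y => (z y)^2 + r^2*(w y)^2)
          (2*(z x)*(K*w x) + r^2*(2*(w x)*(z x))) x := by
        intro x hx
        exact (((hzD x hx).pow 2).congr_deriv (by ring)).add
          ((((hwD x hx).pow 2).const_mul (r^2)).congr_deriv (by ring))
      have hE0 : ∀ x ∈ I, (2*(z x)*(K*w x) + r^2*(2*(w x)*(z x))) = 0 := by
        intro x hx
        have : K = -(r^2) := by rw [hr2]; ring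
        rw [this]; ring
      have hEconst : (z y)^2 + r^2*(w y)^2 = (z x₀)^2 + r^2*(w x₀)^2 :=
        aux_const hIc hE hE0 hy hx₀
      have hwx₀ : w x₀ = 0 := by
        show u x₀ - (A * Real.cos (r*(x₀-x₀)) + (B/r) * Real.sin (r*(x₀-x₀))) = 0
        simp [hA]
      have hzx₀ : z x₀ = 0 := by
        show u1 x₀ - (-(A*r) * Real.sin (r*(x₀-x₀)) + B * Real.cos (r*(x₀-x₀))) = 0
        simp [hB]
      rw [hwx₀, hzx₀] at hEconst
      have h2 : (z y)^2 + r^2*(w y)^2 = 0 := by rw [hEconst]; ring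
      have h3 : (r * w y)^2 ≤ 0 := by nlinarith [sq_nonneg (z y)]
      have h4 : r * w y = 0 := by nlinarith [sq_nonneg (r * w y)]
      have hwy : w y = 0 := by
        rcases mul_eq_zero.mp h4 with h | h
        · exact absurd h hrpos.ne'
        · exact h
      have hwy' : u y - (A * Real.cos (r*(y-x₀)) + (B/r) * Real.sin (r*(y-x₀))) = 0 := hwy
      linarith [hwy']
  · -- K = 0 : affine case
    subst hK
    refine ⟨fun y => A + B*(y-x₀), fun y => A*(y-x₀) + B*((y-x₀)^2/2), ?_, ?_, ?_⟩
    · apply ContDiff.add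
      · exact contDiff_const.mul (contDiff_id.sub contDiff_const)
      · apply contDiff_const.mul
        apply ContDiff.div_const
        exact (contDiff_id.sub contDiff_const).pow 2
    · intro y
      have h1 : HasDerivAt (fun y : ℝ => y - x₀) 1 y := (hasDerivAt_id y).sub_const x₀
      have h2 := (h1.pow 2).div_const 2
      have h3 := h1.const_mul A
      have h4 := h2.const_mul B
      refine HasDerivAt.congr_deriv (h3.add h4) (Eq.symm ?_)
      ring
    · intro y hy
      have hu1c : ∀ x ∈ I, u1 x = B := by
        intro x hx
        exact aux_const hIc hu1 (fun x _ => by ring) hx hx₀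
      have hwD : ∀ x ∈ I, HasDerivAt (fun y => u y - B*y) (u1 x - B) x := by
        intro x hx
        refine HasDerivAt.congr_deriv ((hu x hx).sub ((hasDerivAt_id x).const_mul B)) ?_; ring
      have : u y - B*y = u x₀ - B*x₀ :=
        aux_const hIc hwD (fun x hx => by rw [hu1c x hx]; ring) hy hx₀
      simp only [hA, hB]
      linarith
  · -- K > 0 : exponential case
    set r := Real.sqrt K with hr
    have hrpos : 0 < r := Real.sqrt_pos.mpr hK
    have hr2 : r^2 = K := Real.sq_sqrt hK.le
    set P := B + r*A with hP
    set M := B - r*A with hM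
    refine ⟨fun y => (P * Real.exp (r*(y-x₀)) - M * Real.exp (-r*(y-x₀)))/(2*r),
      fun y => (P * Real.exp (r*(y-x₀)) + M * Real.exp (-r*(y-x₀)))/(2*r^2), ?_, ?_, ?_⟩
    · apply ContDiff.div_const
      apply ContDiff.add
      · exact contDiff_const.mul (Real.contDiff_exp.comp
          (contDiff_const.mul (contDiff_id.sub contDiff_const)))
      · exact contDiff_const.mul (Real.contDiff_exp.comp
          (contDiff_const.mul (contDiff_id.sub contDiff_const)))
    · intro y
      have hl1 : HasDerivAt (fun y : ℝ => r*(y-x₀)) r y := by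
        simpa using ((hasDerivAt_id y).sub_const x₀).const_mul r
      have hl2 : HasDerivAt (fun y : ℝ => -r*(y-x₀)) (-r) y := by
        simpa using ((hasDerivAt_id y).sub_const x₀).const_mul (-r)
      have h1 := (hl1.exp).const_mul P
      have h2 := (hl2.exp).const_mul M
      refine HasDerivAt.congr_deriv ((h1.add h2).div_const (2*r^2)) (Eq.symm ?_)
      field_simp
      ring
    · -- u agrees on I
      intro y hy
      -- p := u1 + r u satisfies p' = r p hence p = P e^{r(x-x₀)}
      have hp : ∀ x ∈ I, (u1 x + r * u x) * Real.exp (-r*(x-x₀)) = P := by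
        intro x hx
        have hD : ∀ x ∈ I, HasDerivAt (fun y => (u1 y + r * u y) * Real.exp (-r*(y-x₀)))
            ((K * u x + r * u1 x) * Real.exp (-r*(x-x₀))
              + (u1 x + r * u x) * (Real.exp (-r*(x-x₀)) * (-r))) x := by
          intro x hx
          have hl2 : HasDerivAt (fun y : ℝ => -r*(y-x₀)) (-r) x := by
            simpa using ((hasDerivAt_id x).sub_const x₀).const_mul (-r)
          exact ((hu1 x hx).add ((hu x hx).const_mul r)).mul (hl2.exp)
        have hzero : ∀ x ∈ I, (K * u x + r * u1 x) * Real.exp (-r*(x-x₀))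
            + (u1 x + r * u x) * (Real.exp (-r*(x-x₀)) * (-r)) = 0 := by
          intro x hx
          have : K = r^2 := hr2.symm
          rw [this]; ring
        have := aux_const hIc hD hzero hx hx₀
        simpa [hP, hA, hB] using this
      have hm : ∀ x ∈ I, (u1 x - r * u x) * Real.exp (r*(x-x₀)) = M := by
        intro x hx
        have hD : ∀ x ∈ I, HasDerivAt (fun y => (u1 y - r * u y) * Real.exp (r*(y-x₀)))
            ((K * u x - r * u1 x) * Real.exp (r*(x-x₀))
              + (u1 x - r * u x) * (Real.exp (r*(x-x₀)) * r)) x := by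
          intro x hx
          have hl1 : HasDerivAt (fun y : ℝ => r*(y-x₀)) r x := by
            simpa using ((hasDerivAt_id x).sub_const x₀).const_mul r
          exact ((hu1 x hx).sub ((hu x hx).const_mul r)).mul (hl1.exp)
        have hzero : ∀ x ∈ I, (K * u x - r * u1 x) * Real.exp (r*(x-x₀))
            + (u1 x - r * u x) * (Real.exp (r*(x-x₀)) * r) = 0 := by
          intro x hx
          have : K = r^2 := hr2.symm
          rw [this]; ring
        have := aux_const hIc hD hzero hx hx₀
        simpa [hM, hA, hB] using this
      have h1 := hp y hy
      have h2 := hm y hy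
      have hexp : Real.exp (-r*(y-x₀)) = (Real.exp (r*(y-x₀)))⁻¹ := by
        rw [← Real.exp_neg]; ring_nf
      have hepos : Real.exp (r*(y-x₀)) > 0 := Real.exp_pos _
      have hEne : Real.exp (r*(y-x₀)) ≠ 0 := hepos.ne'
      show u y = (P * Real.exp (r*(y-x₀)) - M * Real.exp (-r*(y-x₀)))/(2*r)
      rw [hexp, eq_div_iff (by positivity : (2*r:ℝ) ≠ 0)]
      rw [hexp] at h1
      have h1' : u1 y + r * u y = P * Real.exp (r*(y-x₀)) := by
        field_simp at h1
        linarith [h1]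
      apply mul_left_cancel₀ hEne
      field_simp
      linear_combination Real.exp (r*(y-x₀)) * h1' - h2

/-- Proposition 2.4 -/
theorem stmt_4 (J I : Set ℝ) (hJo : IsOpen J) (hJc : J.OrdConnected) (hJne : J.Nonempty)
    (α β : ℝ) (hα : α ∈ Set.Ioo (0:ℝ) 1) (hβ : β ∈ Set.Ioo (0:ℝ) 1) (hαβ : α + β = 1)
    (F G f g : ℝ → ℝ)
    (hF : ∀ x ∈ J, HasDerivAt F (f x) x) (hG : ∀ x ∈ J, HasDerivAt G (g x) x)
    (heq : ∀ a ∈ J, ∀ b ∈ J,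
      (F b - F a) * g (α * a + β * b) = (G b - G a) * f (α * a + β * b))
    (hIJ : I ⊆ J) (hIo : IsOpen I) (hIne : I.Nonempty) (hIc : I.OrdConnected)
    (hg : ∀ x ∈ I, g x ≠ 0) :
    (∃ c₁ c₂ c₃ : ℝ, (c₁, c₂, c₃) ≠ (0, 0, 0) ∧
        ∀ x ∈ I, c₁ * F x + c₂ * G x + c₃ = 0) ∨
      (ContDiffOn ℝ (⊤ : ℕ∞) F I ∧ ContDiffOn ℝ (⊤ : ℕ∞) G I) := by
  obtain ⟨hα0, hα1⟩ := hα
  obtain ⟨hβ0, hβ1⟩ := hβ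
  have hαne : α ≠ 0 := hα0.ne'
  have hβne : β ≠ 0 := hβ0.ne'
  have hα' : α = 1 - β := by linarith
  subst hα'
  set φ : ℝ → ℝ := fun x => f x / g x with hφdef
  -- membership of the convex combination
  have hmem : ∀ a ∈ I, ∀ b ∈ I, (1-β)*a+β*b ∈ I := by
    intro a ha b hb
    rcases le_total a b with h | h
    · exact hIc.out ha hb ⟨by nlinarith [mul_le_mul_of_nonneg_left h hβ0.le],
        by nlinarith [mul_le_mul_of_nonneg_left h hβ0.le]⟩
    · exact hIc.out hb ha ⟨by nlinarith [mul_le_mul_of_nonneg_left h hβ0.le],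
        by nlinarith [mul_le_mul_of_nonneg_left h hβ0.le]⟩
  -- G is injective on I
  have hGinj : ∀ a ∈ I, ∀ b ∈ I, a ≠ b → G a ≠ G b := by
    have key : ∀ a ∈ I, ∀ b ∈ I, a < b → G a ≠ G b := by
      intro a ha b hb hab
      have hsub : Icc a b ⊆ I := hIc.out ha hb
      obtain ⟨c, hc1, hc2⟩ := exists_hasDerivAt_eq_slope G g hab
        (fun z hz => ((hG z (hIJ (hsub hz))).continuousAt).continuousWithinAt)
        (fun z hz => hG z (hIJ (hsub (Ioo_subset_Icc_self hz))))
      intro hGab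
      have : g c = 0 := by rw [hc2, hGab.symm]; simp
      exact hg c (hsub (Ioo_subset_Icc_self hc1)) this
    intro a ha b hb hab
    rcases lt_or_gt_of_ne hab with h | h
    · exact key a ha b hb h
    · exact (key b hb a ha h).symm
  have hfφg : ∀ x ∈ I, f x = φ x * g x := by
    intro x hx
    rw [hφdef]
    exact (div_mul_cancel₀ (f x) (hg x hx)).symm
  -- Claim A
  have hA : ∀ a ∈ I, ∀ b ∈ I, F b - F a = φ ((1-β)*a+β*b) * (G b - G a) := by
    intro a ha b hb
    rcases eq_or_ne a b with h | h
    · subst h; ring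
    · have hm := hmem a ha b hb
      have he := heq a (hIJ ha) b (hIJ hb)
      have hgne := hg _ hm
      rw [hφdef]
      field_simp
      linarith [he]
  -- local representation of φ
  have hrep : ∀ x₀ ∈ I, ∃ a ∈ I, ∃ ε > 0, ∀ x ∈ Metric.ball x₀ ε,
      x ∈ I ∧ ((x - (1-β)*a)/β) ∈ I ∧ G ((x - (1-β)*a)/β) ≠ G a ∧
      φ x = (F ((x - (1-β)*a)/β) - F a) / (G ((x - (1-β)*a)/β) - G a) := by
    intro x₀ hx₀
    obtain ⟨r, hr, hball⟩ := Metric.isOpen_iff.mp hIo x₀ hx₀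
    set t := r/2 with ht
    set a := x₀ - β*t with ha
    have haI : a ∈ I := by
      apply hball
      rw [Real.ball_eq_Ioo]
      constructor <;> (rw [ha, ht]; nlinarith)
    refine ⟨a, haI, β*r/4, by positivity, ?_⟩
    intro x hx
    rw [Real.ball_eq_Ioo] at hx
    have hxI : x ∈ I := by
      apply hball; rw [Real.ball_eq_Ioo]
      constructor <;> nlinarith [hx.1, hx.2]
    have hbx1 : x₀ - r < (x - (1-β)*a)/β := by
      rw [lt_div_iff₀ hβ0, ha, ht]
      nlinarith [hx.1, mul_pos hβ0 hr, mul_pos (mul_pos hβ0 hβ0) hr]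
    have hbx2 : (x - (1-β)*a)/β < x₀ + r := by
      rw [div_lt_iff₀ hβ0, ha, ht]
      nlinarith [hx.2, mul_pos hβ0 hr, mul_pos (mul_pos hβ0 hβ0) hr]
    have hbxI : (x - (1-β)*a)/β ∈ I := by
      apply hball; rw [Real.ball_eq_Ioo]; exact ⟨hbx1, hbx2⟩
    have hbna : (x - (1-β)*a)/β ≠ a := by
      have : a < (x - (1-β)*a)/β := by
        rw [lt_div_iff₀ hβ0]
        have hax : a < x := by rw [ha, ht]; nlinarith [hx.1, mul_pos hβ0 hr]
        nlinarith [hax]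
      exact this.ne'
    have hGne : G ((x - (1-β)*a)/β) ≠ G a := fun h => hGinj _ hbxI _ haI hbna h
    refine ⟨hxI, hbxI, hGne, ?_⟩
    have hcomb : (1-β)*a + β*((x - (1-β)*a)/β) = x := by field_simp; ring
    have := hA a haI _ hbxI
    rw [hcomb] at this
    rw [eq_div_iff (sub_ne_zero.mpr hGne)]
    linarith [this]
  -- differentiability of φ on I
  have hφdiff : ∀ x ∈ I, DifferentiableAt ℝ φ x := by
    intro x₀ hx₀
    obtain ⟨a, haI, ε, hε, hloc⟩ := hrep x₀ hx₀
    set bf : ℝ → ℝ := fun x => (x - (1-β)*a)/β with hbf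
    have hbfd : DifferentiableAt ℝ bf x₀ := by
      apply DifferentiableAt.div_const
      exact differentiableAt_id.sub_const _
    obtain ⟨h1, h2, h3, h4⟩ := hloc x₀ (Metric.mem_ball_self hε)
    have hq : DifferentiableAt ℝ (fun x => (F (bf x) - F a) / (G (bf x) - G a)) x₀ := by
      apply DifferentiableAt.div
      · exact ((hF _ (hIJ h2)).differentiableAt.comp x₀ hbfd).sub_const _
      · exact ((hG _ (hIJ h2)).differentiableAt.comp x₀ hbfd).sub_const _
      · exact sub_ne_zero.mpr h3
    apply hq.congr_of_eventuallyEq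
    filter_upwards [Metric.ball_mem_nhds x₀ hε] with x hx
    exact (hloc x hx).2.2.2
  -- smoothness transfer to φ
  have hφcd : ∀ (N : ℕ), ContDiffOn ℝ N F I → ContDiffOn ℝ N G I →
      ∀ x ∈ I, ContDiffAt ℝ N φ x := by
    intro N hFc hGc x₀ hx₀
    obtain ⟨a, haI, ε, hε, hloc⟩ := hrep x₀ hx₀
    set bf : ℝ → ℝ := fun x => (x - (1-β)*a)/β with hbf
    have hbfd : ContDiffAt ℝ N bf x₀ :=
      ((contDiff_id.sub contDiff_const).div_const _).contDiffAt
    obtain ⟨h1, h2, h3, h4⟩ := hloc x₀ (Metric.mem_ball_self hε)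
    have hq : ContDiffAt ℝ N (fun x => (F (bf x) - F a) / (G (bf x) - G a)) x₀ := by
      apply ContDiffAt.div
      · exact ((hFc.contDiffAt (hIo.mem_nhds h2)).comp x₀ hbfd).sub contDiffAt_const
      · exact ((hGc.contDiffAt (hIo.mem_nhds h2)).comp x₀ hbfd).sub contDiffAt_const
      · exact sub_ne_zero.mpr h3
    apply hq.congr_of_eventuallyEq
    filter_upwards [Metric.ball_mem_nhds x₀ hε] with x hx
    exact (hloc x hx).2.2.2
  -- the two differentiated identities
  have hident : ∀ a ∈ I, ∀ b ∈ I,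
      f a = φ ((1-β)*a+β*b) * g a - (1-β) * deriv φ ((1-β)*a+β*b) * (G b - G a) ∧
      f b = φ ((1-β)*a+β*b) * g b + β * deriv φ ((1-β)*a+β*b) * (G b - G a) := by
    intro a ha b hb
    have hm := hmem a ha b hb
    have hφm : HasDerivAt φ (deriv φ ((1-β)*a+β*b)) ((1-β)*a+β*b) :=
      (hφdiff _ hm).hasDerivAt
    constructor
    · -- differentiate in the first variable at a
      have hinner : HasDerivAt (fun y : ℝ => (1-β)*y+β*b) (1-β) a := by
        simpa using ((hasDerivAt_id a).const_mul (1-β)).add_const (β*b)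
      have hcompo : HasDerivAt (fun y => φ ((1-β)*y+β*b)) (deriv φ ((1-β)*a+β*b) * (1-β)) a :=
        HasDerivAt.comp (h₂ := φ) a hφm hinner
      have hGsub : HasDerivAt (fun y => G b - G y) (-(g a)) a := by
        simpa using (hG a (hIJ ha)).const_sub (G b)
      have hRd : HasDerivAt (fun y => φ ((1-β)*y+β*b) * (G b - G y))
          (deriv φ ((1-β)*a+β*b) * (1-β) * (G b - G a) +
            φ ((1-β)*a+β*b) * (-(g a))) a := hcompo.mul hGsub
      have hLd : HasDerivAt (fun y => F b - F y) (-(f a)) a := by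
        simpa using (hF a (hIJ ha)).const_sub (F b)
      have hEq : (fun y => F b - F y) =ᶠ[nhds a] (fun y => φ ((1-β)*y+β*b) * (G b - G y)) := by
        filter_upwards [hIo.mem_nhds ha] with y hy
        exact hA y hy b hb
      have hLd2 := hRd.congr_of_eventuallyEq hEq
      have := hLd2.unique hLd
      linarith [this]
    · -- differentiate in the second variable at b
      have hinner : HasDerivAt (fun y : ℝ => (1-β)*a+β*y) β b := by
        simpa using ((hasDerivAt_id b).const_mul β).const_add ((1-β)*a)
      have hcompo : HasDerivAt (fun y => φ ((1-β)*a+β*y)) (deriv φ ((1-β)*a+β*b) * β) b :=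
        HasDerivAt.comp (h₂ := φ) b hφm hinner
      have hGsub : HasDerivAt (fun y => G y - G a) (g b) b := by
        simpa using (hG b (hIJ hb)).sub_const (G a)
      have hRd : HasDerivAt (fun y => φ ((1-β)*a+β*y) * (G y - G a))
          (deriv φ ((1-β)*a+β*b) * β * (G b - G a) + φ ((1-β)*a+β*b) * (g b)) b :=
        hcompo.mul hGsub
      have hLd : HasDerivAt (fun y => F y - F a) (f b) b := by
        simpa using (hF b (hIJ hb)).sub_const (F a)
      have hEq : (fun y => F y - F a) =ᶠ[nhds b] (fun y => φ ((1-β)*a+β*y) * (G y - G a)) := by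
        filter_upwards [hIo.mem_nhds hb] with y hy
        exact hA a ha y hy
      have hLd2 := hRd.congr_of_eventuallyEq hEq
      have := hLd2.unique hLd
      linarith [this]
  -- star identity
  have hstar : ∀ a ∈ I, ∀ b ∈ I,
      (1-β)*(φ b - φ ((1-β)*a+β*b))*g b = β*(φ ((1-β)*a+β*b) - φ a)*g a := by
    intro a ha b hb
    obtain ⟨h1, h2⟩ := hident a ha b hb
    have e3 := hfφg a ha
    have e4 := hfφg b hb
    nlinarith [h1, h2, e3, e4]
  -- symmetric identity
  have hE2 : ∀ a ∈ I, ∀ b ∈ I,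
      (1-β) * f b + β * f a = φ ((1-β)*a+β*b) * ((1-β) * g b + β * g a) := by
    intro a ha b hb
    obtain ⟨h1, h2⟩ := hident a ha b hb
    nlinarith [h1, h2]
  by_cases hnc : ∀ a ∈ I, ∃ b ∈ I, φ ((1-β)*a+β*b) ≠ φ a
  case neg =>
    -- φ is constant on I, hence F = cG + d on I
    left
    push_neg at hnc
    obtain ⟨a₀, ha₀, hall⟩ := hnc
    have hconst : ∀ b ∈ I, φ b = φ a₀ := by
      intro b hb
      have hs := hstar a₀ ha₀ b hb
      rw [hall b hb] at hs
      have : (1-β)*(φ b - φ a₀)*g b = 0 := by rw [hs]; ring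
      rcases mul_eq_zero.mp this with h | h
      · rcases mul_eq_zero.mp h with h' | h'
        · linarith
        · linarith [h']
      · exact absurd h (hg b hb)
    obtain ⟨x₁, hx₁⟩ := hIne
    set c := φ a₀ with hc
    refine ⟨1, -c, -(F x₁ - c * G x₁), ?_, ?_⟩
    · simp [Prod.ext_iff]
    · intro x hx
      have hW : ∀ y ∈ I, HasDerivAt (fun z => F z - c * G z) (f y - c * g y) y :=
        fun y hy => (hF y (hIJ hy)).sub ((hG y (hIJ hy)).const_mul c)
      have hW0 : ∀ y ∈ I, f y - c * g y = 0 := by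
        intro y hy
        rw [hfφg y hy, hconst y hy]
        ring
      have := aux_const hIc hW hW0 hx hx₁
      linarith [this]
  case pos =>
    right
    -- bootstrap: F and G are C^n on I for every n
    have hboot : ∀ n : ℕ, ContDiffOn ℝ n F I ∧ ContDiffOn ℝ n G I := by
      intro n
      induction n with
      | zero =>
        constructor
        · rw [show ((0:ℕ):WithTop ℕ∞) = 0 from rfl, contDiffOn_zero]
          exact fun x hx => ((hF x (hIJ hx)).differentiableAt.continuousAt).continuousWithinAt
        · rw [show ((0:ℕ):WithTop ℕ∞) = 0 from rfl, contDiffOn_zero]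
          exact fun x hx => ((hG x (hIJ hx)).differentiableAt.continuousAt).continuousWithinAt
      | succ n ih =>
        obtain ⟨ihF, ihG⟩ := ih
        have hφn : ∀ x ∈ I, ContDiffAt ℝ n φ x := hφcd n ihF ihG
        have hgn : ∀ x ∈ I, ContDiffAt ℝ n g x := by
          intro a ha
          obtain ⟨b₀, hb₀, hne⟩ := hnc a ha
          have hd : ContinuousAt (fun x => β*(φ ((1-β)*x+β*b₀) - φ x)) a := by
            have hc1 : ContinuousAt (fun x : ℝ => (1-β)*x+β*b₀) a := by fun_prop
            have hφm : ContinuousAt φ ((1-β)*a+β*b₀) := (hφdiff _ (hmem a ha b₀ hb₀)).continuousAt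
            have hφa : ContinuousAt φ a := (hφdiff a ha).continuousAt
            have hcomp : ContinuousAt (fun x => φ ((1-β)*x+β*b₀)) a :=
              ContinuousAt.comp (g := φ) (f := fun x : ℝ => (1-β)*x+β*b₀) (x := a) hφm hc1
            exact continuousAt_const.mul (hcomp.sub hφa)
          have hdne : β*(φ ((1-β)*a+β*b₀) - φ a) ≠ 0 := by
            intro h
            rcases mul_eq_zero.mp h with h' | h'
            · exact hβne h'
            · exact hne (by linarith [sub_eq_zero.mp h'])
          have hev : ∀ᶠ x in nhds a, g x =
              ((1-β)*(φ b₀ - φ ((1-β)*x+β*b₀))*g b₀) / (β*(φ ((1-β)*x+β*b₀) - φ x)) := by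
            filter_upwards [hIo.mem_nhds ha, hd.eventually_ne hdne] with x hx hdx
            rw [eq_div_iff hdx]
            linarith [hstar x hx b₀ hb₀]
          have hq : ContDiffAt ℝ n (fun x =>
              ((1-β)*(φ b₀ - φ ((1-β)*x+β*b₀))*g b₀) / (β*(φ ((1-β)*x+β*b₀) - φ x))) a := by
            have hlin : ContDiffAt ℝ n (fun x : ℝ => (1-β)*x+β*b₀) a :=
              ((contDiff_const.mul contDiff_id).add contDiff_const).contDiffAt
            have hφm : ContDiffAt ℝ n φ ((1-β)*a+β*b₀) := hφn _ (hmem a ha b₀ hb₀)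
            have hcm : ContDiffAt ℝ n (fun x => φ ((1-β)*x+β*b₀)) a := hφm.comp (g := φ) a hlin
            exact ((contDiffAt_const.mul (contDiffAt_const.sub hcm)).mul contDiffAt_const).div
              (contDiffAt_const.mul (hcm.sub (hφn a ha))) hdne
          exact hq.congr_of_eventuallyEq hev
        have hfn : ∀ x ∈ I, ContDiffAt ℝ n f x := by
          intro a ha
          apply ((hφn a ha).mul (hgn a ha)).congr_of_eventuallyEq
          filter_upwards [hIo.mem_nhds ha] with x hx
          exact hfφg x hx
        constructor
        · rw [show (((n+1:ℕ)):WithTop ℕ∞) = (n:WithTop ℕ∞) + 1 by push_cast; rfl,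
            contDiffOn_succ_iff_deriv_of_isOpen hIo]
          refine ⟨fun x hx => (hF x (hIJ hx)).differentiableAt.differentiableWithinAt, ?_, ?_⟩
          · intro h; exact absurd h (by simp)
          · have hcf : ContDiffOn ℝ n f I := fun x hx => (hfn x hx).contDiffWithinAt
            exact hcf.congr (fun x hx => (hF x (hIJ hx)).deriv)
        · rw [show (((n+1:ℕ)):WithTop ℕ∞) = (n:WithTop ℕ∞) + 1 by push_cast; rfl,
            contDiffOn_succ_iff_deriv_of_isOpen hIo]
          refine ⟨fun x hx => (hG x (hIJ hx)).differentiableAt.differentiableWithinAt, ?_, ?_⟩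
          · intro h; exact absurd h (by simp)
          · have hcg : ContDiffOn ℝ n g I := fun x hx => (hgn x hx).contDiffWithinAt
            exact hcg.congr (fun x hx => (hG x (hIJ hx)).deriv)
    -- all-orders smoothness utilities
    have hFall : ∀ n : ℕ, ContDiffOn ℝ n F I := fun n => (hboot n).1
    have hGall : ∀ n : ℕ, ContDiffOn ℝ n G I := fun n => (hboot n).2
    have derivCD : ∀ (u : ℝ → ℝ), (∀ n : ℕ, ContDiffOn ℝ n u I) →
        (∀ n : ℕ, ContDiffOn ℝ n (deriv u) I) := by
      intro u hu n
      exact (hu (n+1)).deriv_of_isOpen hIo (le_of_eq (by push_cast; rfl))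
    have hasD : ∀ (u : ℝ → ℝ), (∀ n : ℕ, ContDiffOn ℝ n u I) →
        ∀ x ∈ I, HasDerivAt u (deriv u x) x := by
      intro u hu x hx
      have h1 : ContDiffAt ℝ ((1:ℕ) : WithTop ℕ∞) u x := (hu 1).contDiffAt (hIo.mem_nhds hx)
      exact (h1.differentiableAt (by norm_num)).hasDerivAt
    have hfall : ∀ n : ℕ, ContDiffOn ℝ n f I := fun n =>
      (derivCD F hFall n).congr (fun x hx => ((hF x (hIJ hx)).deriv).symm)
    have hgall : ∀ n : ℕ, ContDiffOn ℝ n g I := fun n =>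
      (derivCD G hGall n).congr (fun x hx => ((hG x (hIJ hx)).deriv).symm)
    have hφall : ∀ n : ℕ, ContDiffOn ℝ n φ I := fun n x hx =>
      (hφcd n (hFall n) (hGall n) x hx).contDiffWithinAt
    set f1 := deriv f with hf1def
    set g1 := deriv g with hg1def
    set φ1 := deriv φ with hφ1def
    have hf1all : ∀ n : ℕ, ContDiffOn ℝ n f1 I := derivCD f hfall
    have hg1all : ∀ n : ℕ, ContDiffOn ℝ n g1 I := derivCD g hgall
    have hφ1all : ∀ n : ℕ, ContDiffOn ℝ n φ1 I := derivCD φ hφall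
    set f2 := deriv f1 with hf2def
    set g2 := deriv g1 with hg2def
    set φ2 := deriv φ1 with hφ2def
    have hf2all : ∀ n : ℕ, ContDiffOn ℝ n f2 I := derivCD f1 hf1all
    have hg2all : ∀ n : ℕ, ContDiffOn ℝ n g2 I := derivCD g1 hg1all
    set f3 := deriv f2 with hf3def
    set g3 := deriv g2 with hg3def
    have hf3all : ∀ n : ℕ, ContDiffOn ℝ n f3 I := derivCD f2 hf2all
    have hg3all : ∀ n : ℕ, ContDiffOn ℝ n g3 I := derivCD g2 hg2all
    set f4 := deriv f3 with hf4def
    set g4 := deriv g3 with hg4def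
    have hfD : ∀ x ∈ I, HasDerivAt f (f1 x) x := hasD f hfall
    have hgD : ∀ x ∈ I, HasDerivAt g (g1 x) x := hasD g hgall
    have hφD : ∀ x ∈ I, HasDerivAt φ (φ1 x) x := hasD φ hφall
    have hf1D : ∀ x ∈ I, HasDerivAt f1 (f2 x) x := hasD f1 hf1all
    have hg1D : ∀ x ∈ I, HasDerivAt g1 (g2 x) x := hasD g1 hg1all
    have hφ1D : ∀ x ∈ I, HasDerivAt φ1 (φ2 x) x := hasD φ1 hφ1all
    have hf2D : ∀ x ∈ I, HasDerivAt f2 (f3 x) x := hasD f2 hf2all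
    have hg2D : ∀ x ∈ I, HasDerivAt g2 (g3 x) x := hasD g2 hg2all
    have hf3D : ∀ x ∈ I, HasDerivAt f3 (f4 x) x := hasD f3 hf3all
    have hg3D : ∀ x ∈ I, HasDerivAt g3 (g4 x) x := hasD g3 hg3all
    -- derivative of a function equal on I to a known-differentiable function
    have congrDeriv : ∀ (A B : ℝ → ℝ) (d x : ℝ), x ∈ I → (∀ y ∈ I, A y = B y) →
        HasDerivAt B d x → deriv A x = d := by
      intro A B d x hx hAB hB
      have hAd : HasDerivAt A d x := hB.congr_of_eventuallyEq
        (by filter_upwards [hIo.mem_nhds hx] with y hy; exact hAB y hy)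
      exact hAd.deriv
    have hf1eq : ∀ x ∈ I, f1 x = φ1 x * g x + φ x * g1 x := fun x hx =>
      congrDeriv f (fun y => φ y * g y) _ x hx hfφg ((hφD x hx).mul (hgD x hx))
    have hf2eq : ∀ x ∈ I, f2 x = (φ2 x * g x + φ1 x * g1 x) + (φ1 x * g1 x + φ x * g2 x) :=
      fun x hx => congrDeriv f1 (fun y => φ1 y * g y + φ y * g1 y) _ x hx hf1eq
        (((hφ1D x hx).mul (hgD x hx)).add ((hφD x hx).mul (hg1D x hx)))
    -- even-order relations from the symmetric expansion
    have heven : ∀ x ∈ I, f2 x = φ x * g2 x ∧ f4 x = φ x * g4 x := by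
      intro x hx
      obtain ⟨δ, hδ, hball⟩ := Metric.isOpen_iff.mp hIo x hx
      have hmemb : ∀ (γ s : ℝ), |γ| ≤ 1 → s ∈ Metric.ball (0:ℝ) δ → x + γ*s ∈ I := by
        intro γ s hγ hs
        apply hball
        rw [Metric.mem_ball, Real.dist_eq] at hs ⊢
        simp only [add_sub_cancel_left, sub_zero] at *
        calc |γ*s| = |γ| * |s| := abs_mul _ _
        _ ≤ 1 * |s| := mul_le_mul_of_nonneg_right hγ (abs_nonneg s)
        _ = |s| := one_mul _
        _ < δ := hs
      have hcomp : ∀ (u u' : ℝ → ℝ), (∀ y ∈ I, HasDerivAt u (u' y) y) → ∀ (γ : ℝ), |γ| ≤ 1 →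
          ∀ s ∈ Metric.ball (0:ℝ) δ, HasDerivAt (fun t => u (x + γ*t)) (u' (x + γ*s) * γ) s := by
        intro u u' hu γ hγ s hs
        have hin : HasDerivAt (fun t : ℝ => x + γ*t) γ s := by
          simpa using ((hasDerivAt_id s).const_mul γ).const_add x
        exact HasDerivAt.comp s (hu _ (hmemb γ s hγ hs)) hin
      have hlevel : ∀ (W W' : ℝ → ℝ), (∀ s ∈ Metric.ball (0:ℝ) δ, HasDerivAt W (W' s) s) →
          (∀ s ∈ Metric.ball (0:ℝ) δ, W s = 0) → ∀ s ∈ Metric.ball (0:ℝ) δ, W' s = 0 := by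
        intro W W' hWD hW0 s hs
        have h1 : deriv W s = W' s := (hWD s hs).deriv
        have h2 : W =ᶠ[nhds s] (fun _ => (0:ℝ)) := by
          filter_upwards [Metric.isOpen_ball.mem_nhds hs] with y hy
          exact hW0 y hy
        rw [← h1, h2.deriv_eq, deriv_const]
      set q0 : ℝ → ℝ := fun y => f y - (φ x) * g y with hq0
      set q1 : ℝ → ℝ := fun y => f1 y - (φ x) * g1 y with hq1
      set q2 : ℝ → ℝ := fun y => f2 y - (φ x) * g2 y with hq2
      set q3 : ℝ → ℝ := fun y => f3 y - (φ x) * g3 y with hq3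
      set q4 : ℝ → ℝ := fun y => f4 y - (φ x) * g4 y with hq4
      have hq0D : ∀ y ∈ I, HasDerivAt q0 (q1 y) y :=
        fun y hy => (hfD y hy).sub ((hgD y hy).const_mul (φ x))
      have hq1D : ∀ y ∈ I, HasDerivAt q1 (q2 y) y :=
        fun y hy => (hf1D y hy).sub ((hg1D y hy).const_mul (φ x))
      have hq2D : ∀ y ∈ I, HasDerivAt q2 (q3 y) y :=
        fun y hy => (hf2D y hy).sub ((hg2D y hy).const_mul (φ x))
      have hq3D : ∀ y ∈ I, HasDerivAt q3 (q4 y) y :=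
        fun y hy => (hf3D y hy).sub ((hg3D y hy).const_mul (φ x))
      have hβabs : |(-β : ℝ)| ≤ 1 := by rw [abs_neg, abs_of_pos hβ0]; linarith
      have hαabs : |(1-β : ℝ)| ≤ 1 := by rw [abs_of_pos (by linarith : (0:ℝ) < 1-β)]; linarith
      set W0 : ℝ → ℝ := fun s => (1-β) * q0 (x + (1-β)*s) + β * q0 (x + (-β)*s) with hW0
      set W1 : ℝ → ℝ := fun s => (1-β)^2 * q1 (x + (1-β)*s) - β^2 * q1 (x + (-β)*s) with hW1
      set W2 : ℝ → ℝ := fun s => (1-β)^3 * q2 (x + (1-β)*s) + β^3 * q2 (x + (-β)*s) with hW2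
      set W3 : ℝ → ℝ := fun s => (1-β)^4 * q3 (x + (1-β)*s) - β^4 * q3 (x + (-β)*s) with hW3
      set W4 : ℝ → ℝ := fun s => (1-β)^5 * q4 (x + (1-β)*s) + β^5 * q4 (x + (-β)*s) with hW4
      have hW0z : ∀ s ∈ Metric.ball (0:ℝ) δ, W0 s = 0 := by
        intro s hs
        have ha' : x + (-β)*s ∈ I := hmemb _ s hβabs hs
        have hb' : x + (1-β)*s ∈ I := hmemb _ s hαabs hs
        have hE := hE2 _ ha' _ hb'
        have hcomb : (1-β)*(x + (-β)*s) + β*(x + (1-β)*s) = x := by ring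
        rw [hcomb] at hE
        show (1-β) * (f (x + (1-β)*s) - (φ x) * g (x + (1-β)*s))
          + β * (f (x + (-β)*s) - (φ x) * g (x + (-β)*s)) = 0
        linear_combination hE
      have hW0D : ∀ s ∈ Metric.ball (0:ℝ) δ, HasDerivAt W0 (W1 s) s := by
        intro s hs
        have h1 := (hcomp q0 q1 hq0D (1-β) hαabs s hs).const_mul (1-β)
        have h2 := (hcomp q0 q1 hq0D (-β) hβabs s hs).const_mul β
        have h3 := h1.add h2
        refine HasDerivAt.congr_deriv h3 (Eq.symm ?_)
        show (1-β)^2 * q1 (x + (1-β)*s) - β^2 * q1 (x + (-β)*s) = _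
        ring
      have hW1z : ∀ s ∈ Metric.ball (0:ℝ) δ, W1 s = 0 := hlevel W0 W1 hW0D hW0z
      have hW1D : ∀ s ∈ Metric.ball (0:ℝ) δ, HasDerivAt W1 (W2 s) s := by
        intro s hs
        have h1 := (hcomp q1 q2 hq1D (1-β) hαabs s hs).const_mul ((1-β)^2)
        have h2 := (hcomp q1 q2 hq1D (-β) hβabs s hs).const_mul (β^2)
        have h3 := h1.sub h2
        refine HasDerivAt.congr_deriv h3 (Eq.symm ?_)
        show (1-β)^3 * q2 (x + (1-β)*s) + β^3 * q2 (x + (-β)*s) = _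
        ring
      have hW2z : ∀ s ∈ Metric.ball (0:ℝ) δ, W2 s = 0 := hlevel W1 W2 hW1D hW1z
      have hW2D : ∀ s ∈ Metric.ball (0:ℝ) δ, HasDerivAt W2 (W3 s) s := by
        intro s hs
        have h1 := (hcomp q2 q3 hq2D (1-β) hαabs s hs).const_mul ((1-β)^3)
        have h2 := (hcomp q2 q3 hq2D (-β) hβabs s hs).const_mul (β^3)
        have h3 := h1.add h2
        refine HasDerivAt.congr_deriv h3 (Eq.symm ?_)
        show (1-β)^4 * q3 (x + (1-β)*s) - β^4 * q3 (x + (-β)*s) = _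
        ring
      have hW3z : ∀ s ∈ Metric.ball (0:ℝ) δ, W3 s = 0 := hlevel W2 W3 hW2D hW2z
      have hW3D : ∀ s ∈ Metric.ball (0:ℝ) δ, HasDerivAt W3 (W4 s) s := by
        intro s hs
        have h1 := (hcomp q3 q4 hq3D (1-β) hαabs s hs).const_mul ((1-β)^4)
        have h2 := (hcomp q3 q4 hq3D (-β) hβabs s hs).const_mul (β^4)
        have h3 := h1.sub h2
        refine HasDerivAt.congr_deriv h3 (Eq.symm ?_)
        show (1-β)^5 * q4 (x + (1-β)*s) + β^5 * q4 (x + (-β)*s) = _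
        ring
      have hW4z : ∀ s ∈ Metric.ball (0:ℝ) δ, W4 s = 0 := hlevel W3 W4 hW3D hW3z
      have h0ball : (0:ℝ) ∈ Metric.ball (0:ℝ) δ := Metric.mem_ball_self hδ
      have hx0 : x + (1-β)*(0:ℝ) = x := by ring
      have hx0' : x + (-β)*(0:ℝ) = x := by ring
      have h1β : (0:ℝ) < 1-β := by linarith
      constructor
      · have h2' : (1-β)^3 * q2 (x + (1-β)*(0:ℝ)) + β^3 * q2 (x + (-β)*(0:ℝ)) = 0 :=
          hW2z 0 h0ball
        rw [hx0, hx0'] at h2'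
        have h2'' : ((1-β)^3 + β^3) * (f2 x - (φ x) * g2 x) = 0 := by
          have hb : q2 x = f2 x - (φ x) * g2 x := rfl
          rw [hb] at h2'
          linarith
        have hpos : (0:ℝ) < (1-β)^3 + β^3 := by positivity
        rcases mul_eq_zero.mp h2'' with h' | h'
        · exact absurd h' hpos.ne'
        · linarith
      · have h4' : (1-β)^5 * q4 (x + (1-β)*(0:ℝ)) + β^5 * q4 (x + (-β)*(0:ℝ)) = 0 :=
          hW4z 0 h0ball
        rw [hx0, hx0'] at h4'
        have h4'' : ((1-β)^5 + β^5) * (f4 x - (φ x) * g4 x) = 0 := by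
          have hb : q4 x = f4 x - (φ x) * g4 x := rfl
          rw [hb] at h4'
          linarith
        have hpos : (0:ℝ) < (1-β)^5 + β^5 := by positivity
        rcases mul_eq_zero.mp h4'' with h' | h'
        · exact absurd h' hpos.ne'
        · linarith
    -- the algebraic consequences
    have hR1 : ∀ x ∈ I, φ2 x * g x + 2 * φ1 x * g1 x = 0 := by
      intro x hx
      have h1 := hf2eq x hx
      have h2 := (heven x hx).1
      linarith
    have hS1 : ∀ x ∈ I, f3 x = φ1 x * g2 x + φ x * g3 x := fun x hx =>
      congrDeriv f2 (fun y => φ y * g2 y) _ x hx (fun y hy => (heven y hy).1)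
        ((hφD x hx).mul (hg2D x hx))
    have hS2 : ∀ x ∈ I, f4 x = (φ2 x * g2 x + φ1 x * g3 x) + (φ1 x * g3 x + φ x * g4 x) :=
      fun x hx => congrDeriv f3 (fun y => φ1 y * g2 y + φ y * g3 y) _ x hx hS1
        (((hφ1D x hx).mul (hg2D x hx)).add ((hφD x hx).mul (hg3D x hx)))
    have hR3 : ∀ x ∈ I, φ2 x * g2 x + 2 * φ1 x * g3 x = 0 := by
      intro x hx
      have h1 := (heven x hx).2
      have h2 := hS2 x hx
      linarith
    have hkey : ∀ x ∈ I, φ1 x * (g3 x * g x - g1 x * g2 x) = 0 := by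
      intro x hx
      have h1 := hR1 x hx
      have h3 := hR3 x hx
      linear_combination (g x * h3 - g2 x * h1)/2
    -- g3*g - g1*g2 vanishes identically on I
    have hwr : ∀ x ∈ I, g3 x * g x - g1 x * g2 x = 0 := by
      intro x hx
      by_contra hne0
      have hc3 : ContinuousAt g3 x := (hg3D x hx).differentiableAt.continuousAt
      have hc0 : ContinuousAt g x := (hgD x hx).differentiableAt.continuousAt
      have hc1 : ContinuousAt g1 x := (hg1D x hx).differentiableAt.continuousAt
      have hc2 : ContinuousAt g2 x := (hg2D x hx).differentiableAt.continuousAt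
      have hcont : ContinuousAt (fun y => g3 y * g y - g1 y * g2 y) x :=
        (hc3.mul hc0).sub (hc1.mul hc2)
      have hboth : ∀ᶠ y in nhds x, (g3 y * g y - g1 y * g2 y ≠ 0 ∧ y ∈ I) :=
        (hcont.eventually_ne hne0).and (eventually_of_mem (hIo.mem_nhds hx) (fun y hy => hy))
      obtain ⟨ε, hε, hball⟩ := Metric.eventually_nhds_iff_ball.mp hboth
      have hφ1z : ∀ y ∈ Metric.ball x ε, φ1 y = 0 := by
        intro y hy
        obtain ⟨h1, h2⟩ := hball y hy
        rcases mul_eq_zero.mp (hkey y h2) with h' | h'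
        · exact h'
        · exact absurd h' h1
      have hballI : Metric.ball x ε ⊆ I := fun y hy => (hball y hy).2
      have hOC : (Metric.ball x ε).OrdConnected := by
        rw [Real.ball_eq_Ioo]; exact ordConnected_Ioo
      have hφconst : ∀ y ∈ Ioo (x-ε) (x+ε), φ y = φ x := by
        intro y hy
        have hy' : y ∈ Metric.ball x ε := by rw [Real.ball_eq_Ioo]; exact hy
        exact aux_const hOC (fun z hz => hφD z (hballI hz)) hφ1z hy' (Metric.mem_ball_self hε)
      have hstep1 : ∀ a ∈ I, ∀ b ∈ I, φ ((1-β)*a+β*b) = φ x → φ a = φ x → φ b = φ x := by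
        intro a ha b hb hm' ha'
        have hs := hstar a ha b hb
        rw [hm', ha'] at hs
        have h0 : (1-β)*(φ b - φ x)*g b = 0 := by rw [hs]; ring
        rcases mul_eq_zero.mp h0 with h' | h'
        · rcases mul_eq_zero.mp h' with h'' | h''
          · linarith
          · linarith
        · exact absurd h' (hg b hb)
      have hstep2 : ∀ a ∈ I, ∀ b ∈ I, φ ((1-β)*a+β*b) = φ x → φ b = φ x → φ a = φ x := by
        intro a ha b hb hm' hb'
        have hs := hstar a ha b hb
        rw [hm', hb'] at hs
        have h0 : β*(φ x - φ a)*g a = 0 := by rw [← hs]; ring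
        rcases mul_eq_zero.mp h0 with h' | h'
        · rcases mul_eq_zero.mp h' with h'' | h''
          · exact absurd h'' hβne
          · linarith
        · exact absurd h' (hg a ha)
      have hconstI := aux_prop hIc hα0 hβ0 hαβ hstep1 hstep2 (by linarith : x-ε < x+ε)
        (by rw [← Real.ball_eq_Ioo]; exact hballI) hφconst
      obtain ⟨b, hb, hneb⟩ := hnc x hx
      exact hneb (by rw [hconstI _ (hmem x hx b hb), hconstI x hx])
    -- the second-order linear ODE
    obtain ⟨x₀, hx₀⟩ := hIne
    set K := g2 x₀ / g x₀ with hK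
    have hKg : ∀ x ∈ I, g2 x = K * g x := by
      intro x hx
      have hwD : ∀ y ∈ I, HasDerivAt (fun z => g2 z / g z)
          ((g3 y * g y - g2 y * g1 y)/(g y)^2) y := fun y hy =>
        (hg2D y hy).div (hgD y hy) (hg y hy)
      have hW0 : ∀ y ∈ I, (g3 y * g y - g2 y * g1 y)/(g y)^2 = 0 := by
        intro y hy
        rw [div_eq_zero_iff]
        left
        linarith [hwr y hy]
      have h5 : g2 x / g x = g2 x₀ / g x₀ := aux_const hIc hwD hW0 hx hx₀
      rw [hK, ← h5, div_mul_cancel₀ _ (hg x hx)]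
    have hKf : ∀ x ∈ I, f2 x = K * f x := by
      intro x hx
      rw [(heven x hx).1, hKg x hx, hfφg x hx]
      ring
    obtain ⟨vg, Vg, hVgcd, hVgD, hgeq⟩ := aux_solve hIc hgD
      (fun y hy => by have h := hg1D y hy; rwa [hKg y hy] at h) hx₀
    obtain ⟨vf, Vf, hVfcd, hVfD, hfeq2⟩ := aux_solve hIc hfD
      (fun y hy => by have h := hf1D y hy; rwa [hKf y hy] at h) hx₀
    constructor
    · have hFV : ∀ y ∈ I, HasDerivAt (fun z => F z - Vf z) (f y - vf y) y :=
        fun y hy => (hF y (hIJ hy)).sub (hVfD y)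
      have hFV0 : ∀ y ∈ I, f y - vf y = 0 := fun y hy => by rw [hfeq2 hy]; ring
      have hVcd : ContDiff ℝ (⊤ : ℕ∞) (fun z => Vf z + (F x₀ - Vf x₀)) := hVfcd.add contDiff_const
      apply hVcd.contDiffOn.congr
      intro y hy
      have h6 : F y - Vf y = F x₀ - Vf x₀ := aux_const hIc hFV hFV0 hy hx₀
      show F y = Vf y + (F x₀ - Vf x₀)
      linarith
    · have hGV : ∀ y ∈ I, HasDerivAt (fun z => G z - Vg z) (g y - vg y) y :=
        fun y hy => (hG y (hIJ hy)).sub (hVgD y)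
      have hGV0 : ∀ y ∈ I, g y - vg y = 0 := fun y hy => by rw [hgeq hy]; ring
      have hVcd : ContDiff ℝ (⊤ : ℕ∞) (fun z => Vg z + (G x₀ - Vg x₀)) := hVgcd.add contDiff_const
      apply hVcd.contDiffOn.congr
      intro y hy
      have h6 : G y - Vg y = G x₀ - Vg x₀ := aux_const hIc hGV hGV0 hy hx₀
      show G y = Vg y + (G x₀ - Vg x₀)
      linarith
end

section
/- Under Setting 2.1, if {1, F, G} are linearly independent on I (g nonvanishing on I), then v = f/g is differentiable on I. -/
/-!
Fix `x₀ ∈ I`. Since `g x₀ ≠ 0`, `G` is not symmetric about `x₀` in the weighted sense: there are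
`a, b ∈ J` with `α a + β b = x₀` and `G a ≠ G b`. Freezing `b` and letting `a` move with
`x = α a + β b`, the functional equation expresses `f x / g x` near `x₀` as
`(F b - F a) / (G b - G a)` with `a = (x - β b) / α`, a quotient of differentiable functions with
nonvanishing denominator.
-/
open Filter Topology

/-- Along the line `t ↦ (x₀ - β t, x₀ + α t)` of pairs with weighted mean `x₀`, the difference
`G (x₀ + α t) - G (x₀ - β t)` has derivative `(α + β) G'(x₀) ≠ 0` at `t = 0`. -/
lemma HasDerivAt.exists_combination_eq_and_apply_ne {G : ℝ → ℝ} {J : Set ℝ} {g₀ x₀ α β : ℝ}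
    (hG : HasDerivAt G g₀ x₀) (hJ : J ∈ 𝓝 x₀) (hg₀ : g₀ ≠ 0) (hαβ : α + β = 1) :
    ∃ a ∈ J, ∃ b ∈ J, α * a + β * b = x₀ ∧ G a ≠ G b := by
  have hb : HasDerivAt (fun t : ℝ => x₀ + α * t) α 0 := by
    simpa using ((hasDerivAt_id (0:ℝ)).const_mul α).const_add x₀
  have ha : HasDerivAt (fun t : ℝ => x₀ - β * t) (-β) 0 := by
    simpa using ((hasDerivAt_id (0:ℝ)).const_mul β).const_sub x₀
  have hdiff : HasDerivAt (fun t => G (x₀ + α * t) - G (x₀ - β * t)) g₀ 0 := by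
    have h := (hG.comp_of_eq 0 hb (by simp)).sub (hG.comp_of_eq 0 ha (by simp))
    rwa [show g₀ * α - g₀ * -β = g₀ by linear_combination g₀ * hαβ] at h
  have hmem : ∀ᶠ t in 𝓝 (0:ℝ), x₀ - β * t ∈ J ∧ x₀ + α * t ∈ J := by
    refine (ha.continuousAt.eventually_mem ?_).and (hb.continuousAt.eventually_mem ?_) <;>
      simpa using hJ
  obtain ⟨t, hne, ha, hb⟩ := ((hdiff.eventually_ne hg₀ (c := 0)).and
    (nhdsWithin_le_nhds hmem)).exists
  exact ⟨_, ha, _, hb, by linear_combination x₀ * hαβ, fun h => hne (by rw [h, sub_self])⟩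

section Quotient

variable {F G f g : ℝ → ℝ} {α β a b x₀ : ℝ}

lemma eventually_div_eq_quotient (hα : α ≠ 0) (hab : α * a + β * b = x₀)
    (hGa : ContinuousAt G a) (hGab : G a ≠ G b)
    (heq : ∀ᶠ a' in 𝓝 a,
      (F b - F a') * g (α * a' + β * b) = (G b - G a') * f (α * a' + β * b)) :
    ∀ᶠ x in 𝓝 x₀, g x ≠ 0 →
      f x / g x = (F b - F ((x - β * b) / α)) / (G b - G ((x - β * b) / α)) := by
  have hA : Tendsto (fun x => (x - β * b) / α) (𝓝 x₀) (𝓝 a) := by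
    have h : ContinuousAt (fun x => (x - β * b) / α) x₀ := by fun_prop
    subst hab
    rwa [ContinuousAt, add_sub_cancel_right, mul_div_cancel_left₀ _ hα] at h
  have hden : ∀ᶠ a' in 𝓝 a, G b - G a' ≠ 0 :=
    (continuousAt_const.sub hGa).eventually_ne (sub_ne_zero.2 hGab.symm)
  filter_upwards [hA.eventually (heq.and hden)] with x ⟨hx, hden⟩ hgx
  rw [mul_div_cancel₀ _ hα, sub_add_cancel] at hx
  rw [div_eq_div_iff hgx hden]
  linarith

lemma differentiableAt_quotient (hα : α ≠ 0) (hab : α * a + β * b = x₀)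
    (hF : DifferentiableAt ℝ F a) (hG : DifferentiableAt ℝ G a) (hGab : G a ≠ G b) :
    DifferentiableAt ℝ
      (fun x => (F b - F ((x - β * b) / α)) / (G b - G ((x - β * b) / α))) x₀ := by
  have hA : DifferentiableAt ℝ (fun x => (x - β * b) / α) x₀ := by fun_prop
  rw [show a = (x₀ - β * b) / α by rw [← hab, add_sub_cancel_right, mul_div_cancel_left₀ _ hα]]
    at hF hG hGab
  exact ((differentiableAt_const _).sub (hF.comp x₀ hA)).div
    ((differentiableAt_const _).sub (hG.comp x₀ hA)) (sub_ne_zero.2 hGab.symm)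

end Quotient

theorem stmt_5_general (J I : Set ℝ) (hJo : IsOpen J)
    (α β : ℝ) (hα : α ∈ Set.Ioo (0:ℝ) 1) (hαβ : α + β = 1)
    (F G f g : ℝ → ℝ)
    (hF : ∀ x ∈ J, HasDerivAt F (f x) x) (hG : ∀ x ∈ J, HasDerivAt G (g x) x)
    (heq : ∀ a ∈ J, ∀ b ∈ J,
      (F b - F a) * g (α * a + β * b) = (G b - G a) * f (α * a + β * b))
    (hIJ : I ⊆ J)
    (hg : ∀ x ∈ I, g x ≠ 0) :
    DifferentiableOn ℝ (fun x => f x / g x) I := by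
  intro x₀ hx₀
  have hx₀J := hIJ hx₀
  obtain ⟨a, ha, b, hb, hab, hGab⟩ :=
    (hG x₀ hx₀J).exists_combination_eq_and_apply_ne (hJo.mem_nhds hx₀J) (hg x₀ hx₀) hαβ
  have hloc := eventually_div_eq_quotient hα.1.ne' hab (hG a ha).continuousAt hGab
    (eventually_of_mem (hJo.mem_nhds ha) fun a' ha' => heq a' ha' b hb)
  refine (differentiableAt_quotient hα.1.ne' hab (hF a ha).differentiableAt
    (hG a ha).differentiableAt hGab).differentiableWithinAt.congr_of_eventuallyEq ?_
    (hloc.self_of_nhds (hg x₀ hx₀))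
  filter_upwards [nhdsWithin_le_nhds hloc, self_mem_nhdsWithin] with x hx hxI
  exact hx (hg x hxI)

/-- Differentiability of v = f/g on I under linear independence of {1, F, G}. -/
theorem stmt_5 (J I : Set ℝ) (hJo : IsOpen J) (hJc : J.OrdConnected) (hJne : J.Nonempty)
    (α β : ℝ) (hα : α ∈ Set.Ioo (0:ℝ) 1) (hβ : β ∈ Set.Ioo (0:ℝ) 1) (hαβ : α + β = 1)
    (F G f g : ℝ → ℝ)
    (hF : ∀ x ∈ J, HasDerivAt F (f x) x) (hG : ∀ x ∈ J, HasDerivAt G (g x) x)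
    (heq : ∀ a ∈ J, ∀ b ∈ J,
      (F b - F a) * g (α * a + β * b) = (G b - G a) * f (α * a + β * b))
    (hIJ : I ⊆ J) (hIo : IsOpen I) (hIne : I.Nonempty) (hIc : I.OrdConnected)
    (hg : ∀ x ∈ I, g x ≠ 0)
    (hindep : ¬ ∃ c₁ c₂ c₃ : ℝ, (c₁, c₂, c₃) ≠ (0, 0, 0) ∧
        ∀ x ∈ I, c₁ * F x + c₂ * G x + c₃ = 0) :
    DifferentiableOn ℝ (fun x => f x / g x) I :=
  stmt_5_general J I hJo α β hα hαβ F G f g hF hG heq hIJ hg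
end

section
/- Let J be a semi-infinite open interval (inf J = −∞ or sup J = +∞) and let F, G : J → ℝ be differentiable with derivatives f, g satisfying [F(b)−F(a)]g(αa+βb) = [G(b)−G(a)]f(αa+βb) for all a, b ∈ J, where α, β ∈ (0,1), α+β=1. Let U_f = {x ∈ J : f(x) ≠ 0} and U_g = {x ∈ J : g(x) ≠ 0}. If U_g ≠ ∅ and U_f ∩ U_g = ∅, then U_f = ∅, i.e. f ≡ 0 on J and F is constant. -/
/-!
By the reflection `x ↦ -x`, which swaps `α` and `β`, we may assume that `J` is unbounded above.
Put `r = α / β` and `mirror r c a = c + r (c - a)`, so that `α a + β (mirror r c a) = c`. At a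
point `c` with `f c ≠ 0`, hence `g c = 0`, the equation gives `G (mirror r c a) = G a` for
`a ≤ c`, and differentiating gives `g a = -r g (mirror r c a)`; symmetrically for `f` about
points where `g ≠ 0`. By Darboux's theorem the points of `U_f` accumulate from the right at each
`c ∈ U_f`, and the reflections of `G` about two such points compose to a translation by an
arbitrarily small amount, so `g = 0` on `(c, mirror r c x)` for every `x ∈ J`. But reflecting a
point of `U_g` about two points of `U_f` further to the right lands in such an interval.
-/

open Set Filter Topology Pointwise

def CauchyMeanValueEq (J : Set ℝ) (α β : ℝ) (F G f g : ℝ → ℝ) : Prop :=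
  ∀ a ∈ J, ∀ b ∈ J, (F b - F a) * g (α * a + β * b) = (G b - G a) * f (α * a + β * b)

def mirror (r c a : ℝ) : ℝ := c + r * (c - a)

section Mirror

variable {r c : ℝ}

@[simp]
lemma mirror_self : mirror r c c = c := by simp [mirror]

lemma mirror_strictAnti (hr : 0 < r) : StrictAnti (mirror r c) :=
  fun _ _ h => by unfold mirror; nlinarith

lemma mirror_inv_mirror (hr : r ≠ 0) (a : ℝ) : mirror r⁻¹ c (mirror r c a) = a := by
  unfold mirror; field_simp; ring

lemma mirror_sub_mirror (c' a : ℝ) : mirror r c' a - mirror r c a = (1 + r) * (c' - c) := by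
  unfold mirror; ring

lemma hasDerivAt_mirror (r c a : ℝ) : HasDerivAt (mirror r c) (-r) a := by
  unfold mirror
  simpa using (((hasDerivAt_id a).const_sub c).const_mul r).const_add c

lemma weighted_mean_mirror {α β : ℝ} (hβ : β ≠ 0) (hαβ : α + β = 1) (c a : ℝ) :
    α * a + β * mirror (α / β) c a = c := by
  unfold mirror; field_simp; linear_combination c * hαβ

end Mirror

lemma HasDerivAt.eq_zero_of_frequently_eq {G : ℝ → ℝ} {g' x : ℝ} (hG : HasDerivAt G g' x)
    (h : ∃ᶠ t in 𝓝[>] 0, G (x + t) = G x) : g' = 0 :=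
  tendsto_nhds_unique_of_frequently_eq hG.tendsto_slope_zero_right tendsto_const_nhds
    (h.mono fun t ht => by simp [ht])

lemma frequently_ne_zero_nhdsGT_of_hasDerivAt {F f : ℝ → ℝ} {c : ℝ}
    (hF : ∀ x ∈ Ici c, HasDerivAt F (f x) x) (hfc : f c ≠ 0) : ∃ᶠ x in 𝓝[>] c, f x ≠ 0 := by
  refine (nhdsGT_basis c).frequently_iff.2 fun d hcd => ?_
  by_contra! hzero
  -- otherwise `f` would jump from `f c` to `0` on `[c, e]` without taking the value `f c / 2`
  obtain ⟨e, hce, hed⟩ := exists_between hcd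
  have hIoc : Ioc c e ⊆ Ioo c d := fun x hx => ⟨hx.1, hx.2.trans_lt hed⟩
  have himage : f c / 2 ∈ f '' Icc c e := by
    refine ordConnected_Icc.image_hasDerivWithinAt
      (fun x hx => (hF x hx.1).hasDerivWithinAt) |>.uIcc_subset
      ⟨c, left_mem_Icc.2 hce.le, rfl⟩ ⟨e, right_mem_Icc.2 hce.le, rfl⟩ ?_
    rw [hzero e (hIoc ⟨hce, le_rfl⟩), mem_uIcc]
    rcases hfc.lt_or_gt with h | h
    · exact Or.inl ⟨by linarith, by linarith⟩
    · exact Or.inr ⟨by linarith, by linarith⟩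
  obtain ⟨x, hx, hfx⟩ := himage
  rcases hx.1.eq_or_lt with rfl | hcx
  · exact hfc (by linarith)
  · exact hfc (by linarith [hzero x (hIoc ⟨hcx, hx.2⟩)])

namespace CauchyMeanValueEq

variable {J : Set ℝ} {α β : ℝ} {F G f g : ℝ → ℝ}

lemma symm (h : CauchyMeanValueEq J α β F G f g) : CauchyMeanValueEq J α β G F g f :=
  fun a ha b hb => (h a ha b hb).symm

lemma comp_neg (h : CauchyMeanValueEq J α β F G f g) :
    CauchyMeanValueEq (-J) β α (fun x => F (-x)) (fun x => G (-x)) (fun x => -f (-x))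
      (fun x => -g (-x)) := by
  intro a ha b hb
  have hab := h (-b) hb (-a) ha
  rw [show α * -b + β * -a = -(β * a + α * b) by ring] at hab
  linear_combination hab

lemma comp_mirror_eq (h : CauchyMeanValueEq J α β F G f g) (hβ : β ≠ 0) (hαβ : α + β = 1)
    {c a : ℝ} (hgc : g c = 0) (hfc : f c ≠ 0) (ha : a ∈ J) (hb : mirror (α / β) c a ∈ J) :
    G (mirror (α / β) c a) = G a := by
  have hab := h a ha _ hb
  rw [weighted_mean_mirror hβ hαβ, hgc, mul_zero, eq_comm, mul_eq_zero, sub_eq_zero] at hab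
  exact hab.resolve_right hfc

lemma deriv_eq_neg_mul_deriv_mirror (h : CauchyMeanValueEq J α β F G f g) (hJo : IsOpen J)
    (hJ : ∀ t ∈ J, Ici t ⊆ J) (hα : 0 < α) (hβ : 0 < β) (hαβ : α + β = 1)
    (hG : ∀ x ∈ J, HasDerivAt G (g x) x) {c a : ℝ} (hc : c ∈ J) (hgc : g c = 0) (hfc : f c ≠ 0)
    (ha : a ∈ J) (hac : a < c) : g a = -(α / β) * g (mirror (α / β) c a) := by
  have hr : 0 < α / β := div_pos hα hβ
  have hmem : ∀ x ≤ c, mirror (α / β) c x ∈ J := fun x hx =>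
    hJ c hc (by simpa using (mirror_strictAnti hr (c := c)).antitone hx)
  have hcomp : G ∘ mirror (α / β) c =ᶠ[𝓝 a] G := by
    filter_upwards [(hJo.inter isOpen_Iio).mem_nhds ⟨ha, hac⟩] with x hx
    exact h.comp_mirror_eq hβ.ne' hαβ hgc hfc hx.1 (hmem x hx.2.le)
  have hderiv := ((hG _ (hmem a hac.le)).comp a (hasDerivAt_mirror _ c a)).congr_of_eventuallyEq
    hcomp.symm
  rw [(hG a ha).unique hderiv]
  ring

lemma deriv_eq_zero_of_mem_Ioo_mirror (h : CauchyMeanValueEq J α β F G f g)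
    (hJ : ∀ t ∈ J, Ici t ⊆ J) (hα : 0 < α) (hβ : 0 < β) (hαβ : α + β = 1)
    (hF : ∀ x ∈ J, HasDerivAt F (f x) x) (hG : ∀ x ∈ J, HasDerivAt G (g x) x)
    (hd : ∀ x ∈ J, f x = 0 ∨ g x = 0) {c x P : ℝ} (hc : c ∈ J) (hfc : f c ≠ 0) (hx : x ∈ J)
    (hP : P ∈ Ioo c (mirror (α / β) c x)) : g P = 0 := by
  set r := α / β
  have hr : 0 < r := div_pos hα hβ
  set a := mirror r⁻¹ c P
  have hPa : mirror r c a = P := by simpa using mirror_inv_mirror (inv_ne_zero hr.ne') P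
  have hac : a < c := by simpa using (mirror_strictAnti (inv_pos.2 hr) (c := c)) hP.1
  have hxa : x < a := by
    simpa [mirror_inv_mirror hr.ne'] using (mirror_strictAnti (inv_pos.2 hr) (c := c)) hP.2
  have haJ : a ∈ J := hJ x hx hxa.le
  have hmem : ∀ b ∈ J, a ≤ b → mirror r b a ∈ J := fun b hb hab =>
    hJ b hb (by simpa using (mirror_strictAnti hr (c := b)).antitone hab)
  -- the reflections of `G` about `c` and `c'` compose to the translation by `(1 + r) * (c' - c)`
  have hperiod : ∀ c' ∈ Ioi c, f c' ≠ 0 → G (P + (1 + r) * (c' - c)) = G P := by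
    intro c' hcc' hfc'
    have hc' : c' ∈ J := hJ c hc (mem_Ici.2 (le_of_lt hcc'))
    have hgc' : g c' = 0 := (hd c' hc').resolve_left hfc'
    have hgc : g c = 0 := (hd c hc).resolve_left hfc
    calc G (P + (1 + r) * (c' - c)) = G (mirror r c' a) := by
          rw [← mirror_sub_mirror, hPa, add_sub_cancel]
      _ = G a := h.comp_mirror_eq hβ.ne' hαβ hgc' hfc' haJ (hmem c' hc' (hac.trans hcc').le)
      _ = G P := by rw [← hPa, h.comp_mirror_eq hβ.ne' hαβ hgc hfc haJ (hmem c hc hac.le)]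
  have hτ : Tendsto (fun c' => (1 + r) * (c' - c)) (𝓝[>] c) (𝓝[>] 0) := by
    refine tendsto_nhdsWithin_of_tendsto_nhds_of_eventually_within _ ?_ ?_
    · exact (Continuous.tendsto' (by fun_prop) c (0 : ℝ) (by simp)).mono_left nhdsWithin_le_nhds
    · filter_upwards [self_mem_nhdsWithin] with c' hc'
      exact mem_Ioi.2 (mul_pos (by positivity) (sub_pos.2 hc'))
  have hfreq := frequently_ne_zero_nhdsGT_of_hasDerivAt (fun y hy => hF y (hJ c hc hy)) hfc
  exact (hG P (hJ c hc hP.1.le)).eq_zero_of_frequently_eq <| hτ.frequently <|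
    hfreq.mp <| eventually_mem_nhdsWithin.mono fun c' hc' hfc' => hperiod c' hc' hfc'

lemma exists_gt_deriv_ne_zero (h : CauchyMeanValueEq J α β F G f g) (hJo : IsOpen J)
    (hJ : ∀ t ∈ J, Ici t ⊆ J) (hα : 0 < α) (hβ : 0 < β) (hαβ : α + β = 1)
    (hF : ∀ x ∈ J, HasDerivAt F (f x) x) (hd : ∀ x ∈ J, f x = 0 ∨ g x = 0)
    {p q : ℝ} (hp : p ∈ J) (hgp : g p ≠ 0) (hq : q ∈ J) (hfq : f q ≠ 0) :
    ∃ q' ∈ J, f q' ≠ 0 ∧ p < q' := by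
  rcases lt_trichotomy p q with hpq | rfl | hqp
  · exact ⟨q, hq, hfq, hpq⟩
  · exact ((hd p hp).elim hfq hgp).elim
  · have hr : 0 < α / β := div_pos hα hβ
    have hfq' := h.symm.deriv_eq_neg_mul_deriv_mirror hJo hJ hα hβ hαβ hF hp
      ((hd p hp).resolve_right hgp) hgp hq hqp
    refine ⟨mirror (α / β) p q, hJ p hp ?_, ?_, ?_⟩
    · simpa using (mirror_strictAnti hr (c := p)).antitone hqp.le
    · exact right_ne_zero_of_mul (hfq' ▸ hfq)
    · simpa using (mirror_strictAnti hr (c := p)) hqp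

theorem deriv_eq_zero_of_forall_Ici_subset (h : CauchyMeanValueEq J α β F G f g) (hJo : IsOpen J)
    (hJ : ∀ t ∈ J, Ici t ⊆ J) (hα : 0 < α) (hβ : 0 < β) (hαβ : α + β = 1)
    (hF : ∀ x ∈ J, HasDerivAt F (f x) x) (hG : ∀ x ∈ J, HasDerivAt G (g x) x)
    (hd : ∀ x ∈ J, f x = 0 ∨ g x = 0) (hg : ∃ p ∈ J, g p ≠ 0) : ∀ x ∈ J, f x = 0 := by
  obtain ⟨p, hp, hgp⟩ := hg
  intro q hq
  by_contra hfq
  set r := α / β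
  have hr : 0 < r := div_pos hα hβ
  -- `p < c₁ < p₁ < c₂` with `p₁ = mirror r c₁ p`; then `mirror r c₂ p₁` lies in the interval
  -- `(c₂, mirror r c₂ p)` where `g` vanishes, yet `g` is nonzero there by reflection
  obtain ⟨c₁, hc₁, hfc₁, hpc₁⟩ := h.exists_gt_deriv_ne_zero hJo hJ hα hβ hαβ hF hd hp hgp hq hfq
  have hgc₁ : g c₁ = 0 := (hd c₁ hc₁).resolve_left hfc₁
  have hgp₁ : g (mirror r c₁ p) ≠ 0 := right_ne_zero_of_mul <|
    h.deriv_eq_neg_mul_deriv_mirror hJo hJ hα hβ hαβ hG hc₁ hgc₁ hfc₁ hp hpc₁ ▸ hgp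
  have hc₁p₁ : c₁ < mirror r c₁ p := by simpa using (mirror_strictAnti hr (c := c₁)) hpc₁
  have hp₁ : mirror r c₁ p ∈ J := hJ c₁ hc₁ hc₁p₁.le
  obtain ⟨c₂, hc₂, hfc₂, hp₁c₂⟩ :=
    h.exists_gt_deriv_ne_zero hJo hJ hα hβ hαβ hF hd hp₁ hgp₁ hq hfq
  have hgc₂ : g c₂ = 0 := (hd c₂ hc₂).resolve_left hfc₂
  have hgP : g (mirror r c₂ (mirror r c₁ p)) ≠ 0 := right_ne_zero_of_mul <|
    h.deriv_eq_neg_mul_deriv_mirror hJo hJ hα hβ hαβ hG hc₂ hgc₂ hfc₂ hp₁ hp₁c₂ ▸ hgp₁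
  refine hgP (h.deriv_eq_zero_of_mem_Ioo_mirror hJ hα hβ hαβ hF hG hd hc₂ hfc₂ hp ⟨?_, ?_⟩)
  · simpa using (mirror_strictAnti hr (c := c₂)) hp₁c₂
  · exact mirror_strictAnti hr (hpc₁.trans hc₁p₁)

end CauchyMeanValueEq

lemma Set.OrdConnected.Ici_subset_of_not_bddAbove {J : Set ℝ} (hJ : J.OrdConnected)
    (h : ¬BddAbove J) {t : ℝ} (ht : t ∈ J) : Ici t ⊆ J := fun u hu => by
  obtain ⟨w, hw, huw⟩ := not_bddAbove_iff.1 h u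
  exact hJ.out ht hw ⟨hu, huw.le⟩

lemma Set.OrdConnected.Ici_subset_neg_of_not_bddBelow {J : Set ℝ} (hJ : J.OrdConnected)
    (h : ¬BddBelow J) {t : ℝ} (ht : t ∈ -J) : Ici t ⊆ -J := fun u hu => by
  obtain ⟨w, hw, hwu⟩ := not_bddBelow_iff.1 h (-u)
  exact hJ.out hw ht ⟨hwu.le, neg_le_neg hu⟩

theorem stmt_6_general (J : Set ℝ) (hJo : IsOpen J) (hJc : J.OrdConnected)
    (hJinf : ¬ BddBelow J ∨ ¬ BddAbove J)
    (α β : ℝ) (hα : α ∈ Set.Ioo (0:ℝ) 1) (hβ : β ∈ Set.Ioo (0:ℝ) 1) (hαβ : α + β = 1)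
    (F G f g : ℝ → ℝ)
    (hF : ∀ x ∈ J, HasDerivAt F (f x) x) (hG : ∀ x ∈ J, HasDerivAt G (g x) x)
    (heq : ∀ a ∈ J, ∀ b ∈ J,
      (F b - F a) * g (α * a + β * b) = (G b - G a) * f (α * a + β * b))
    (hUg : {x ∈ J | g x ≠ 0}.Nonempty)
    (hdisj : {x ∈ J | f x ≠ 0} ∩ {x ∈ J | g x ≠ 0} = ∅) :
    (∀ x ∈ J, f x = 0) ∧ ∃ c : ℝ, ∀ x ∈ J, F x = c := by
  have h : CauchyMeanValueEq J α β F G f g := heq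
  have hd : ∀ x ∈ J, f x = 0 ∨ g x = 0 := fun x hx => by
    by_contra! hfg
    exact eq_empty_iff_forall_notMem.1 hdisj x ⟨⟨hx, hfg.1⟩, hx, hfg.2⟩
  have hf : ∀ x ∈ J, f x = 0 := by
    obtain ⟨p, hp, hgp⟩ := hUg
    rcases hJinf with hbelow | habove
    · have hf' := h.comp_neg.deriv_eq_zero_of_forall_Ici_subset hJo.neg
        (fun t => hJc.Ici_subset_neg_of_not_bddBelow hbelow) hβ.1 hα.1 (by linarith)
        (fun y hy => by simpa [Function.comp_def] using (hF (-y) hy).comp y (hasDerivAt_neg y))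
        (fun y hy => by simpa [Function.comp_def] using (hG (-y) hy).comp y (hasDerivAt_neg y))
        (fun y hy => by simpa using hd (-y) hy) ⟨-p, by simpa using hp, by simpa using hgp⟩
      exact fun x hx => by simpa using hf' (-x) (by simpa using hx)
    · exact h.deriv_eq_zero_of_forall_Ici_subset hJo
        (fun t => hJc.Ici_subset_of_not_bddAbove habove) hα.1 hβ.1 hαβ hF hG hd ⟨p, hp, hgp⟩
  exact ⟨hf, hJo.exists_is_const_of_deriv_eq_zero hJc.isPreconnected
    (fun x hx => (hF x hx).differentiableAt.differentiableWithinAt)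
    (fun x hx => (hF x hx).deriv.trans (hf x hx))⟩

/-- Proposition 3.1 -/
theorem stmt_6 (J : Set ℝ) (hJo : IsOpen J) (hJc : J.OrdConnected) (hJne : J.Nonempty)
    (hJinf : ¬ BddBelow J ∨ ¬ BddAbove J)
    (α β : ℝ) (hα : α ∈ Set.Ioo (0:ℝ) 1) (hβ : β ∈ Set.Ioo (0:ℝ) 1) (hαβ : α + β = 1)
    (F G f g : ℝ → ℝ)
    (hF : ∀ x ∈ J, HasDerivAt F (f x) x) (hG : ∀ x ∈ J, HasDerivAt G (g x) x)
    (heq : ∀ a ∈ J, ∀ b ∈ J,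
      (F b - F a) * g (α * a + β * b) = (G b - G a) * f (α * a + β * b))
    (hUg : {x ∈ J | g x ≠ 0}.Nonempty)
    (hdisj : {x ∈ J | f x ≠ 0} ∩ {x ∈ J | g x ≠ 0} = ∅) :
    (∀ x ∈ J, f x = 0) ∧ ∃ c : ℝ, ∀ x ∈ J, F x = c :=
  stmt_6_general J hJo hJc hJinf α β hα hβ hαβ F G f g hF hG heq hUg hdisj
end

section
/- There exist differentiable functions F, G on J = (0,1) satisfying [F(b)−F(a)]G'((a+b)/2) = [G(b)−G(a)]F'((a+b)/2) for all a, b ∈ (0,1), such that the sets U_g = {G' ≠ 0} and U_f = {F' ≠ 0} are both nonempty yet disjoint. Concretely, F(x) = c₁ for x ∈ (0, 4/5] and F(x) = (x − 4/5)² + c₁ for x ∈ (4/5, 1), and G(x) = (x − 2/5)² + c₂ for x ∈ (0, 2/5) and G(x) = c₂ for x ∈ [2/5, 1), satisfy these properties. -/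
open Set

theorem hasDerivAt_ite_le {f g f' g' : ℝ → ℝ} {a : ℝ}
    (hf : ∀ x, HasDerivAt f (f' x) x) (hg : ∀ x, HasDerivAt g (g' x) x)
    (hfg : f a = g a) (hfg' : f' a = g' a) (x : ℝ) :
    HasDerivAt (fun y => if y ≤ a then f y else g y) (if x ≤ a then f' x else g' x) x := by
  rcases lt_trichotomy x a with hxa | rfl | hax
  · rw [if_pos hxa.le]
    refine (hf x).congr_of_eventuallyEq ?_
    filter_upwards [Iio_mem_nhds hxa] with y hy
    rw [if_pos (le_of_lt hy)]
  · rw [if_pos le_rfl, ← hasDerivWithinAt_univ, ← Iic_union_Ici]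
    refine HasDerivWithinAt.union ?_ ?_
    · exact (hf x).hasDerivWithinAt.congr (fun y hy => if_pos hy) (if_pos le_rfl)
    · rw [hfg']
      refine (hg x).hasDerivWithinAt.congr (fun y (hy : x ≤ y) => ?_) (by rw [if_pos le_rfl, hfg])
      rcases hy.lt_or_eq with hy | rfl
      · exact if_neg hy.not_ge
      · rw [if_pos le_rfl, hfg]
  · rw [if_neg hax.not_ge]
    refine (hg x).congr_of_eventuallyEq ?_
    filter_upwards [Ioi_mem_nhds hax] with y hy
    rw [if_neg (not_le.2 hy)]

theorem hasDerivAt_ite_lt {f g f' g' : ℝ → ℝ} {a : ℝ}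
    (hf : ∀ x, HasDerivAt f (f' x) x) (hg : ∀ x, HasDerivAt g (g' x) x)
    (hfg : f a = g a) (hfg' : f' a = g' a) (x : ℝ) :
    HasDerivAt (fun y => if y < a then f y else g y) (if x < a then f' x else g' x) x := by
  have ite_lt_eq_ite_le {u v : ℝ → ℝ} (huv : u a = v a) (y : ℝ) :
      (if y < a then u y else v y) = if y ≤ a then u y else v y := by
    rcases lt_trichotomy y a with h | rfl | h
    · rw [if_pos h, if_pos h.le]
    · rw [if_neg (lt_irrefl y), if_pos le_rfl, huv]
    · rw [if_neg h.not_gt, if_neg h.not_ge]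
  rw [funext (ite_lt_eq_ite_le hfg), ite_lt_eq_ite_le hfg']
  exact hasDerivAt_ite_le hf hg hfg hfg' x

theorem hasDerivAt_sub_sq_add_const (a c x : ℝ) :
    HasDerivAt (fun y => (y - a) ^ 2 + c) (2 * (x - a)) x := by
  simpa using (((hasDerivAt_id x).sub_const a).pow 2).add_const c

/-- For `a b ∈ (0, 1)`, the bounds `2 * q ≤ p` and `q ≤ 2 * p - 1` put both points on the flat part
of `F` when their midpoint is left of `q`, and on that of `G` when it is right of `p`. -/
theorem sub_mul_midpoint_eq_of_flat {F G F' G' : ℝ → ℝ} {p q : ℝ}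
    (hqp : 2 * q ≤ p) (hpq : q ≤ 2 * p - 1)
    (hF : ∀ x ≤ p, F x = F p) (hG : ∀ x, q ≤ x → G x = G q)
    (hF' : ∀ x ≤ p, F' x = 0) (hG' : ∀ x, q ≤ x → G' x = 0)
    {a b : ℝ} (ha : a ∈ Ioo 0 1) (hb : b ∈ Ioo 0 1) :
    (F b - F a) * G' ((a + b) / 2) = (G b - G a) * F' ((a + b) / 2) := by
  obtain ⟨ha₀, ha₁⟩ := ha
  obtain ⟨hb₀, hb₁⟩ := hb
  by_cases hmp : (a + b) / 2 ≤ p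
  · rw [hF' _ hmp, mul_zero]
    by_cases hqm : q ≤ (a + b) / 2
    · rw [hG' _ hqm, mul_zero]
    · rw [hF a (by linarith), hF b (by linarith), sub_self, zero_mul]
  · rw [hG' _ (by linarith), hG a (by linarith), hG b (by linarith), sub_self, zero_mul,
      mul_zero]

/-- Example 3.2 -/
theorem stmt_7 (c₁ c₂ : ℝ) :
    let F : ℝ → ℝ := fun x => if x ≤ 4/5 then c₁ else (x - 4/5)^2 + c₁
    let G : ℝ → ℝ := fun x => if x < 2/5 then (x - 2/5)^2 + c₂ else c₂
    (∀ x ∈ Set.Ioo (0:ℝ) 1, DifferentiableAt ℝ F x ∧ DifferentiableAt ℝ G x) ∧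
    (∀ a ∈ Set.Ioo (0:ℝ) 1, ∀ b ∈ Set.Ioo (0:ℝ) 1,
      (F b - F a) * deriv G ((a + b) / 2) = (G b - G a) * deriv F ((a + b) / 2)) ∧
    {x ∈ Set.Ioo (0:ℝ) 1 | deriv F x ≠ 0}.Nonempty ∧
    {x ∈ Set.Ioo (0:ℝ) 1 | deriv G x ≠ 0}.Nonempty ∧
    {x ∈ Set.Ioo (0:ℝ) 1 | deriv F x ≠ 0} ∩ {x ∈ Set.Ioo (0:ℝ) 1 | deriv G x ≠ 0} = ∅ := by
  intro F G
  have hF (x : ℝ) : HasDerivAt F (if x ≤ 4/5 then 0 else 2 * (x - 4/5)) x :=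
    hasDerivAt_ite_le (fun _ => hasDerivAt_const _ c₁) (hasDerivAt_sub_sq_add_const _ c₁)
      (by norm_num) (by norm_num) x
  have hG (x : ℝ) : HasDerivAt G (if x < 2/5 then 2 * (x - 2/5) else 0) x :=
    hasDerivAt_ite_lt (hasDerivAt_sub_sq_add_const _ c₂) (fun _ => hasDerivAt_const _ c₂)
      (by norm_num) (by norm_num) x
  have hF' (x : ℝ) (hx : x ≤ 4/5) : deriv F x = 0 := by rw [(hF x).deriv, if_pos hx]
  have hG' (x : ℝ) (hx : 2/5 ≤ x) : deriv G x = 0 := by rw [(hG x).deriv, if_neg hx.not_gt]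
  refine ⟨fun x _ => ⟨(hF x).differentiableAt, (hG x).differentiableAt⟩,
    fun a ha b hb => sub_mul_midpoint_eq_of_flat (by norm_num) (by norm_num)
      (fun x hx => ?_) (fun x hx => ?_) hF' hG' ha hb,
    ⟨9/10, by norm_num, by rw [(hF _).deriv]; norm_num⟩,
    ⟨1/5, by norm_num, by rw [(hG _).deriv]; norm_num⟩, ?_⟩
  · simp only [F, if_pos hx, le_refl, if_true]
  · simp only [G, if_neg hx.not_gt, lt_irrefl, if_false]
  · refine eq_empty_of_forall_notMem fun x ⟨⟨_, hFx⟩, _, hGx⟩ => ?_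
    by_cases hx : x ≤ 4/5
    · exact hFx (hF' x hx)
    · exact hGx (hG' x (by linarith))
end

section
/- Let α ∈ (0,1) with α ≠ 1/2, β = 1−α, J ⊆ ℝ an open interval, and (F, G) a pair of differentiable functions on J satisfying [F(b)−F(a)]G'(αa+βb) = [G(b)−G(a)]F'(αa+βb) for all a, b ∈ J. If I = (p,q) ⊆ J is an interval on which G' does not vanish, then {1, F, G} are linearly dependent on I. -/
/-!
Put `φ = F' / G'`. The equation reads `F b - F a = φ (α a + β b) * (G b - G a)`, and `G` is
injective on `I` by Rolle's theorem, so swapping `a` and `b` gives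
`φ (α a + β b) = φ (α b + β a)`. For `α ≠ 1/2` the linear map `(a, b) ↦ (α a + β b, α b + β a)`
is invertible and fixes the diagonal, so every `y` near `x` is `α b + β a` for some `a, b` near
`x` with `α a + β b = x`. Hence `φ` is locally constant, thus equal to a constant `c` on `I`,
and then `F - c G` is constant on `I`.
-/

open Set Filter Topology

theorem Set.OrdConnected.injOn_of_deriv_ne_zero {f : ℝ → ℝ} {s : Set ℝ} (hs : s.OrdConnected)
    (hf' : ∀ x ∈ s, deriv f x ≠ 0) : s.InjOn f := by
  have hIcc : ∀ {a b}, a ∈ s → b ∈ s → Icc a b ⊆ s := fun ha hb => hs.out ha hb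
  have key : ∀ a ∈ s, ∀ b ∈ s, a < b → f a ≠ f b := fun a ha b hb hab hfab => by
    obtain ⟨c, hc, hc0⟩ := exists_deriv_eq_zero hab (fun x hx =>
      (differentiableAt_of_deriv_ne_zero (hf' x (hIcc ha hb hx))).continuousAt.continuousWithinAt)
      hfab
    exact hf' c (hIcc ha hb (Ioo_subset_Icc_self hc)) hc0
  intro a ha b hb hfab
  by_contra hab
  rcases lt_or_gt_of_ne hab with h | h
  · exact key a ha b hb h hfab
  · exact key b hb a ha h hfab.symm

theorem IsPreconnected.apply_eq_of_apply_weightedMean_comm {U : Set ℝ} (hUo : IsOpen U)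
    (hU : IsPreconnected U) {α : ℝ} (hα : α ≠ 1 / 2) {φ : ℝ → ℝ}
    (hφ : ∀ a ∈ U, ∀ b ∈ U, φ (α * a + (1 - α) * b) = φ (α * b + (1 - α) * a))
    {x y : ℝ} (hx : x ∈ U) (hy : y ∈ U) : φ x = φ y := by
  have h2α : 2 * α - 1 ≠ 0 := fun h => hα (by linarith)
  refine eq_of_germ_isConstant_on (fun z hz => ⟨φ z, ?_⟩) hU hx hy
  let d : ℝ → ℝ := fun w => (z - w) / (2 * (2 * α - 1))
  let a : ℝ → ℝ := fun w => (z + w) / 2 + d w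
  let b : ℝ → ℝ := fun w => (z + w) / 2 - d w
  have hmem : ∀ c : ℝ → ℝ, Continuous c → c z = z → ∀ᶠ w in 𝓝 z, c w ∈ U := fun c hc hcz =>
    (hc.tendsto z).eventually_mem (by rw [hcz]; exact hUo.mem_nhds hz)
  filter_upwards [hmem a (by fun_prop) (by simp [a, d]), hmem b (by fun_prop) (by simp [b, d])]
    with w ha hb
  have hd : (2 * α - 1) * d w = (z - w) / 2 := by simp only [d]; field_simp
  have haz : α * a w + (1 - α) * b w = z := by simp only [a, b]; linear_combination hd
  have hbw : α * b w + (1 - α) * a w = w := by simp only [a, b]; linear_combination -hd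
  rw [← hbw, ← hφ _ ha _ hb, haz]

section MeanValueEquation

variable {s : Set ℝ} {α : ℝ} {F G : ℝ → ℝ}

theorem sub_eq_mul_sub_of_mean_value_equation (hso : IsOpen s) (hs : Convex ℝ s)
    (hα : α ∈ Icc (0 : ℝ) 1) (hαhalf : α ≠ 1 / 2)
    (heq : ∀ a ∈ s, ∀ b ∈ s,
      (F b - F a) * deriv G (α * a + (1 - α) * b) = (G b - G a) * deriv F (α * a + (1 - α) * b))
    (hG' : ∀ x ∈ s, deriv G x ≠ 0) {x₀ : ℝ} (hx₀ : x₀ ∈ s) :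
    ∀ x ∈ s, F x - F x₀ = deriv F x₀ / deriv G x₀ * (G x - G x₀) := by
  let φ : ℝ → ℝ := fun x => deriv F x / deriv G x
  have hmean : ∀ a ∈ s, ∀ b ∈ s, α * a + (1 - α) * b ∈ s := fun a ha b hb =>
    hs ha hb hα.1 (sub_nonneg.2 hα.2) (by ring)
  have hslope : ∀ a ∈ s, ∀ b ∈ s, F b - F a = φ (α * a + (1 - α) * b) * (G b - G a) :=
    fun a ha b hb => by
      rw [div_mul_eq_mul_div, eq_div_iff (hG' _ (hmean a ha b hb))]
      linear_combination heq a ha b hb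
  have hsymm : ∀ a ∈ s, ∀ b ∈ s, φ (α * a + (1 - α) * b) = φ (α * b + (1 - α) * a) := by
    intro a ha b hb
    rcases eq_or_ne a b with rfl | hab
    · rfl
    have hGab : G b - G a ≠ 0 :=
      sub_ne_zero.2 fun h => hab (hs.ordConnected.injOn_of_deriv_ne_zero hG' ha hb h.symm)
    refine mul_right_cancel₀ hGab ?_
    linear_combination -hslope a ha b hb - hslope b hb a ha
  intro x hx
  rw [hslope x₀ hx₀ x hx,
    hs.isPreconnected.apply_eq_of_apply_weightedMean_comm hso hαhalf hsymm (hmean x₀ hx₀ x hx) hx₀]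

end MeanValueEquation

theorem stmt_10_general (J : Set ℝ)
    (α β : ℝ) (hα : α ∈ Set.Ioo (0:ℝ) 1) (hαhalf : α ≠ 1/2) (hβ : β = 1 - α)
    (F G : ℝ → ℝ)
    (heq : ∀ a ∈ J, ∀ b ∈ J,
      (F b - F a) * deriv G (α * a + β * b) = (G b - G a) * deriv F (α * a + β * b))
    (p q : ℝ) (hIJ : Set.Ioo p q ⊆ J)
    (hg : ∀ x ∈ Set.Ioo p q, deriv G x ≠ 0) :
    ∃ c₁ c₂ c₃ : ℝ, (c₁, c₂, c₃) ≠ (0, 0, 0) ∧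
      ∀ x ∈ Set.Ioo p q, c₁ * F x + c₂ * G x + c₃ = 0 := by
  subst hβ
  rcases (Ioo p q).eq_empty_or_nonempty with hI | ⟨x₀, hx₀⟩
  · exact ⟨1, 0, 0, by simp, by simp [hI]⟩
  have hlin := sub_eq_mul_sub_of_mean_value_equation isOpen_Ioo (convex_Ioo p q)
    (Ioo_subset_Icc_self hα) hαhalf (fun a ha b hb => heq a (hIJ ha) b (hIJ hb)) hg hx₀
  set c := deriv F x₀ / deriv G x₀
  refine ⟨1, -c, c * G x₀ - F x₀, by simp, fun x hx => ?_⟩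
  linear_combination hlin x hx

/-- Proposition 4.1 -/
theorem stmt_10 (J : Set ℝ) (hJo : IsOpen J) (hJc : J.OrdConnected) (hJne : J.Nonempty)
    (α β : ℝ) (hα : α ∈ Set.Ioo (0:ℝ) 1) (hαhalf : α ≠ 1/2) (hβ : β = 1 - α)
    (F G : ℝ → ℝ)
    (hF : ∀ x ∈ J, DifferentiableAt ℝ F x) (hG : ∀ x ∈ J, DifferentiableAt ℝ G x)
    (heq : ∀ a ∈ J, ∀ b ∈ J,
      (F b - F a) * deriv G (α * a + β * b) = (G b - G a) * deriv F (α * a + β * b))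
    (p q : ℝ) (hpq : p < q) (hIJ : Set.Ioo p q ⊆ J)
    (hg : ∀ x ∈ Set.Ioo p q, deriv G x ≠ 0) :
    ∃ c₁ c₂ c₃ : ℝ, (c₁, c₂, c₃) ≠ (0, 0, 0) ∧
      ∀ x ∈ Set.Ioo p q, c₁ * F x + c₂ * G x + c₃ = 0 :=
  stmt_10_general J α β hα hαhalf hβ F G heq p q hIJ hg
end

section
/- Let α ∈ (0,1), α ≠ 1/2, β = 1−α, and let J be an open interval with inf J = −∞ or sup J = +∞. If F, G : J → ℝ are differentiable and satisfy [F(b)−F(a)]G'(αa+βb) = [G(b)−G(a)]F'(αa+βb) for all a, b ∈ J, then there exist constants c₁, c₂, c₃ ∈ ℝ, not all zero, such that c₁F(x) + c₂G(x) + c₃ = 0 for all x ∈ J. -/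
/-!
Fix `m ∈ J` and put `H = G'(m) F - F'(m) G`. The equation says `H a = H b` whenever
`α a + β b = m`, i.e. `H` is invariant under the homothety of centre `m` and ratio `-α/β`,
and hence under its inverse of ratio `-β/α`. Since `α ≠ 1/2`, one of the two ratios has modulus
less than `1`; iterating that contraction and using continuity of `H` at `m` shows that `H` is
constant on every ball around `m` inside `J`, so `F'(x) G'(m) = G'(x) F'(m)` there. As `J` is
unbounded on one side, any two points of `J` lie in such a ball centred at one of them, so the
Wronskian-type relation `F'(x) G'(y) = G'(x) F'(y)` holds on all of `J`. Picking `m` with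
`(F'(m), G'(m)) ≠ 0` (or using `F' ≡ 0` otherwise), `H` has zero derivative on the interval `J`,
which is the required affine relation.
-/

open Set Metric Filter Topology

theorem add_mul_sub_mem_ball {m r ρ t : ℝ} (hρ : |ρ| ≤ 1) (ht : t ∈ ball m r) :
    m + ρ * (t - m) ∈ ball m r := by
  rw [mem_ball, Real.dist_eq] at *
  calc |m + ρ * (t - m) - m| = |ρ| * |t - m| := by rw [add_sub_cancel_left, abs_mul]
    _ ≤ 1 * |t - m| := by gcongr
    _ < r := by rwa [one_mul]

theorem eq_of_mem_ball_of_homothety_invariant {H : ℝ → ℝ} {m r ρ : ℝ} (hρ : |ρ| < 1)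
    (hH : ContinuousAt H m) (hinv : ∀ t ∈ ball m r, H (m + ρ * (t - m)) = H t)
    {y : ℝ} (hy : y ∈ ball m r) : H y = H m := by
  set u : ℕ → ℝ := fun n => m + ρ ^ n * (y - m)
  have hu_mem (n : ℕ) : u n ∈ ball m r :=
    add_mul_sub_mem_ball (by rw [abs_pow]; exact pow_le_one₀ (abs_nonneg ρ) hρ.le) hy
  have hHu (n : ℕ) : H (u n) = H y := by
    induction n with
    | zero => simp [u]
    | succ n ih =>
      have hu_succ : u (n + 1) = m + ρ * (u n - m) := by ring
      rw [hu_succ, hinv _ (hu_mem n), ih]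
  have hu_lim : Tendsto u atTop (𝓝 m) := by
    simpa [u] using
      ((tendsto_pow_atTop_nhds_zero_of_abs_lt_one hρ).mul_const (y - m)).const_add m
  exact tendsto_nhds_unique (tendsto_const_nhds.congr fun n => (hHu n).symm)
    (hH.tendsto.comp hu_lim)

theorem eq_of_mem_ball_of_weighted_mean_invariant {H : ℝ → ℝ} {m r α β : ℝ}
    (hαβ : α + β = 1) (hne : α ≠ β) (hH : ContinuousAt H m)
    (hinv : ∀ a ∈ ball m r, ∀ b ∈ ball m r, α * a + β * b = m → H a = H b)
    {y : ℝ} (hy : y ∈ ball m r) : H y = H m := by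
  wlog hlt : α < β generalizing α β
  · exact this (α := β) (β := α) (by linarith) hne.symm
      (fun a ha b hb hab => (hinv b hb a ha (by linarith)).symm)
      ((Ne.lt_or_gt hne).resolve_left hlt)
  have hβ : 0 < β := by linarith
  have hρ : |-α / β| < 1 := by
    rw [abs_div, abs_neg, abs_of_pos hβ, div_lt_one hβ, abs_lt]
    constructor <;> linarith
  refine eq_of_mem_ball_of_homothety_invariant hρ hH (fun t ht => ?_) hy
  refine (hinv t ht _ (add_mul_sub_mem_ball hρ.le ht) ?_).symm
  field_simp
  linear_combination m * hαβ

theorem deriv_mul_deriv_center_eq_of_mem_ball {F G : ℝ → ℝ} {α β m r : ℝ}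
    (hαβ : α + β = 1) (hne : α ≠ β)
    (hF : ∀ x ∈ ball m r, DifferentiableAt ℝ F x) (hG : ∀ x ∈ ball m r, DifferentiableAt ℝ G x)
    (heq : ∀ a ∈ ball m r, ∀ b ∈ ball m r,
      (F b - F a) * deriv G (α * a + β * b) = (G b - G a) * deriv F (α * a + β * b))
    {x : ℝ} (hx : x ∈ ball m r) :
    deriv F x * deriv G m = deriv G x * deriv F m := by
  have hm : m ∈ ball m r := mem_ball_self (pos_of_mem_ball hx)
  set H : ℝ → ℝ := fun t => deriv G m * F t - deriv F m * G t
  have hH_const : ∀ y ∈ ball m r, H y = H m := fun y hy =>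
    eq_of_mem_ball_of_weighted_mean_invariant (H := H) hαβ hne
      (((hF m hm).continuousAt.const_mul _).sub ((hG m hm).continuousAt.const_mul _))
      (fun a ha b hb hab => by
        have h := heq a ha b hb
        rw [hab] at h
        linear_combination -h)
      hy
  have hH_deriv : HasDerivAt H (deriv G m * deriv F x - deriv F m * deriv G x) x :=
    ((hF x hx).hasDerivAt.const_mul _).sub ((hG x hx).hasDerivAt.const_mul _)
  have hH_deriv_zero : HasDerivAt H 0 x :=
    (hasDerivAt_const x (H m)).congr_of_eventuallyEq
      (eventually_of_mem (isOpen_ball.mem_nhds hx) hH_const)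
  linear_combination hH_deriv.unique hH_deriv_zero

theorem exists_ball_subset_mem_of_unbounded {J : Set ℝ} (hJo : IsOpen J) (hJc : J.OrdConnected)
    (hJinf : ¬ BddBelow J ∨ ¬ BddAbove J) {x y : ℝ} (hx : x ∈ J) (hy : y ∈ J) :
    (∃ r, ball x r ⊆ J ∧ y ∈ ball x r) ∨ (∃ r, ball y r ⊆ J ∧ x ∈ ball y r) := by
  wlog hxy : x ≤ y generalizing x y
  · exact (this hy hx (le_of_not_ge hxy)).symm
  rcases hJinf with hB | hB
  · obtain ⟨w, hyw, hw⟩ := Filter.Eventually.exists_gt (hJo.mem_nhds hy)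
    obtain ⟨z, hz, hzw⟩ := not_bddBelow_iff.mp hB (2 * x - w)
    refine Or.inl ⟨w - x, ?_, ?_⟩ <;> rw [Real.ball_eq_Ioo]
    · exact Ioo_subset_Icc_self.trans
        ((Icc_subset_Icc (by linarith) (by linarith)).trans (hJc.out hz hw))
    · constructor <;> linarith
  · obtain ⟨w, hwx, hw⟩ := Filter.Eventually.exists_lt (hJo.mem_nhds hx)
    obtain ⟨z, hz, hzw⟩ := not_bddAbove_iff.mp hB (2 * y - w)
    refine Or.inr ⟨y - w, ?_, ?_⟩ <;> rw [Real.ball_eq_Ioo]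
    · exact Ioo_subset_Icc_self.trans
        ((Icc_subset_Icc (by linarith) (by linarith)).trans (hJc.out hw hz))
    · constructor <;> linarith

theorem deriv_mul_deriv_comm_of_weighted_mean_eq {J : Set ℝ} {F G : ℝ → ℝ} {α β : ℝ}
    (hJo : IsOpen J) (hJc : J.OrdConnected) (hJinf : ¬ BddBelow J ∨ ¬ BddAbove J)
    (hαβ : α + β = 1) (hne : α ≠ β)
    (hF : ∀ x ∈ J, DifferentiableAt ℝ F x) (hG : ∀ x ∈ J, DifferentiableAt ℝ G x)
    (heq : ∀ a ∈ J, ∀ b ∈ J,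
      (F b - F a) * deriv G (α * a + β * b) = (G b - G a) * deriv F (α * a + β * b))
    {x y : ℝ} (hx : x ∈ J) (hy : y ∈ J) :
    deriv F x * deriv G y = deriv G x * deriv F y := by
  rcases exists_ball_subset_mem_of_unbounded hJo hJc hJinf hx hy with
    ⟨r, hsub, hmem⟩ | ⟨r, hsub, hmem⟩
  · linear_combination -deriv_mul_deriv_center_eq_of_mem_ball hαβ hne
      (fun z hz => hF z (hsub hz)) (fun z hz => hG z (hsub hz))
      (fun a ha b hb => heq a (hsub ha) b (hsub hb)) hmem
  · exact deriv_mul_deriv_center_eq_of_mem_ball hαβ hne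
      (fun z hz => hF z (hsub hz)) (fun z hz => hG z (hsub hz))
      (fun a ha b hb => heq a (hsub ha) b (hsub hb)) hmem

theorem exists_affine_relation_of_deriv_mul_deriv_comm {J : Set ℝ} {F G : ℝ → ℝ}
    (hJo : IsOpen J) (hJp : IsPreconnected J) (hJne : J.Nonempty)
    (hF : ∀ x ∈ J, DifferentiableAt ℝ F x) (hG : ∀ x ∈ J, DifferentiableAt ℝ G x)
    (hcomm : ∀ x ∈ J, ∀ y ∈ J, deriv F x * deriv G y = deriv G x * deriv F y) :
    ∃ c₁ c₂ c₃ : ℝ, (c₁, c₂, c₃) ≠ (0, 0, 0) ∧ ∀ x ∈ J, c₁ * F x + c₂ * G x + c₃ = 0 := by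
  obtain ⟨x₀, hx₀⟩ := hJne
  by_cases hflat : ∀ m ∈ J, deriv F m = 0 ∧ deriv G m = 0
  · refine ⟨1, 0, -F x₀, by simp, fun x hx => ?_⟩
    have hFx := hJo.is_const_of_deriv_eq_zero hJp (fun t ht => (hF t ht).differentiableWithinAt)
      (fun t ht => (hflat t ht).1) hx hx₀
    linarith
  push Not at hflat
  obtain ⟨m, hm, hm_ne⟩ := hflat
  set H : ℝ → ℝ := fun t => deriv G m * F t - deriv F m * G t
  have hH_deriv (t : ℝ) (ht : t ∈ J) :
      HasDerivAt H (deriv G m * deriv F t - deriv F m * deriv G t) t :=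
    ((hF t ht).hasDerivAt.const_mul _).sub ((hG t ht).hasDerivAt.const_mul _)
  refine ⟨deriv G m, -deriv F m, -H x₀, ?_, fun x hx => ?_⟩
  · simp only [ne_eq, Prod.mk.injEq, neg_eq_zero, not_and]
    exact fun hG0 hF0 _ => hm_ne hF0 hG0
  · have hHx := hJo.is_const_of_deriv_eq_zero hJp
      (fun t ht => (hH_deriv t ht).differentiableAt.differentiableWithinAt)
      (fun t ht => by
        rw [(hH_deriv t ht).deriv, Pi.zero_apply]
        linear_combination hcomm t ht m hm)
      hx hx₀
    simp only [H] at hHx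
    linear_combination hHx

theorem stmt_11_general (J : Set ℝ) (hJo : IsOpen J) (hJc : J.OrdConnected) (hJne : J.Nonempty)
    (hJinf : ¬ BddBelow J ∨ ¬ BddAbove J)
    (α β : ℝ) (hαhalf : α ≠ 1/2) (hβ : β = 1 - α)
    (F G : ℝ → ℝ)
    (hF : ∀ x ∈ J, DifferentiableAt ℝ F x) (hG : ∀ x ∈ J, DifferentiableAt ℝ G x)
    (heq : ∀ a ∈ J, ∀ b ∈ J,
      (F b - F a) * deriv G (α * a + β * b) = (G b - G a) * deriv F (α * a + β * b)) :
    ∃ c₁ c₂ c₃ : ℝ, (c₁, c₂, c₃) ≠ (0, 0, 0) ∧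
      ∀ x ∈ J, c₁ * F x + c₂ * G x + c₃ = 0 := by
  have hαβ : α + β = 1 := by rw [hβ]; ring
  have hne : α ≠ β := fun h => hαhalf (by linarith)
  exact exists_affine_relation_of_deriv_mul_deriv_comm hJo hJc.isPreconnected hJne hF hG
    fun x hx y hy => deriv_mul_deriv_comm_of_weighted_mean_eq hJo hJc hJinf hαβ hne hF hG heq hx hy

/-- Theorem 4.2 -/
theorem stmt_11 (J : Set ℝ) (hJo : IsOpen J) (hJc : J.OrdConnected) (hJne : J.Nonempty)
    (hJinf : ¬ BddBelow J ∨ ¬ BddAbove J)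
    (α β : ℝ) (hα : α ∈ Set.Ioo (0:ℝ) 1) (hαhalf : α ≠ 1/2) (hβ : β = 1 - α)
    (F G : ℝ → ℝ)
    (hF : ∀ x ∈ J, DifferentiableAt ℝ F x) (hG : ∀ x ∈ J, DifferentiableAt ℝ G x)
    (heq : ∀ a ∈ J, ∀ b ∈ J,
      (F b - F a) * deriv G (α * a + β * b) = (G b - G a) * deriv F (α * a + β * b)) :
    ∃ c₁ c₂ c₃ : ℝ, (c₁, c₂, c₃) ≠ (0, 0, 0) ∧
      ∀ x ∈ J, c₁ * F x + c₂ * G x + c₃ = 0 :=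
  stmt_11_general J hJo hJc hJne hJinf α β hαhalf hβ F G hF hG heq
end

section
/- Let F, G : J → ℝ be differentiable with derivatives f, g, and let I ⊆ J be an interval on which g never vanishes, such that [F(b)−F(a)]g((a+b)/2) = [G(b)−G(a)]f((a+b)/2) holds for all a, b ∈ I. Then there exist constants A, K ∈ ℝ and x₀ ∈ I such that f(x) = (A + K·∫_{x₀}^{x} dt/g(t)²)·g(x) for all x ∈ I. -/
/-!
Write `f = φ g`. The equation says `F b - F a = φ ((a + b) / 2) (G b - G a)`, and `G` is
injective on `I` by the mean value theorem. Differentiating in `b` for fixed `a`, so that the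
midpoint moves, shows that `φ` is differentiable in the interior of `I` with
`φ' m (G (2m - x) - G x) = 2 g x (φ m - φ x)`; differentiating once more shows that `φ'` is
differentiable with `φ'' m (G (2m - x) - G x) = 2 φ' m (g x - g (2m - x))`.
Where `φ' m = 0` the first identity makes `φ` constant near `m`. Where `φ' m ≠ 0` it expresses
`g` near `m` through differentiable functions, and differentiating the second identity in `x` at
`x = m` gives `φ'' g + 2 φ' g' = 0`. Either way `(φ' g²)' = 0`, so `φ' = K / g²` inside `I`.
This has constant sign, hence is integrable, and the fundamental theorem of calculus (with the
continuity of `φ` at the endpoints of `I`, read off from the midpoint identity) gives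
`φ x = φ x₀ + K ∫_{x₀}^x 1 / g²`.
-/

open Set Filter Topology

theorem Set.OrdConnected.add_div_two_mem {s : Set ℝ} (hs : s.OrdConnected) {a b : ℝ}
    (ha : a ∈ s) (hb : b ∈ s) : (a + b) / 2 ∈ s := by
  refine hs.uIcc_subset ha hb ?_
  rcases le_total a b with hab | hab
  · exact mem_uIcc.2 (Or.inl ⟨by linarith, by linarith⟩)
  · exact mem_uIcc.2 (Or.inr ⟨by linarith, by linarith⟩)

theorem Set.OrdConnected.Ioo_subset_interior {s : Set ℝ} (hs : s.OrdConnected) {a b : ℝ}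
    (ha : a ∈ s) (hb : b ∈ s) : Ioo a b ⊆ interior s :=
  interior_Icc (a := a) ▸ interior_mono (hs.out ha hb)

theorem Set.OrdConnected.injOn_of_hasDerivAt {s : Set ℝ} (hs : s.OrdConnected) {G g : ℝ → ℝ}
    (hG : ∀ x ∈ s, HasDerivAt G (g x) x) (hg : ∀ x ∈ s, g x ≠ 0) : s.InjOn G := by
  intro a ha b hb hab
  by_contra hne
  wlog hlt : a < b generalizing a b
  · exact this hb ha hab.symm (Ne.symm hne) (lt_of_le_of_ne (not_lt.1 hlt) (Ne.symm hne))
  have hsub : Icc a b ⊆ s := hs.out ha hb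
  obtain ⟨c, hc, hslope⟩ := exists_hasDerivAt_eq_slope G g hlt
    (fun x hx => (hG x (hsub hx)).continuousAt.continuousWithinAt)
    (fun x hx => hG x (hsub (Ioo_subset_Icc_self hx)))
  exact hg c (hsub (Ioo_subset_Icc_self hc)) (by rw [hslope, hab, sub_self, zero_div])

theorem eventually_mem_and_two_mul_sub_mem {s : Set ℝ} {m : ℝ} (hs : s ∈ 𝓝 m) :
    ∀ᶠ x in 𝓝 m, x ∈ s ∧ 2 * m - x ∈ s :=
  Filter.Eventually.and hs <|
    ((by fun_prop : Continuous fun x : ℝ => 2 * m - x).tendsto' m m (by ring)).eventually hs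

theorem eventually_two_mul_sub_mem {s : Set ℝ} {m x : ℝ} (hs : s ∈ 𝓝 (2 * m - x)) :
    ∀ᶠ m' in 𝓝 m, 2 * m' - x ∈ s :=
  (by fun_prop : Continuous fun m' : ℝ => 2 * m' - x).continuousAt.preimage_mem_nhds hs

theorem exists_ne_mem_and_two_mul_sub_mem {s : Set ℝ} {m : ℝ} (hs : s ∈ 𝓝 m) :
    ∃ x ∈ s, x ≠ m ∧ 2 * m - x ∈ s := by
  obtain ⟨x, ⟨hx, hx'⟩, hxm⟩ :=
    (((eventually_mem_and_two_mul_sub_mem hs).filter_mono nhdsWithin_le_nhds).and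
      (self_mem_nhdsWithin : ∀ᶠ x in 𝓝[≠] m, x ≠ m)).exists
  exact ⟨x, hx, hxm, hx'⟩

theorem hasDerivAt_of_eventuallyEq_mul {u v φ : ℝ → ℝ} {u' v' x : ℝ}
    (hu : HasDerivAt u u' x) (hv : HasDerivAt v v' x) (hvx : v x ≠ 0)
    (h : ∀ᶠ y in 𝓝 x, u y = φ y * v y) :
    HasDerivAt φ ((u' - φ x * v') / v x) x := by
  have hφ : u / v =ᶠ[𝓝 x] φ := by
    filter_upwards [h, hv.continuousAt.eventually_ne hvx] with y hy hvy
    simp [hy, hvy]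
  have hux : u x = φ x * v x := h.self_of_nhds
  have hquot := (hu.div hv hvx).congr_of_eventuallyEq hφ.symm
  rw [hux] at hquot
  refine hquot.congr_deriv ?_
  field_simp

theorem sub_eq_mul_integral_of_hasDerivAt {φ ψ : ℝ → ℝ} {a b K : ℝ} (hab : a ≤ b)
    (hcont : ContinuousOn φ (Icc a b)) (hderiv : ∀ x ∈ Ioo a b, HasDerivAt φ (K * ψ x) x)
    (hψ : ∀ x ∈ Ioo a b, 0 ≤ ψ x) : φ b - φ a = K * ∫ x in a..b, ψ x := by
  have hint : IntervalIntegrable (fun x => K * ψ x) MeasureTheory.volume a b := by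
    rcases eq_or_ne K 0 with rfl | hK
    · simp
    refine IntervalIntegrable.const_mul ?_ K
    refine (intervalIntegrable_iff_integrableOn_Ioc_of_le hab).2 <|
      intervalIntegral.integrableOn_deriv_of_nonneg (hcont.div_const K) (fun x hx => ?_) hψ
    simpa [hK] using (hderiv x hx).div_const K
  rw [← intervalIntegral.integral_const_mul,
    intervalIntegral.integral_eq_sub_of_hasDerivAt_of_le hab hcont hderiv hint]

structure IsMidpointQuotient (F G g φ : ℝ → ℝ) (I : Set ℝ) : Prop where
  ordConnected : I.OrdConnected
  hasDerivAt_F : ∀ x ∈ I, HasDerivAt F (φ x * g x) x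
  hasDerivAt_G : ∀ x ∈ I, HasDerivAt G (g x) x
  ne_zero : ∀ x ∈ I, g x ≠ 0
  sub_eq : ∀ a ∈ I, ∀ b ∈ I, F b - F a = φ ((a + b) / 2) * (G b - G a)

namespace IsMidpointQuotient

variable {F G g φ : ℝ → ℝ} {I : Set ℝ} {e m u v x : ℝ}

theorem sub_ne_zero (h : IsMidpointQuotient F G g φ I) {a b : ℝ} (ha : a ∈ I) (hb : b ∈ I)
    (hab : a ≠ b) : G b - G a ≠ 0 :=
  _root_.sub_ne_zero.2 fun hG =>
    hab (h.ordConnected.injOn_of_hasDerivAt h.hasDerivAt_G h.ne_zero ha hb hG.symm)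

theorem hasDerivAt_of_two_mul_sub_mem (h : IsMidpointQuotient F G g φ I) (hx : x ∈ I)
    (hy : 2 * m - x ∈ interior I) (hxm : x ≠ m) :
    HasDerivAt φ (2 * g (2 * m - x) * (φ (2 * m - x) - φ m) / (G (2 * m - x) - G x)) m := by
  have hyI : 2 * m - x ∈ I := interior_subset hy
  have hrefl : HasDerivAt (fun m' => 2 * m' - x) 2 m := by
    simpa using ((hasDerivAt_id m).const_mul 2).sub_const x
  have hu := ((h.hasDerivAt_F _ hyI).comp m hrefl).sub_const (F x)
  have hv := ((h.hasDerivAt_G _ hyI).comp m hrefl).sub_const (G x)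
  have hvm : G (2 * m - x) - G x ≠ 0 := h.sub_ne_zero hx hyI (fun e => hxm (by linarith))
  have hloc : ∀ᶠ m' in 𝓝 m, F (2 * m' - x) - F x = φ m' * (G (2 * m' - x) - G x) := by
    filter_upwards [eventually_two_mul_sub_mem (mem_interior_iff_mem_nhds.1 hy)] with m' hm'
    have := h.sub_eq x hx _ hm'
    rwa [show (x + (2 * m' - x)) / 2 = m' by ring] at this
  refine (hasDerivAt_of_eventuallyEq_mul hu hv hvm hloc).congr_deriv ?_
  simp only [Function.comp_apply]
  ring

theorem differentiableAt (h : IsMidpointQuotient F G g φ I) (hm : m ∈ interior I) :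
    DifferentiableAt ℝ φ m := by
  obtain ⟨x, hx, hxm, hy⟩ := exists_ne_mem_and_two_mul_sub_mem (isOpen_interior.mem_nhds hm)
  exact (h.hasDerivAt_of_two_mul_sub_mem (interior_subset hx) hy hxm).differentiableAt

theorem deriv_mul_sub_eq (h : IsMidpointQuotient F G g φ I) (hx : x ∈ I)
    (hy : 2 * m - x ∈ interior I) :
    deriv φ m * (G (2 * m - x) - G x) = 2 * g (2 * m - x) * (φ (2 * m - x) - φ m) := by
  rcases eq_or_ne x m with rfl | hxm
  · simp [show 2 * x - x = x by ring]
  rw [(h.hasDerivAt_of_two_mul_sub_mem hx hy hxm).deriv,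
    div_mul_cancel₀ _ (h.sub_ne_zero hx (interior_subset hy) (fun e => hxm (by linarith)))]

theorem deriv_mul_sub_eq' (h : IsMidpointQuotient F G g φ I) (hx : x ∈ interior I)
    (hy : 2 * m - x ∈ I) : deriv φ m * (G (2 * m - x) - G x) = 2 * g x * (φ m - φ x) := by
  have := h.deriv_mul_sub_eq hy (m := m) (by rwa [show 2 * m - (2 * m - x) = x by ring])
  rw [show 2 * m - (2 * m - x) = x by ring] at this
  linear_combination -this

theorem hasDerivAt_deriv_of_two_mul_sub_mem (h : IsMidpointQuotient F G g φ I)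
    (hx : x ∈ interior I) (hy : 2 * m - x ∈ interior I) (hxm : x ≠ m) :
    HasDerivAt (deriv φ) (2 * deriv φ m * (g x - g (2 * m - x)) / (G (2 * m - x) - G x)) m := by
  have hm : m ∈ interior I := by
    simpa using h.ordConnected.interior.add_div_two_mem hx hy
  have hyI : 2 * m - x ∈ I := interior_subset hy
  have hrefl : HasDerivAt (fun m' => 2 * m' - x) 2 m := by
    simpa using ((hasDerivAt_id m).const_mul 2).sub_const x
  have hu := ((h.differentiableAt hm).hasDerivAt.sub_const (φ x)).const_mul (2 * g x)
  have hv := ((h.hasDerivAt_G _ hyI).comp m hrefl).sub_const (G x)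
  have hvm : G (2 * m - x) - G x ≠ 0 :=
    h.sub_ne_zero (interior_subset hx) hyI (fun e => hxm (by linarith))
  have hloc : ∀ᶠ m' in 𝓝 m,
      2 * g x * (φ m' - φ x) = deriv φ m' * (G (2 * m' - x) - G x) := by
    filter_upwards [eventually_two_mul_sub_mem (mem_interior_iff_mem_nhds.1 hy)] with m' hm'
    exact (h.deriv_mul_sub_eq' hx hm').symm
  refine (hasDerivAt_of_eventuallyEq_mul hu hv hvm hloc).congr_deriv ?_
  simp only [Function.comp_apply]
  ring

theorem differentiableAt_deriv (h : IsMidpointQuotient F G g φ I) (hm : m ∈ interior I) :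
    DifferentiableAt ℝ (deriv φ) m := by
  obtain ⟨x, hx, hxm, hy⟩ := exists_ne_mem_and_two_mul_sub_mem (isOpen_interior.mem_nhds hm)
  exact (h.hasDerivAt_deriv_of_two_mul_sub_mem hx hy hxm).differentiableAt

theorem deriv_deriv_mul_sub_eq (h : IsMidpointQuotient F G g φ I) (hx : x ∈ interior I)
    (hy : 2 * m - x ∈ interior I) :
    deriv (deriv φ) m * (G (2 * m - x) - G x) = 2 * deriv φ m * (g x - g (2 * m - x)) := by
  rcases eq_or_ne x m with rfl | hxm
  · simp [show 2 * x - x = x by ring]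
  rw [(h.hasDerivAt_deriv_of_two_mul_sub_mem hx hy hxm).deriv,
    div_mul_cancel₀ _ (h.sub_ne_zero (interior_subset hx) (interior_subset hy)
      (fun e => hxm (by linarith)))]

theorem differentiableAt_of_deriv_ne_zero (h : IsMidpointQuotient F G g φ I)
    (hm : m ∈ interior I) (hφm : deriv φ m ≠ 0) : DifferentiableAt ℝ g m := by
  have hhalf : ∀ x, HasDerivAt (fun y => (x + y) / 2) (1 / 2) m := fun x => by
    simpa using ((hasDerivAt_id m).const_add x).div_const 2
  have hψ : HasDerivAt (fun x => φ ((x + m) / 2)) (deriv φ m * (1 / 2)) m :=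
    (h.differentiableAt hm).hasDerivAt.comp_of_eq m
      (by simpa using ((hasDerivAt_id m).add_const m).div_const 2) (by ring)
  -- `x` is chosen so that the denominator `φ m - φ ((x + m) / 2)` below does not vanish
  obtain ⟨x, hne, hx⟩ := ((hψ.eventually_ne (by simpa using hφm)).and
    (eventually_nhdsWithin_of_eventually_nhds (isOpen_interior.mem_nhds hm))).exists
  have hxm : (x + m) / 2 ∈ interior I := h.ordConnected.interior.add_div_two_mem hx hm
  have hu := ((h.differentiableAt_deriv hxm).hasDerivAt.comp m (hhalf x)).mul
    ((h.hasDerivAt_G m (interior_subset hm)).sub_const (G x))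
  have hv := ((h.differentiableAt hm).hasDerivAt.sub
    ((h.differentiableAt hxm).hasDerivAt.comp m (hhalf x))).const_mul 2
  have hloc : ∀ᶠ y in 𝓝 m,
      deriv φ ((x + y) / 2) * (G y - G x) = g y * (2 * (φ y - φ ((x + y) / 2))) := by
    filter_upwards [isOpen_interior.mem_nhds hm] with y hy
    have hxy : 2 * ((x + y) / 2) - x = y := by ring
    have := h.deriv_mul_sub_eq (m := (x + y) / 2) (interior_subset hx) (by rwa [hxy])
    rw [hxy] at this
    linear_combination this
  refine (hasDerivAt_of_eventuallyEq_mul hu hv ?_ hloc).differentiableAt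
  exact mul_ne_zero two_ne_zero (_root_.sub_ne_zero.2 (Ne.symm hne))

theorem hasDerivAt_deriv_mul_sq (h : IsMidpointQuotient F G g φ I) (hm : m ∈ interior I) :
    HasDerivAt (fun x => deriv φ x * g x ^ 2) 0 m := by
  have hnear := eventually_mem_and_two_mul_sub_mem (isOpen_interior.mem_nhds hm)
  by_cases hφm : deriv φ m = 0
  · have hconst : φ =ᶠ[𝓝 m] fun _ => φ m := by
      filter_upwards [hnear] with x ⟨hx, hy⟩
      have hsym := h.deriv_mul_sub_eq' hx (interior_subset hy)
      rw [hφm, zero_mul, eq_comm, mul_eq_zero] at hsym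
      have := h.ne_zero x (interior_subset hx)
      rcases hsym with h0 | h0
      · exact absurd h0 (by positivity)
      · linarith
    refine (hasDerivAt_const m 0).congr_of_eventuallyEq ?_
    filter_upwards [hconst.deriv] with x hx
    simp [hx]
  have hg := (h.differentiableAt_of_deriv_ne_zero hm hφm).hasDerivAt
  have hrefl : HasDerivAt (fun x => 2 * m - x) (-1) m := by
    simpa using (hasDerivAt_id m).const_sub (2 * m)
  have hGm := h.hasDerivAt_G m (interior_subset hm)
  have hl := ((hGm.comp_of_eq m hrefl (by ring)).sub hGm).const_mul (deriv (deriv φ) m)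
  have hr := (hg.sub (hg.comp_of_eq m hrefl (by ring))).const_mul (2 * deriv φ m)
  -- differentiate `deriv_deriv_mul_sub_eq` in `x` at `x = m`
  have hrel := hl.unique <| hr.congr_of_eventuallyEq <| by
    filter_upwards [hnear] with x ⟨hx, hy⟩
    exact h.deriv_deriv_mul_sub_eq hx hy
  refine ((h.differentiableAt_deriv hm).hasDerivAt.mul (hg.pow 2)).congr_deriv ?_
  rw [Pi.pow_apply]
  linear_combination (- g m / 2) * hrel

theorem tendsto_midpoint (h : IsMidpointQuotient F G g φ I) (he : e ∈ I) :
    Tendsto (fun c => φ ((e + c) / 2)) (𝓝[I \ {e}] e) (𝓝 (φ e)) := by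
  have hF := hasDerivAt_iff_tendsto_slope.1 (h.hasDerivAt_F e he)
  have hG := hasDerivAt_iff_tendsto_slope.1 (h.hasDerivAt_G e he)
  have hquot := ((hF.div hG (h.ne_zero e he)).mono_left
    (nhdsWithin_mono e (sdiff_subset_compl I {e})))
  rw [mul_div_cancel_right₀ _ (h.ne_zero e he)] at hquot
  refine hquot.congr' ?_
  filter_upwards [self_mem_nhdsWithin] with c ⟨hc, hce⟩
  have hce' : c - e ≠ 0 := _root_.sub_ne_zero.2 hce
  have hG0 := h.sub_ne_zero he hc (Ne.symm hce)
  simp only [Pi.div_apply, slope_def_field, h.sub_eq e he c hc]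
  field_simp

theorem continuousWithinAt (h : IsMidpointQuotient F G g φ I) {t : Set ℝ} (he : e ∈ I)
    (ht : MapsTo (fun b => 2 * b - e) t I) : ContinuousWithinAt φ t e := by
  rw [← continuousWithinAt_sdiff_self]
  have hrefl : Tendsto (fun b => 2 * b - e) (𝓝[t \ {e}] e) (𝓝[I \ {e}] e) := by
    refine tendsto_nhdsWithin_iff.2 ⟨?_, ?_⟩
    · exact ((by fun_prop : Continuous fun b : ℝ => 2 * b - e).tendsto' e e (by ring)).mono_left
        nhdsWithin_le_nhds
    · filter_upwards [self_mem_nhdsWithin] with b ⟨hb, hbe⟩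
      exact ⟨ht hb, fun h2 => hbe (by simp only [mem_singleton_iff] at h2 ⊢; linarith)⟩
  -- `φ b` is the midpoint quotient of `e` and `2 * b - e`
  refine ((h.tendsto_midpoint he).comp hrefl).congr fun b => ?_
  simp only [Function.comp_apply]
  ring_nf

theorem continuousOn_Icc (h : IsMidpointQuotient F G g φ I) (hu : u ∈ I) (hv : v ∈ I)
    (huv : u < v) : ContinuousOn φ (Icc u v) := by
  have hw : u < (u + v) / 2 ∧ (u + v) / 2 < v := ⟨by linarith, by linarith⟩
  have hsub : Icc u v ⊆ I := h.ordConnected.out hu hv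
  intro e he
  rcases eq_endpoints_or_mem_Ioo_of_mem_Icc he with rfl | rfl | he
  · refine (continuousWithinAt_Icc_iff_Ici huv).2 <| (continuousWithinAt_Icc_iff_Ici hw.1).1 <|
      h.continuousWithinAt hu fun b hb => hsub ⟨by linarith [hb.1], by linarith [hb.2]⟩
  · refine (continuousWithinAt_Icc_iff_Iic huv).2 <| (continuousWithinAt_Icc_iff_Iic hw.2).1 <|
      h.continuousWithinAt hv fun b hb => hsub ⟨by linarith [hb.1], by linarith [hb.2]⟩
  · exact (h.differentiableAt (h.ordConnected.Ioo_subset_interior hu hv he)).continuousAt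
      |>.continuousWithinAt

theorem exists_sub_eq_mul_integral (h : IsMidpointQuotient F G g φ I) :
    ∃ K, ∀ u ∈ I, ∀ v ∈ I, φ v - φ u = K * ∫ t in u..v, 1 / g t ^ 2 := by
  obtain ⟨K, hK⟩ := isOpen_interior.exists_is_const_of_deriv_eq_zero
    h.ordConnected.interior.isPreconnected
    (fun x hx => (h.hasDerivAt_deriv_mul_sq hx).differentiableAt.differentiableWithinAt)
    (fun x hx => (h.hasDerivAt_deriv_mul_sq hx).deriv)
  have hderiv : ∀ x ∈ interior I, HasDerivAt φ (K * (1 / g x ^ 2)) x := fun x hx => by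
    have := h.ne_zero x (interior_subset hx)
    rw [← hK x hx, mul_one_div, mul_div_cancel_right₀ _ (by positivity)]
    exact (h.differentiableAt hx).hasDerivAt
  refine ⟨K, fun u hu v hv => ?_⟩
  wlog huv : u < v generalizing u v
  · rcases (not_lt.1 huv).eq_or_lt with rfl | hvu
    · simp
    · rw [intervalIntegral.integral_symm]
      linear_combination -this v hv u hu hvu
  exact sub_eq_mul_integral_of_hasDerivAt huv.le (h.continuousOn_Icc hu hv huv)
    (fun x hx => hderiv x (h.ordConnected.Ioo_subset_interior hu hv hx)) (fun x _ => by positivity)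

end IsMidpointQuotient

theorem stmt_12_general (J I : Set ℝ)
    (F G f g : ℝ → ℝ)
    (hF : ∀ x ∈ J, HasDerivAt F (f x) x) (hG : ∀ x ∈ J, HasDerivAt G (g x) x)
    (hIJ : I ⊆ J) (hIne : I.Nonempty) (hIc : I.OrdConnected)
    (hg : ∀ x ∈ I, g x ≠ 0)
    (heq : ∀ a ∈ I, ∀ b ∈ I,
      (F b - F a) * g ((a + b) / 2) = (G b - G a) * f ((a + b) / 2)) :
    ∃ A K : ℝ, ∃ x₀ ∈ I,
      ∀ x ∈ I, f x = (A + K * ∫ t in x₀..x, 1 / (g t)^2) * g x := by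
  have hquot : IsMidpointQuotient F G g (f / g) I := by
    refine ⟨hIc, fun x hx => ?_, fun x hx => hG x (hIJ hx), hg, fun a ha b hb => ?_⟩
    · simpa [div_mul_cancel₀ _ (hg x hx)] using hF x (hIJ hx)
    · have := hg _ (hIc.add_div_two_mem ha hb)
      rw [Pi.div_apply]
      field_simp
      linear_combination heq a ha b hb
  obtain ⟨K, hK⟩ := hquot.exists_sub_eq_mul_integral
  obtain ⟨x₀, hx₀⟩ := hIne
  refine ⟨f x₀ / g x₀, K, x₀, hx₀, fun x hx => ?_⟩
  have := hg x hx
  rw [← hK x₀ hx₀ x hx, Pi.div_apply, Pi.div_apply]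
  field_simp
  ring

/-- Proposition 5.1, first part -/
theorem stmt_12 (J I : Set ℝ) (hJo : IsOpen J) (hJc : J.OrdConnected) (hJne : J.Nonempty)
    (F G f g : ℝ → ℝ)
    (hF : ∀ x ∈ J, HasDerivAt F (f x) x) (hG : ∀ x ∈ J, HasDerivAt G (g x) x)
    (hIJ : I ⊆ J) (hIne : I.Nonempty) (hIc : I.OrdConnected)
    (hg : ∀ x ∈ I, g x ≠ 0)
    (heq : ∀ a ∈ I, ∀ b ∈ I,
      (F b - F a) * g ((a + b) / 2) = (G b - G a) * f ((a + b) / 2)) :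
    ∃ A K : ℝ, ∃ x₀ ∈ I,
      ∀ x ∈ I, f x = (A + K * ∫ t in x₀..x, 1 / (g t)^2) * g x :=
  stmt_12_general J I F G f g hF hG hIJ hIne hIc hg heq
end

section
/- Let F, G : J → ℝ be differentiable satisfying the symmetric equation [F(b)−F(a)]G'((a+b)/2) = [G(b)−G(a)]F'((a+b)/2) for all a, b ∈ J. If on some connected component I of U_g = {G' ≠ 0} both F and G are quadratic polynomials (with {1,F,G} linearly independent on I), then F and G are quadratic polynomials on all of J. -/
/-!
Quadratics satisfy the equation exactly, since their difference quotient over `[a, b]` is their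
derivative at `(a + b) / 2`. Let `F, G` agree with `Φ = αx² + βx + γ`, `Ψ = α'x² + β'x + γ'`
on `J ∩ B(c, r)`, and let `x ∈ J` with `|x - c| < 2r`. For points `y` close to `c` the midpoint
of `x` and `y` lies in `B(c, r)`, where `f, g` are `Φ', Ψ'`, so the equation at `(y, x)` becomes
a linear relation between the deviations `F x - Φ x` and `G x - Ψ x`. Two such points give a
`2 × 2` system whose determinant is a nonzero multiple of `αβ' - βα'`, which does not vanish
because `1, F, G` are independent on `I`. Hence `F, G` agree with `Φ, Ψ` on `J ∩ B(c, 2r)`, and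
doubling the radius exhausts `J`.
-/

open Set Metric Filter Topology

def quadratic (a b c x : ℝ) : ℝ := a * x ^ 2 + b * x + c

lemma hasDerivAt_quadratic (a b c x : ℝ) : HasDerivAt (quadratic a b c) (2 * a * x + b) x := by
  have h := (((hasDerivAt_pow 2 x).const_mul a).add ((hasDerivAt_id x).const_mul b)).add_const c
  exact h.congr_deriv (by push_cast; ring)

lemma HasDerivAt.eq_of_eventuallyEq_quadratic {F : ℝ → ℝ} {F' a b c m : ℝ}
    (hF : HasDerivAt F F' m) (h : F =ᶠ[𝓝 m] quadratic a b c) : F' = 2 * a * m + b :=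
  hF.unique ((hasDerivAt_quadratic a b c m).congr_of_eventuallyEq h)

lemma eq_zero_of_mul_eq_mul_of_det_ne_zero {α β α' β' u w m₁ m₂ : ℝ}
    (hD : α * β' - β * α' ≠ 0) (hm : m₁ ≠ m₂)
    (h₁ : u * (2 * α' * m₁ + β') = w * (2 * α * m₁ + β))
    (h₂ : u * (2 * α' * m₂ + β') = w * (2 * α * m₂ + β)) :
    u = 0 ∧ w = 0 := by
  have hdet : 2 * (m₁ - m₂) * (α * β' - β * α') ≠ 0 :=
    mul_ne_zero (mul_ne_zero two_ne_zero (sub_ne_zero.mpr hm)) hD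
  have hu : u * (2 * (m₁ - m₂) * (α * β' - β * α')) = 0 := by
    linear_combination (2 * α * m₁ + β) * h₂ - (2 * α * m₂ + β) * h₁
  have hw : w * (2 * (m₁ - m₂) * (α * β' - β * α')) = 0 := by
    linear_combination (2 * α' * m₁ + β') * h₂ - (2 * α' * m₂ + β') * h₁
  exact ⟨(mul_eq_zero.mp hu).resolve_right hdet, (mul_eq_zero.mp hw).resolve_right hdet⟩

lemma exists_affine_relation_of_det_eq_zero {I : Set ℝ} {F G : ℝ → ℝ} {α β γ α' β' γ' : ℝ}
    (hF : EqOn F (quadratic α β γ) I) (hG : EqOn G (quadratic α' β' γ') I)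
    (hD : α * β' - β * α' = 0) :
    ∃ c₁ c₂ c₃ : ℝ, (c₁, c₂, c₃) ≠ (0, 0, 0) ∧ ∀ x ∈ I, c₁ * F x + c₂ * G x + c₃ = 0 := by
  by_cases hα : α = 0
  · by_cases hβ : β = 0
    · exact ⟨1, 0, -γ, by simp, fun x hx => by rw [hF hx, quadratic, hα, hβ]; ring⟩
    · refine ⟨β', -β, β * γ' - β' * γ, by simp [hβ], fun x hx => ?_⟩
      rw [hF hx, hG hx, quadratic, quadratic]
      linear_combination x ^ 2 * hD
  · refine ⟨-α', α, α' * γ - α * γ', by simp [hα], fun x hx => ?_⟩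
    rw [hF hx, hG hx, quadratic, quadratic]
    linear_combination x * hD

section Propagation

variable {J : Set ℝ} {F G f g : ℝ → ℝ} {α β γ α' β' γ' : ℝ}

lemma sub_quadratic_mul_eq_sub_quadratic_mul (hJo : IsOpen J) (hJc : J.OrdConnected)
    (hF : ∀ x ∈ J, HasDerivAt F (f x) x) (hG : ∀ x ∈ J, HasDerivAt G (g x) x)
    (heq : ∀ a ∈ J, ∀ b ∈ J, (F b - F a) * g ((a + b) / 2) = (G b - G a) * f ((a + b) / 2))
    {S : Set ℝ} (hS : IsOpen S) (hFS : EqOn F (quadratic α β γ) (J ∩ S))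
    (hGS : EqOn G (quadratic α' β' γ') (J ∩ S)) (x y : ℝ) (hx : x ∈ J) (hy : y ∈ J) (hyS : y ∈ S)
    (hm : (y + x) / 2 ∈ S) :
    (F x - quadratic α β γ x) * (2 * α' * ((y + x) / 2) + β') =
      (G x - quadratic α' β' γ' x) * (2 * α * ((y + x) / 2) + β) := by
  have hmJ : (y + x) / 2 ∈ J := by
    have := (hJc.convex (𝕜 := ℝ)).midpoint_mem hy hx
    rwa [midpoint_eq_smul_add, smul_eq_mul, invOf_eq_inv, inv_mul_eq_div] at this
  have hnhds : J ∩ S ∈ 𝓝 ((y + x) / 2) := (hJo.inter hS).mem_nhds ⟨hmJ, hm⟩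
  have hfm := (hF _ hmJ).eq_of_eventuallyEq_quadratic (eventuallyEq_of_mem hnhds hFS)
  have hgm := (hG _ hmJ).eq_of_eventuallyEq_quadratic (eventuallyEq_of_mem hnhds hGS)
  have h := heq y hy x hx
  rw [hfm, hgm, hFS ⟨hy, hyS⟩, hGS ⟨hy, hyS⟩] at h
  simp only [quadratic] at h ⊢
  linear_combination h

lemma eqOn_inter_ball_two_mul (hJo : IsOpen J) (hJc : J.OrdConnected)
    (hF : ∀ x ∈ J, HasDerivAt F (f x) x) (hG : ∀ x ∈ J, HasDerivAt G (g x) x)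
    (heq : ∀ a ∈ J, ∀ b ∈ J, (F b - F a) * g ((a + b) / 2) = (G b - G a) * f ((a + b) / 2))
    (hD : α * β' - β * α' ≠ 0) {c r : ℝ} (hc : c ∈ J) (hr : 0 < r)
    (hFr : EqOn F (quadratic α β γ) (J ∩ ball c r))
    (hGr : EqOn G (quadratic α' β' γ') (J ∩ ball c r)) :
    EqOn F (quadratic α β γ) (J ∩ ball c (2 * r)) ∧
      EqOn G (quadratic α' β' γ') (J ∩ ball c (2 * r)) := by
  have hFG : ∀ x ∈ J ∩ ball c (2 * r),
      F x = quadratic α β γ x ∧ G x = quadratic α' β' γ' x := by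
    rintro x ⟨hx, hxc⟩
    rw [mem_ball, Real.dist_eq] at hxc
    have hdev := sub_quadratic_mul_eq_sub_quadratic_mul hJo hJc hF hG heq
      isOpen_ball hFr hGr x
    obtain ⟨δ, hδ, hδJ⟩ := Metric.isOpen_iff.mp hJo c hc
    set ε := min δ (r - |x - c| / 2)
    have hε : 0 < ε := lt_min hδ (by linarith)
    have hεδ : ε ≤ δ := min_le_left _ _
    have hεr : ε ≤ r - |x - c| / 2 := min_le_right _ _
    have hxc₁ := neg_abs_le (x - c)
    have hxc₂ := le_abs_self (x - c)
    have hy : c + ε / 2 ∈ J ∩ ball c r := by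
      have hyc : dist (c + ε / 2) c = ε / 2 := by
        rw [Real.dist_eq, add_sub_cancel_left, abs_of_pos (half_pos hε)]
      refine ⟨hδJ ?_, ?_⟩ <;> rw [mem_ball, hyc] <;> linarith
    have hm₁ : (c + x) / 2 ∈ ball c r := by
      rw [mem_ball, Real.dist_eq, abs_lt]; constructor <;> linarith
    have hm₂ : (c + ε / 2 + x) / 2 ∈ ball c r := by
      rw [mem_ball, Real.dist_eq, abs_lt]; constructor <;> linarith
    obtain ⟨hu, hw⟩ := eq_zero_of_mul_eq_mul_of_det_ne_zero hD (by linarith)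
      (hdev c hx hc (mem_ball_self hr) hm₁) (hdev _ hx hy.1 hy.2 hm₂)
    exact ⟨sub_eq_zero.mp hu, sub_eq_zero.mp hw⟩
  exact ⟨fun x hx => (hFG x hx).1, fun x hx => (hFG x hx).2⟩

lemma eqOn_of_eqOn_inter_ball (hJo : IsOpen J) (hJc : J.OrdConnected)
    (hF : ∀ x ∈ J, HasDerivAt F (f x) x) (hG : ∀ x ∈ J, HasDerivAt G (g x) x)
    (heq : ∀ a ∈ J, ∀ b ∈ J, (F b - F a) * g ((a + b) / 2) = (G b - G a) * f ((a + b) / 2))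
    (hD : α * β' - β * α' ≠ 0) {c r : ℝ} (hc : c ∈ J) (hr : 0 < r)
    (hFr : EqOn F (quadratic α β γ) (J ∩ ball c r))
    (hGr : EqOn G (quadratic α' β' γ') (J ∩ ball c r)) :
    EqOn F (quadratic α β γ) J ∧ EqOn G (quadratic α' β' γ') J := by
  have hpow : ∀ n : ℕ, EqOn F (quadratic α β γ) (J ∩ ball c (2 ^ n * r)) ∧
      EqOn G (quadratic α' β' γ') (J ∩ ball c (2 ^ n * r)) := by
    intro n
    induction n with
    | zero => simpa using ⟨hFr, hGr⟩
    | succ n ih =>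
      rw [pow_succ, mul_comm _ 2, mul_assoc]
      exact eqOn_inter_ball_two_mul hJo hJc hF hG heq hD hc (by positivity) ih.1 ih.2
  have hcover : ∀ x, ∃ n : ℕ, x ∈ ball c (2 ^ n * r) := fun x => by
    obtain ⟨n, hn⟩ := pow_unbounded_of_one_lt (dist x c / r) one_lt_two
    exact ⟨n, mem_ball.mpr ((div_lt_iff₀ hr).mp hn)⟩
  refine ⟨fun x hx => ?_, fun x hx => ?_⟩ <;> obtain ⟨n, hn⟩ := hcover x
  exacts [(hpow n).1 ⟨hx, hn⟩, (hpow n).2 ⟨hx, hn⟩]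

end Propagation

theorem stmt_14_general (J : Set ℝ) (hJo : IsOpen J) (hJc : J.OrdConnected)
    (F G f g : ℝ → ℝ)
    (hF : ∀ x ∈ J, HasDerivAt F (f x) x) (hG : ∀ x ∈ J, HasDerivAt G (g x) x)
    (heq : ∀ a ∈ J, ∀ b ∈ J,
      (F b - F a) * g ((a + b) / 2) = (G b - G a) * f ((a + b) / 2))
    (I : Set ℝ) (x₀ : ℝ) (hx₀ : x₀ ∈ {x ∈ J | g x ≠ 0})
    (hI : I = connectedComponentIn {x ∈ J | g x ≠ 0} x₀)
    (hindep : ¬ ∃ c₁ c₂ c₃ : ℝ, (c₁, c₂, c₃) ≠ (0, 0, 0) ∧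
        ∀ x ∈ I, c₁ * F x + c₂ * G x + c₃ = 0)
    (hFquad : ∃ a b c : ℝ, ∀ x ∈ I, F x = a * x^2 + b * x + c)
    (hGquad : ∃ a b c : ℝ, ∀ x ∈ I, G x = a * x^2 + b * x + c) :
    (∃ a b c : ℝ, ∀ x ∈ J, F x = a * x^2 + b * x + c) ∧
    (∃ a b c : ℝ, ∀ x ∈ J, G x = a * x^2 + b * x + c) := by
  have hx₀I : x₀ ∈ I := hI ▸ mem_connectedComponentIn hx₀
  have hIJ : I ⊆ J := fun x hx => (hI ▸ connectedComponentIn_subset _ _ : I ⊆ _) hx |>.1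
  have hIc : I.OrdConnected := (hI ▸ isPreconnected_connectedComponentIn).ordConnected
  obtain ⟨α, β, γ, hFI⟩ : ∃ a b c, EqOn F (quadratic a b c) I := hFquad
  obtain ⟨α', β', γ', hGI⟩ : ∃ a b c, EqOn G (quadratic a b c) I := hGquad
  have hD : α * β' - β * α' ≠ 0 := fun hD =>
    hindep (exists_affine_relation_of_det_eq_zero hFI hGI hD)
  have hInt : I.Nontrivial := by
    by_contra h
    exact hindep ⟨1, 0, -F x₀, by simp,
      fun x hx => by rw [not_nontrivial_iff.mp h hx hx₀I]; ring⟩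
  obtain ⟨u, hu, v, hv, huv⟩ := hInt.exists_lt
  have hball : ball ((u + v) / 2) ((v - u) / 2) ⊆ I := by
    rw [Real.ball_eq_Ioo]
    exact fun z hz => hIc.out hu hv ⟨by linarith [hz.1], by linarith [hz.2]⟩
  have hsub : J ∩ ball ((u + v) / 2) ((v - u) / 2) ⊆ I := inter_subset_right.trans hball
  obtain ⟨hFJ, hGJ⟩ := eqOn_of_eqOn_inter_ball hJo hJc hF hG heq hD
    (hIJ (hball (mem_ball_self (by linarith)))) (by linarith) (hFI.mono hsub) (hGI.mono hsub)
  exact ⟨⟨α, β, γ, fun x hx => hFJ hx⟩, ⟨α', β', γ', fun x hx => hGJ hx⟩⟩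

/-- Lemma 5.3, quadratic case -/
theorem stmt_14 (J : Set ℝ) (hJo : IsOpen J) (hJc : J.OrdConnected) (hJne : J.Nonempty)
    (F G f g : ℝ → ℝ)
    (hF : ∀ x ∈ J, HasDerivAt F (f x) x) (hG : ∀ x ∈ J, HasDerivAt G (g x) x)
    (heq : ∀ a ∈ J, ∀ b ∈ J,
      (F b - F a) * g ((a + b) / 2) = (G b - G a) * f ((a + b) / 2))
    (I : Set ℝ) (x₀ : ℝ) (hx₀ : x₀ ∈ {x ∈ J | g x ≠ 0})
    (hI : I = connectedComponentIn {x ∈ J | g x ≠ 0} x₀)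
    (hindep : ¬ ∃ c₁ c₂ c₃ : ℝ, (c₁, c₂, c₃) ≠ (0, 0, 0) ∧
        ∀ x ∈ I, c₁ * F x + c₂ * G x + c₃ = 0)
    (hFquad : ∃ a b c : ℝ, ∀ x ∈ I, F x = a * x^2 + b * x + c)
    (hGquad : ∃ a b c : ℝ, ∀ x ∈ I, G x = a * x^2 + b * x + c) :
    (∃ a b c : ℝ, ∀ x ∈ J, F x = a * x^2 + b * x + c) ∧
    (∃ a b c : ℝ, ∀ x ∈ J, G x = a * x^2 + b * x + c) :=
  stmt_14_general J hJo hJc F G f g hF hG heq I x₀ hx₀ hI hindep hFquad hGquad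
end

section
/- Let F, G : J → ℝ be differentiable satisfying the symmetric equation [F(b)−F(a)]G'((a+b)/2) = [G(b)−G(a)]F'((a+b)/2) for all a, b ∈ J. If on some connected component I of U_g = {G' ≠ 0}, F and G both lie in span{1, e^{μx}, e^{−μx}} for some μ > 0 (with {1,F,G} linearly independent on I), then F, G ∈ span{1, e^{μx}, e^{−μx}} on all of J; similarly for span{1, sin(μx), cos(μx)}. -/
/-!
The model pairs `(e^{μx}, e^{-μx})` and `(sin μx, cos μx)` satisfy the midpoint equation, hence so
does every pair `(F̂, Ĝ)` of affine combinations of them; their derivatives have a nonvanishing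
Wronskian. Affine independence of `1, F, G` on `I` makes `I` a nondegenerate interval and the
coefficient determinant of `(F̂, Ĝ)` nonzero, so `F̂'` and `Ĝ'` are linearly independent on every
open set. If `(F, G) = (F̂, Ĝ)` on an open set of midpoints `m` and at the reflections `2m - x`,
subtracting the midpoint equations of the chords `[x, 2m - x]` gives
`(F x - F̂ x) Ĝ'(m) = (G x - Ĝ x) F̂'(m)` for all these `m`, hence agreement at `x`. Reflecting
across points halfway between a fixed ball in `I` and `x`, agreement spreads over `J` in steps of
fixed length.
-/

open Set Filter Topology Metric

def MidpointEq (S : Set ℝ) (F G f g : ℝ → ℝ) : Prop :=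
  ∀ a ∈ S, ∀ b ∈ S, (F b - F a) * g ((a + b) / 2) = (G b - G a) * f ((a + b) / 2)

def LinearIndependentOnOpens (φ ψ : ℝ → ℝ) : Prop :=
  ∀ U : Set ℝ, IsOpen U → U.Nonempty →
    ∀ A B : ℝ, (∀ m ∈ U, A * φ m + B * ψ m = 0) → A = 0 ∧ B = 0

theorem hasDerivAt_affine_comb {u v u' v' : ℝ → ℝ} (hu : ∀ x, HasDerivAt u (u' x) x)
    (hv : ∀ x, HasDerivAt v (v' x) x) (a b c x : ℝ) :
    HasDerivAt (fun y => a + b * u y + c * v y) (b * u' x + c * v' x) x := by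
  simpa [Pi.add_def] using
    ((hasDerivAt_const x a).add ((hu x).const_mul b)).add ((hv x).const_mul c)

theorem MidpointEq.affine_comb {S : Set ℝ} {u v u' v' : ℝ → ℝ} (h : MidpointEq S u v u' v')
    (a b c a' b' c' : ℝ) :
    MidpointEq S (fun x => a + b * u x + c * v x) (fun x => a' + b' * u x + c' * v x)
      (fun x => b * u' x + c * v' x) (fun x => b' * u' x + c' * v' x) := fun x hx y hy => by
  linear_combination (b * c' - c * b') * h x hx y hy

theorem linearIndependentOnOpens_of_wronskian_ne_zero {u' v' u'' v'' : ℝ → ℝ}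
    (hu' : ∀ x, HasDerivAt u' (u'' x) x) (hv' : ∀ x, HasDerivAt v' (v'' x) x)
    (hW : ∀ x, u' x * v'' x - v' x * u'' x ≠ 0) : LinearIndependentOnOpens u' v' := by
  rintro U hU ⟨m, hm⟩ A B hAB
  have hzero : (fun x => A * u' x + B * v' x) =ᶠ[𝓝 m] fun _ => 0 :=
    eventually_of_mem (hU.mem_nhds hm) hAB
  have h0 : A * u' m + B * v' m = 0 := hAB m hm
  have h1 : A * u'' m + B * v'' m = 0 :=
    (((hu' m).const_mul A).add ((hv' m).const_mul B)).unique
      ((hasDerivAt_const m 0).congr_of_eventuallyEq hzero)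
  constructor
  · refine (mul_eq_zero.mp ?_).resolve_right (hW m)
    linear_combination v'' m * h0 - v' m * h1
  · refine (mul_eq_zero.mp ?_).resolve_right (hW m)
    linear_combination u' m * h1 - u'' m * h0

theorem LinearIndependentOnOpens.linear_comb {φ ψ : ℝ → ℝ} (h : LinearIndependentOnOpens φ ψ)
    {b c b' c' : ℝ} (hdet : b * c' - c * b' ≠ 0) :
    LinearIndependentOnOpens (fun x => b * φ x + c * ψ x) (fun x => b' * φ x + c' * ψ x) := by
  intro U hU hne A B hAB
  obtain ⟨h1, h2⟩ := h U hU hne (A * b + B * b') (A * c + B * c') fun m hm => by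
    linear_combination hAB m hm
  constructor
  · refine (mul_eq_zero.mp ?_).resolve_right hdet
    linear_combination c' * h1 - b' * h2
  · refine (mul_eq_zero.mp ?_).resolve_right hdet
    linear_combination b * h2 - c * h1

section Propagation

variable {J : Set ℝ} {F G f g Φ Ψ φ ψ : ℝ → ℝ}

theorem eq_of_eqOn_reflections (hF : ∀ x ∈ J, HasDerivAt F (f x) x)
    (hG : ∀ x ∈ J, HasDerivAt G (g x) x) (heq : MidpointEq J F G f g)
    (hΦ : ∀ x, HasDerivAt Φ (φ x) x) (hΨ : ∀ x, HasDerivAt Ψ (ψ x) x)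
    (hmodel : MidpointEq univ Φ Ψ φ ψ) (hind : LinearIndependentOnOpens φ ψ)
    {x : ℝ} (hx : x ∈ J) {U : Set ℝ} (hU : IsOpen U) (hUne : U.Nonempty) (hUJ : U ⊆ J)
    (hFU : EqOn F Φ U) (hGU : EqOn G Ψ U)
    (hrefl : ∀ m ∈ U,
      2 * m - x ∈ J ∧ F (2 * m - x) = Φ (2 * m - x) ∧ G (2 * m - x) = Ψ (2 * m - x)) :
    F x = Φ x ∧ G x = Ψ x := by
  have hfφ : ∀ m ∈ U, f m = φ m := fun m hm =>
    (hF m (hUJ hm)).unique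
      ((hΦ m).congr_of_eventuallyEq (eventuallyEq_of_mem (hU.mem_nhds hm) hFU))
  have hgψ : ∀ m ∈ U, g m = ψ m := fun m hm =>
    (hG m (hUJ hm)).unique
      ((hΨ m).congr_of_eventuallyEq (eventuallyEq_of_mem (hU.mem_nhds hm) hGU))
  obtain ⟨hGx, hFx⟩ := hind U hU hUne (G x - Ψ x) (Φ x - F x) fun m hm => by
    obtain ⟨hrJ, hrF, hrG⟩ := hrefl m hm
    have hFG := heq x hx _ hrJ
    have hΦΨ := hmodel x trivial (2 * m - x) trivial
    rw [show (x + (2 * m - x)) / 2 = m by ring] at hFG hΦΨ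
    rw [hrF, hrG, hfφ m hm, hgψ m hm] at hFG
    linear_combination hFG - hΦΨ
  exact ⟨by linarith, by linarith⟩

theorem eqOn_inter_ball_add_half (hJ : J.OrdConnected) (hF : ∀ x ∈ J, HasDerivAt F (f x) x)
    (hG : ∀ x ∈ J, HasDerivAt G (g x) x) (heq : MidpointEq J F G f g)
    (hΦ : ∀ x, HasDerivAt Φ (φ x) x) (hΨ : ∀ x, HasDerivAt Ψ (ψ x) x)
    (hmodel : MidpointEq univ Φ Ψ φ ψ) (hind : LinearIndependentOnOpens φ ψ)
    {c r R : ℝ} (hr : 0 < r) (hrR : r ≤ R) (hcJ : ball c r ⊆ J)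
    (hFR : EqOn F Φ (J ∩ ball c R)) (hGR : EqOn G Ψ (J ∩ ball c R)) :
    EqOn F Φ (J ∩ ball c (R + r / 2)) ∧ EqOn G Ψ (J ∩ ball c (R + r / 2)) := by
  suffices h : ∀ x ∈ J ∩ ball c (R + r / 2), F x = Φ x ∧ G x = Ψ x from
    ⟨fun x hx => (h x hx).1, fun x hx => (h x hx).2⟩
  rintro x ⟨hxJ, hxc⟩
  by_cases hxR : x ∈ ball c R
  · exact ⟨hFR ⟨hxJ, hxR⟩, hGR ⟨hxJ, hxR⟩⟩
  have hcJ' : c ∈ J := hcJ (mem_ball_self hr)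
  have hball : ball c r ⊆ J ∩ ball c R := fun y hy => ⟨hcJ hy, ball_subset_ball hrR hy⟩
  rw [mem_ball, Real.dist_eq] at hxc hxR
  -- Reflect `x` across the points `m` near `(c + x) / 2`: then `2 * m - x` lies near `c`.
  have hU : ball ((c + x) / 2) (r / 4) ⊆ J ∩ ball c R := by
    intro m hm
    rw [mem_ball, Real.dist_eq, abs_lt] at hm
    refine ⟨hJ.uIcc_subset hcJ' hxJ ?_, ?_⟩
    · rw [mem_uIcc]
      rcases abs_cases (x - c) with ⟨h, _⟩ | ⟨h, _⟩
      · left; constructor <;> linarith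
      · right; constructor <;> linarith
    · rw [mem_ball, Real.dist_eq, abs_lt]
      rcases abs_cases (x - c) with ⟨h, _⟩ | ⟨h, _⟩ <;> constructor <;> linarith
  refine eq_of_eqOn_reflections hF hG heq hΦ hΨ hmodel hind hxJ isOpen_ball
    ⟨_, mem_ball_self (by positivity)⟩ (fun m hm => (hU hm).1) (hFR.mono hU) (hGR.mono hU)
    fun m hm => ?_
  have hrefl : 2 * m - x ∈ ball c r := by
    rw [mem_ball, Real.dist_eq, abs_lt] at hm ⊢
    constructor <;> linarith
  exact ⟨hcJ hrefl, hFR (hball hrefl), hGR (hball hrefl)⟩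

theorem eqOn_of_eqOn_ball (hJ : J.OrdConnected) (hF : ∀ x ∈ J, HasDerivAt F (f x) x)
    (hG : ∀ x ∈ J, HasDerivAt G (g x) x) (heq : MidpointEq J F G f g)
    (hΦ : ∀ x, HasDerivAt Φ (φ x) x) (hΨ : ∀ x, HasDerivAt Ψ (ψ x) x)
    (hmodel : MidpointEq univ Φ Ψ φ ψ) (hind : LinearIndependentOnOpens φ ψ)
    {c r : ℝ} (hr : 0 < r) (hcJ : ball c r ⊆ J)
    (hFr : EqOn F Φ (ball c r)) (hGr : EqOn G Ψ (ball c r)) :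
    EqOn F Φ J ∧ EqOn G Ψ J := by
  have hgrow : ∀ n : ℕ, EqOn F Φ (J ∩ ball c (r + n * (r / 2))) ∧
      EqOn G Ψ (J ∩ ball c (r + n * (r / 2))) := by
    intro n
    induction n with
    | zero => simpa using ⟨hFr.mono inter_subset_right, hGr.mono inter_subset_right⟩
    | succ n ih =>
      have hrR : r ≤ r + n * (r / 2) := le_add_of_nonneg_right (by positivity)
      rw [Nat.cast_succ, add_one_mul, ← add_assoc]
      exact eqOn_inter_ball_add_half hJ hF hG heq hΦ hΨ hmodel hind hr hrR hcJ ih.1 ih.2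
  have hcover : ∀ x ∈ J, ∃ n : ℕ, x ∈ J ∩ ball c (r + n * (r / 2)) := fun x hx => by
    obtain ⟨n, hn⟩ := exists_nat_gt (dist x c / (r / 2))
    rw [div_lt_iff₀ (by positivity)] at hn
    exact ⟨n, hx, by rw [mem_ball]; linarith⟩
  constructor
  · intro x hx
    obtain ⟨n, hn⟩ := hcover x hx
    exact (hgrow n).1 hn
  · intro x hx
    obtain ⟨n, hn⟩ := hcover x hx
    exact (hgrow n).2 hn

end Propagation

section AffineIndependence

variable {I : Set ℝ} {F G : ℝ → ℝ}

theorem exists_ball_subset_of_affineIndependent (hI : I.OrdConnected)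
    (hindep : ¬ ∃ c₁ c₂ c₃ : ℝ, (c₁, c₂, c₃) ≠ (0, 0, 0) ∧
        ∀ x ∈ I, c₁ * F x + c₂ * G x + c₃ = 0) :
    ∃ c r : ℝ, 0 < r ∧ ball c r ⊆ I := by
  have hnt : I.Nontrivial := by
    by_contra hs
    rw [not_nontrivial_iff] at hs
    apply hindep
    obtain rfl | ⟨y, hy⟩ := I.eq_empty_or_nonempty
    · exact ⟨1, 0, 0, by simp, by simp⟩
    · exact ⟨1, 0, -F y, by simp, fun x hx => by rw [hs hx hy]; ring⟩
  obtain ⟨a, ha, b, hb, hab⟩ := hnt.exists_lt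
  refine ⟨(a + b) / 2, (b - a) / 2, by linarith, ?_⟩
  rw [← Real.Ioo_eq_ball]
  exact Ioo_subset_Icc_self.trans (hI.out ha hb)

theorem det_ne_zero_of_affineIndependent {u v : ℝ → ℝ} {aF bF cF aG bG cG : ℝ}
    (hindep : ¬ ∃ c₁ c₂ c₃ : ℝ, (c₁, c₂, c₃) ≠ (0, 0, 0) ∧
        ∀ x ∈ I, c₁ * F x + c₂ * G x + c₃ = 0)
    (hFI : EqOn F (fun x => aF + bF * u x + cF * v x) I)
    (hGI : EqOn G (fun x => aG + bG * u x + cG * v x) I) :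
    bF * cG - cF * bG ≠ 0 := by
  intro hdet
  obtain ⟨w, hw0, hw⟩ := (Matrix.exists_mulVec_eq_zero_iff (M := !![bF, bG; cF, cG])).mpr
    (by rw [Matrix.det_fin_two_of]; linear_combination hdet)
  have h0 : bF * w 0 + bG * w 1 = 0 := by simpa [Matrix.mulVec, dotProduct] using congrFun hw 0
  have h1 : cF * w 0 + cG * w 1 = 0 := by simpa [Matrix.mulVec, dotProduct] using congrFun hw 1
  refine hindep ⟨w 0, w 1, -(w 0 * aF + w 1 * aG), ?_, fun x hx => ?_⟩
  · contrapose! hw0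
    ext i
    fin_cases i <;> simp_all
  · rw [hFI hx, hGI hx]
    linear_combination u x * h0 + v x * h1

end AffineIndependence

theorem MidpointEq.eqOn_affine_comb_of_eqOn {J I : Set ℝ} {F G f g u v u' v' : ℝ → ℝ}
    (hJ : J.OrdConnected) (hF : ∀ x ∈ J, HasDerivAt F (f x) x)
    (hG : ∀ x ∈ J, HasDerivAt G (g x) x) (heq : MidpointEq J F G f g)
    (hIJ : I ⊆ J) (hI : I.OrdConnected)
    (hindep : ¬ ∃ c₁ c₂ c₃ : ℝ, (c₁, c₂, c₃) ≠ (0, 0, 0) ∧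
        ∀ x ∈ I, c₁ * F x + c₂ * G x + c₃ = 0)
    (hu : ∀ x, HasDerivAt u (u' x) x) (hv : ∀ x, HasDerivAt v (v' x) x)
    (huv : MidpointEq univ u v u' v') (hind : LinearIndependentOnOpens u' v')
    {aF bF cF aG bG cG : ℝ}
    (hFI : EqOn F (fun x => aF + bF * u x + cF * v x) I)
    (hGI : EqOn G (fun x => aG + bG * u x + cG * v x) I) :
    EqOn F (fun x => aF + bF * u x + cF * v x) J ∧
      EqOn G (fun x => aG + bG * u x + cG * v x) J := by
  obtain ⟨c, r, hr, hcr⟩ := exists_ball_subset_of_affineIndependent hI hindep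
  exact eqOn_of_eqOn_ball hJ hF hG heq (hasDerivAt_affine_comb hu hv aF bF cF)
    (hasDerivAt_affine_comb hu hv aG bG cG) (huv.affine_comb aF bF cF aG bG cG)
    (hind.linear_comb (det_ne_zero_of_affineIndependent hindep hFI hGI)) hr (hcr.trans hIJ)
    (hFI.mono hcr) (hGI.mono hcr)

open Real

theorem midpointEq_exp_mul (μ : ℝ) :
    MidpointEq univ (fun x => exp (μ * x)) (fun x => exp (-(μ * x)))
      (fun x => exp (μ * x) * μ) (fun x => exp (-(μ * x)) * -μ) := by
  intro a _ b _
  dsimp only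
  rw [show μ * b = μ * b / 2 + μ * b / 2 by ring, show μ * a = μ * a / 2 + μ * a / 2 by ring,
    show μ * ((a + b) / 2) = μ * a / 2 + μ * b / 2 by ring]
  simp only [exp_add, exp_neg, neg_add]
  field_simp
  ring

theorem linearIndependentOnOpens_exp_mul {μ : ℝ} (hμ : μ ≠ 0) :
    LinearIndependentOnOpens (fun x => exp (μ * x) * μ) (fun x => exp (-(μ * x)) * -μ) := by
  refine linearIndependentOnOpens_of_wronskian_ne_zero
    (fun x => (hasDerivAt_const_mul μ).exp.mul_const μ)
    (fun x => (hasDerivAt_const_mul μ).neg.exp.mul_const (-μ)) fun x => ?_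
  have hW : exp (μ * x) * μ * (exp (-(μ * x)) * -μ * -μ) -
      exp (-(μ * x)) * -μ * (exp (μ * x) * μ * μ) = 2 * μ ^ 3 := by
    rw [exp_neg]
    field_simp
    ring
  dsimp only [Pi.neg_apply]
  rw [hW]
  positivity

theorem midpointEq_sin_cos_mul (μ : ℝ) :
    MidpointEq univ (fun x => sin (μ * x)) (fun x => cos (μ * x))
      (fun x => cos (μ * x) * μ) (fun x => -sin (μ * x) * μ) := by
  intro a _ b _
  dsimp only
  rw [show μ * b = μ * ((a + b) / 2) + μ * ((b - a) / 2) by ring,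
    show μ * a = μ * ((a + b) / 2) - μ * ((b - a) / 2) by ring]
  simp only [sin_add, sin_sub, cos_add, cos_sub]
  ring

theorem linearIndependentOnOpens_sin_cos_mul {μ : ℝ} (hμ : μ ≠ 0) :
    LinearIndependentOnOpens (fun x => cos (μ * x) * μ) (fun x => -sin (μ * x) * μ) := by
  refine linearIndependentOnOpens_of_wronskian_ne_zero
    (fun x => (hasDerivAt_const_mul μ).cos.mul_const μ)
    (fun x => (hasDerivAt_const_mul μ).sin.neg.mul_const μ) fun x => ?_
  have hW : cos (μ * x) * μ * (-(cos (μ * x) * μ) * μ) -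
      -sin (μ * x) * μ * (-sin (μ * x) * μ * μ) = -μ ^ 3 := by
    linear_combination -μ ^ 3 * sin_sq_add_cos_sq (μ * x)
  rw [hW]
  exact neg_ne_zero.mpr (pow_ne_zero 3 hμ)

theorem stmt_15_general (J : Set ℝ) (hJc : J.OrdConnected)
    (F G f g : ℝ → ℝ)
    (hF : ∀ x ∈ J, HasDerivAt F (f x) x) (hG : ∀ x ∈ J, HasDerivAt G (g x) x)
    (heq : ∀ a ∈ J, ∀ b ∈ J,
      (F b - F a) * g ((a + b) / 2) = (G b - G a) * f ((a + b) / 2))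
    (I : Set ℝ) (x₀ : ℝ)
    (hI : I = connectedComponentIn {x ∈ J | g x ≠ 0} x₀)
    (hindep : ¬ ∃ c₁ c₂ c₃ : ℝ, (c₁, c₂, c₃) ≠ (0, 0, 0) ∧
        ∀ x ∈ I, c₁ * F x + c₂ * G x + c₃ = 0)
    (μ : ℝ) (hμ : 0 < μ) :
    ((∃ a b c : ℝ, ∀ x ∈ I,
        F x = a + b * Real.exp (μ * x) + c * Real.exp (-(μ * x))) →
     (∃ a b c : ℝ, ∀ x ∈ I,
        G x = a + b * Real.exp (μ * x) + c * Real.exp (-(μ * x))) →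
     (∃ a b c : ℝ, ∀ x ∈ J,
        F x = a + b * Real.exp (μ * x) + c * Real.exp (-(μ * x))) ∧
     (∃ a b c : ℝ, ∀ x ∈ J,
        G x = a + b * Real.exp (μ * x) + c * Real.exp (-(μ * x)))) ∧
    ((∃ a b c : ℝ, ∀ x ∈ I,
        F x = a + b * Real.sin (μ * x) + c * Real.cos (μ * x)) →
     (∃ a b c : ℝ, ∀ x ∈ I,
        G x = a + b * Real.sin (μ * x) + c * Real.cos (μ * x)) →
     (∃ a b c : ℝ, ∀ x ∈ J,
        F x = a + b * Real.sin (μ * x) + c * Real.cos (μ * x)) ∧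
     (∃ a b c : ℝ, ∀ x ∈ J,
        G x = a + b * Real.sin (μ * x) + c * Real.cos (μ * x))) := by
  have hIJ : I ⊆ J := hI ▸ (connectedComponentIn_subset _ _).trans (sep_subset _ _)
  have hIc : I.OrdConnected := hI ▸ isPreconnected_connectedComponentIn.ordConnected
  constructor
  · rintro ⟨aF, bF, cF, hFI⟩ ⟨aG, bG, cG, hGI⟩
    obtain ⟨hFJ, hGJ⟩ := MidpointEq.eqOn_affine_comb_of_eqOn hJc hF hG heq hIJ hIc hindep
      (fun x => (hasDerivAt_const_mul μ).exp) (fun x => (hasDerivAt_const_mul μ).neg.exp)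
      (midpointEq_exp_mul μ) (linearIndependentOnOpens_exp_mul hμ.ne') hFI hGI
    exact ⟨⟨aF, bF, cF, hFJ⟩, ⟨aG, bG, cG, hGJ⟩⟩
  · rintro ⟨aF, bF, cF, hFI⟩ ⟨aG, bG, cG, hGI⟩
    obtain ⟨hFJ, hGJ⟩ := MidpointEq.eqOn_affine_comb_of_eqOn hJc hF hG heq hIJ hIc hindep
      (fun x => (hasDerivAt_const_mul μ).sin) (fun x => (hasDerivAt_const_mul μ).cos)
      (midpointEq_sin_cos_mul μ) (linearIndependentOnOpens_sin_cos_mul hμ.ne') hFI hGI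
    exact ⟨⟨aF, bF, cF, hFJ⟩, ⟨aG, bG, cG, hGJ⟩⟩

/-- Lemma 5.3, exponential and trigonometric cases -/
theorem stmt_15 (J : Set ℝ) (hJo : IsOpen J) (hJc : J.OrdConnected) (hJne : J.Nonempty)
    (F G f g : ℝ → ℝ)
    (hF : ∀ x ∈ J, HasDerivAt F (f x) x) (hG : ∀ x ∈ J, HasDerivAt G (g x) x)
    (heq : ∀ a ∈ J, ∀ b ∈ J,
      (F b - F a) * g ((a + b) / 2) = (G b - G a) * f ((a + b) / 2))
    (I : Set ℝ) (x₀ : ℝ) (hx₀ : x₀ ∈ {x ∈ J | g x ≠ 0})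
    (hI : I = connectedComponentIn {x ∈ J | g x ≠ 0} x₀)
    (hindep : ¬ ∃ c₁ c₂ c₃ : ℝ, (c₁, c₂, c₃) ≠ (0, 0, 0) ∧
        ∀ x ∈ I, c₁ * F x + c₂ * G x + c₃ = 0)
    (μ : ℝ) (hμ : 0 < μ) :
    ((∃ a b c : ℝ, ∀ x ∈ I,
        F x = a + b * Real.exp (μ * x) + c * Real.exp (-(μ * x))) →
     (∃ a b c : ℝ, ∀ x ∈ I,
        G x = a + b * Real.exp (μ * x) + c * Real.exp (-(μ * x))) →
     (∃ a b c : ℝ, ∀ x ∈ J,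
        F x = a + b * Real.exp (μ * x) + c * Real.exp (-(μ * x))) ∧
     (∃ a b c : ℝ, ∀ x ∈ J,
        G x = a + b * Real.exp (μ * x) + c * Real.exp (-(μ * x)))) ∧
    ((∃ a b c : ℝ, ∀ x ∈ I,
        F x = a + b * Real.sin (μ * x) + c * Real.cos (μ * x)) →
     (∃ a b c : ℝ, ∀ x ∈ I,
        G x = a + b * Real.sin (μ * x) + c * Real.cos (μ * x)) →
     (∃ a b c : ℝ, ∀ x ∈ J,
        F x = a + b * Real.sin (μ * x) + c * Real.cos (μ * x)) ∧
     (∃ a b c : ℝ, ∀ x ∈ J,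
        G x = a + b * Real.sin (μ * x) + c * Real.cos (μ * x))) :=
  stmt_15_general J hJc F G f g hF hG heq I x₀ hI hindep μ hμ
end

section
/- Let E ⊆ ℝ be open, H : E → ℝ differentiable strictly monotone, h(x,y) = H⁻¹((H(x)+H(y))/2), and μ ≠ 0 a real number. Then any pair φ, ψ ∈ span{1, e^{μH}, e^{−μH}} satisfies [φ(y)−φ(x)]ψ'(h(x,y)) = [ψ(y)−ψ(x)]φ'(h(x,y)) for all x < y in E. (Verification that case (c) of the main theorem gives solutions.) -/
/-! If `H m = (H x + H y) / 2`, then `exp (μ H x) * exp (μ H y) = exp (2 μ H m)`, so with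
`K = b - c * exp (-2 μ H m)` the function `φ = a + b exp (μ H) + c exp (-μ H)` satisfies
`φ y - φ x = (exp (μ H y) - exp (μ H x)) * K` and `φ' m = μ H' m exp (μ H m) * K`.
Both sides of the identity are then the same product, symmetric in `φ` and `ψ`. -/

open Real Set

lemma Set.OrdConnected.exists_mem_eq_add_div_two {E : Set ℝ} (hE : E.OrdConnected) {H : ℝ → ℝ}
    (hH : ContinuousOn H E) {x y : ℝ} (hx : x ∈ E) (hy : y ∈ E) :
    ∃ m ∈ E, H m = (H x + H y) / 2 := by
  have hmid : (H x + H y) / 2 ∈ uIcc (H x) (H y) := by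
    rcases le_total (H x) (H y) with h | h
    · exact mem_uIcc.2 (Or.inl ⟨by linarith, by linarith⟩)
    · exact mem_uIcc.2 (Or.inr ⟨by linarith, by linarith⟩)
  obtain ⟨m, hm, hHm⟩ := intermediate_value_uIcc (hH.mono (hE.uIcc_subset hx hy)) hmid
  exact ⟨m, hE.uIcc_subset hx hy hm, hHm⟩

noncomputable def expComb (a b c μ : ℝ) (u : ℝ) : ℝ := a + b * exp (μ * u) + c * exp (-(μ * u))

namespace expComb

variable (a b c μ : ℝ)

lemma sub_eq (u v : ℝ) :
    expComb a b c μ v - expComb a b c μ u =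
      (exp (μ * v) - exp (μ * u)) * (b - c * exp (-(μ * (u + v)))) := by
  have hu : exp (-(μ * u)) = exp (μ * v) * exp (-(μ * (u + v))) := by
    rw [← exp_add]; ring_nf
  have hv : exp (-(μ * v)) = exp (μ * u) * exp (-(μ * (u + v))) := by
    rw [← exp_add]; ring_nf
  simp only [expComb, hu, hv]
  ring

lemma hasDerivAt (w : ℝ) :
    HasDerivAt (expComb a b c μ) (μ * exp (μ * w) * (b - c * exp (-(μ * (2 * w))))) w := by
  have hlin : HasDerivAt (fun u => μ * u) μ w := by simpa using (hasDerivAt_id w).const_mul μ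
  have h : HasDerivAt (expComb a b c μ) (b * (exp (μ * w) * μ) + c * (exp (-(μ * w)) * -μ)) w :=
    ((hlin.exp.const_mul b).const_add a).add (hlin.neg.exp.const_mul c)
  have hw : exp (-(μ * w)) = exp (μ * w) * exp (-(μ * (2 * w))) := by rw [← exp_add]; ring_nf
  exact h.congr_deriv (by rw [hw]; ring)

lemma sub_mul_deriv_comm (a₁ b₁ c₁ a₂ b₂ c₂ : ℝ) (u v : ℝ) :
    (expComb a₁ b₁ c₁ μ v - expComb a₁ b₁ c₁ μ u) * deriv (expComb a₂ b₂ c₂ μ) ((u + v) / 2) =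
      (expComb a₂ b₂ c₂ μ v - expComb a₂ b₂ c₂ μ u) * deriv (expComb a₁ b₁ c₁ μ) ((u + v) / 2) := by
  simp only [sub_eq, (hasDerivAt _ _ _ _ _).deriv, mul_div_cancel₀ (u + v) two_ne_zero]
  ring

end expComb

theorem stmt_17_general (E : Set ℝ) (hEc : E.OrdConnected)
    (H Hinv : ℝ → ℝ)
    (hH : ∀ x ∈ E, DifferentiableAt ℝ H x)
    (hHinv : ∀ x ∈ E, Hinv (H x) = x)
    (μ : ℝ)
    (a₁ b₁ c₁ a₂ b₂ c₂ : ℝ)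
    (φ ψ : ℝ → ℝ)
    (hφ : ∀ x, φ x = a₁ + b₁ * Real.exp (μ * H x) + c₁ * Real.exp (-(μ * H x)))
    (hψ : ∀ x, ψ x = a₂ + b₂ * Real.exp (μ * H x) + c₂ * Real.exp (-(μ * H x))) :
    ∀ x ∈ E, ∀ y ∈ E, x < y →
      (φ y - φ x) * deriv ψ (Hinv ((H x + H y) / 2)) =
      (ψ y - ψ x) * deriv φ (Hinv ((H x + H y) / 2)) := by
  intro x hx y hy _
  obtain ⟨m, hmE, hHm⟩ := hEc.exists_mem_eq_add_div_two
    (fun z hz => (hH z hz).continuousAt.continuousWithinAt) hx hy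
  have hφ : φ = expComb a₁ b₁ c₁ μ ∘ H := funext hφ
  have hψ : ψ = expComb a₂ b₂ c₂ μ ∘ H := funext hψ
  have deriv_comp_H (a b c : ℝ) :
      deriv (expComb a b c μ ∘ H) m = deriv (expComb a b c μ) (H m) * deriv H m :=
    deriv_comp m (expComb.hasDerivAt a b c μ _).differentiableAt (hH m hmE)
  rw [← hHm, hHinv m hmE, hφ, hψ, deriv_comp_H, deriv_comp_H]
  simp only [Function.comp_apply, hHm, ← mul_assoc, expComb.sub_mul_deriv_comm μ a₁ b₁ c₁ a₂ b₂ c₂]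

/-- Case (c) of the main theorem gives solutions. -/
theorem stmt_17 (E : Set ℝ) (hEo : IsOpen E) (hEc : E.OrdConnected) (hEne : E.Nonempty)
    (H Hinv : ℝ → ℝ)
    (hH : ∀ x ∈ E, DifferentiableAt ℝ H x)
    (hHmono : StrictMonoOn H E ∨ StrictAntiOn H E)
    (hHinv : ∀ x ∈ E, Hinv (H x) = x)
    (μ : ℝ) (hμ : μ ≠ 0)
    (a₁ b₁ c₁ a₂ b₂ c₂ : ℝ)
    (φ ψ : ℝ → ℝ)
    (hφ : ∀ x, φ x = a₁ + b₁ * Real.exp (μ * H x) + c₁ * Real.exp (-(μ * H x)))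
    (hψ : ∀ x, ψ x = a₂ + b₂ * Real.exp (μ * H x) + c₂ * Real.exp (-(μ * H x))) :
    ∀ x ∈ E, ∀ y ∈ E, x < y →
      (φ y - φ x) * deriv ψ (Hinv ((H x + H y) / 2)) =
      (ψ y - ψ x) * deriv φ (Hinv ((H x + H y) / 2)) :=
  stmt_17_general E hEc H Hinv hH hHinv μ a₁ b₁ c₁ a₂ b₂ c₂ φ ψ hφ hψ
end

section
/- Let E ⊆ ℝ be open, H : E → ℝ differentiable strictly monotone, h(x,y) = H⁻¹((H(x)+H(y))/2). Then any pair φ, ψ ∈ span{1, H, H²} satisfies [φ(y)−φ(x)]ψ'(h(x,y)) = [ψ(y)−ψ(x)]φ'(h(x,y)) for all x < y in E. (Verification that case (b) of the main theorem gives solutions.) -/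
/-! By the intermediate value theorem the point `h(x,y) = H⁻¹((H x + H y)/2)` is some `z` between
`x` and `y` with `H z = (H x + H y)/2`. For `φ = a + b H + c H²` both
`φ y - φ x = (H y - H x) (b + c (H x + H y))` and
`φ'(z) = (b + 2 c H z) H'(z) = (b + c (H x + H y)) H'(z)`
carry the same factor `b + c (H x + H y)`, so the two cross products both equal
`(H y - H x) H'(z) (b₁ + c₁ (H x + H y)) (b₂ + c₂ (H x + H y))`. -/

theorem add_div_two_mem_uIcc {K : Type*} [Field K] [LinearOrder K] [IsStrictOrderedRing K]
    (a b : K) : (a + b) / 2 ∈ Set.uIcc a b := by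
  rcases le_total a b with h | h
  · rw [Set.uIcc_of_le h]; constructor <;> linarith
  · rw [Set.uIcc_of_ge h]; constructor <;> linarith

theorem Set.OrdConnected.exists_apply_eq_add_div_two {α : Type*}
    [ConditionallyCompleteLinearOrder α] [TopologicalSpace α] [OrderTopology α]
    [DenselyOrdered α]
    {E : Set α} (hE : E.OrdConnected) {H : α → ℝ} (hH : ContinuousOn H E) {x y : α}
    (hx : x ∈ E) (hy : y ∈ E) : ∃ z ∈ E, H z = (H x + H y) / 2 := by
  obtain ⟨z, hz, hHz⟩ :=
    intermediate_value_uIcc (hH.mono (hE.uIcc_subset hx hy)) (add_div_two_mem_uIcc (H x) (H y))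
  exact ⟨z, hE.uIcc_subset hx hy hz, hHz⟩

theorem HasDerivAt.quadratic_comp {𝕜 : Type*} [NontriviallyNormedField 𝕜] {H : 𝕜 → 𝕜}
    {H' m : 𝕜} (a b c : 𝕜) (hH : HasDerivAt H H' m) :
    HasDerivAt (fun x => a + b * H x + c * H x ^ 2) ((b + 2 * c * H m) * H') m := by
  refine (((hasDerivAt_const m a).add (hH.const_mul b)).add
    ((hH.pow 2).const_mul c)).congr_deriv ?_
  push_cast
  ring

theorem stmt_18_general (E : Set ℝ) (hEc : E.OrdConnected)
    (H Hinv : ℝ → ℝ)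
    (hH : ∀ x ∈ E, DifferentiableAt ℝ H x)
    (hHinv : ∀ x ∈ E, Hinv (H x) = x)
    (a₁ b₁ c₁ a₂ b₂ c₂ : ℝ)
    (φ ψ : ℝ → ℝ)
    (hφ : ∀ x, φ x = a₁ + b₁ * H x + c₁ * (H x)^2)
    (hψ : ∀ x, ψ x = a₂ + b₂ * H x + c₂ * (H x)^2) :
    ∀ x ∈ E, ∀ y ∈ E, x < y →
      (φ y - φ x) * deriv ψ (Hinv ((H x + H y) / 2)) =
      (ψ y - ψ x) * deriv φ (Hinv ((H x + H y) / 2)) := by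
  intro x hx y hy _
  obtain ⟨z, hzE, hHz⟩ := hEc.exists_apply_eq_add_div_two
    (fun w hw => (hH w hw).continuousAt.continuousWithinAt) hx hy
  have hHd := (hH z hzE).hasDerivAt
  obtain rfl : φ = _ := funext hφ
  obtain rfl : ψ = _ := funext hψ
  rw [← hHz, hHinv z hzE, (hHd.quadratic_comp a₁ b₁ c₁).deriv,
    (hHd.quadratic_comp a₂ b₂ c₂).deriv, hHz]
  ring

/-- Case (b) of the main theorem gives solutions. -/
theorem stmt_18 (E : Set ℝ) (hEo : IsOpen E) (hEc : E.OrdConnected) (hEne : E.Nonempty)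
    (H Hinv : ℝ → ℝ)
    (hH : ∀ x ∈ E, DifferentiableAt ℝ H x)
    (hHmono : StrictMonoOn H E ∨ StrictAntiOn H E)
    (hHinv : ∀ x ∈ E, Hinv (H x) = x)
    (a₁ b₁ c₁ a₂ b₂ c₂ : ℝ)
    (φ ψ : ℝ → ℝ)
    (hφ : ∀ x, φ x = a₁ + b₁ * H x + c₁ * (H x)^2)
    (hψ : ∀ x, ψ x = a₂ + b₂ * H x + c₂ * (H x)^2) :
    ∀ x ∈ E, ∀ y ∈ E, x < y →
      (φ y - φ x) * deriv ψ (Hinv ((H x + H y) / 2)) =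
      (ψ y - ψ x) * deriv φ (Hinv ((H x + H y) / 2)) :=
  stmt_18_general E hEc H Hinv hH hHinv a₁ b₁ c₁ a₂ b₂ c₂ φ ψ hφ hψ
end
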